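/- arXiv:math/0202146 — 11 statements merged into one kernel-verified Lean document; each statement's English description precedes it below -/
import Mathlib

section
/- Let α_1, α_2 ∈ (0,1) with α_1 ≠ α_2, and let c_1, c_2, c_3, c_4 ≥ 0. Then the function E(γ_1,γ_2) = γ_1 + γ_2 attains its maximum over Ω(c_1,c_2,c_3,c_4) at exactly one point; i.e., the maximizer of E on Ω(c_1,c_2,c_3,c_4) is unique. -/
open Set

/-- Auxiliary: if `p` and `q` satisfy the constraints, have equal sums, distinct
first coordinates, and the `α`-constraint value at `p` is strictly less than at `q`,
then there is a feasible point with strictly larger sum than `p`. -/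
lemma aux_improve (α₁ α₂ : ℝ) (hα₁ : α₁ ∈ Ioo (0 : ℝ) 1) (hα₂ : α₂ ∈ Ioo (0 : ℝ) 1)
    (c₁ c₂ c₃ c₄ : ℝ) (p q : ℝ × ℝ)
    (hp : 0 ≤ p.1 ∧ p.1 ≤ c₁ ∧ 0 ≤ p.2 ∧ p.2 ≤ c₂ ∧
      α₁ * p.1 + α₂ * p.2 ≤ c₃ ∧ (1 - α₁) * p.1 + (1 - α₂) * p.2 ≤ c₄)
    (hq : 0 ≤ q.1 ∧ q.1 ≤ c₁ ∧ 0 ≤ q.2 ∧ q.2 ≤ c₂ ∧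
      α₁ * q.1 + α₂ * q.2 ≤ c₃ ∧ (1 - α₁) * q.1 + (1 - α₂) * q.2 ≤ c₄)
    (hsum : p.1 + p.2 = q.1 + q.2) (h1 : p.1 ≠ q.1)
    (hA : α₁ * p.1 + α₂ * p.2 < α₁ * q.1 + α₂ * q.2) :
    ∃ x : ℝ × ℝ, (0 ≤ x.1 ∧ x.1 ≤ c₁ ∧ 0 ≤ x.2 ∧ x.2 ≤ c₂ ∧
      α₁ * x.1 + α₂ * x.2 ≤ c₃ ∧ (1 - α₁) * x.1 + (1 - α₂) * x.2 ≤ c₄) ∧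
      p.1 + p.2 < x.1 + x.2 := by
  obtain ⟨hp0, hp1, hp2, hp3, hp4, hp5⟩ := hp
  obtain ⟨hq0, hq1, hq2, hq3, hq4, hq5⟩ := hq
  obtain ⟨ha1, ha2⟩ := hα₁
  obtain ⟨hb1, hb2⟩ := hα₂
  set m₁ : ℝ := (p.1 + q.1) / 2 with hm₁
  set m₂ : ℝ := (p.2 + q.2) / 2 with hm₂
  -- strict slacks at the midpoint
  have hs₁ : m₁ < c₁ := by
    rcases lt_or_gt_of_ne h1 with h | h <;> simp only [hm₁] <;> linarith
  have hs₃ : α₁ * m₁ + α₂ * m₂ < c₃ := by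
    simp only [hm₁, hm₂]; nlinarith
  have hB : (1 - α₁) * q.1 + (1 - α₂) * q.2 < (1 - α₁) * p.1 + (1 - α₂) * p.2 := by
    nlinarith
  have hs₄ : (1 - α₁) * m₁ + (1 - α₂) * m₂ < c₄ := by
    simp only [hm₁, hm₂]; nlinarith
  set ε : ℝ := min (c₁ - m₁) (min (c₃ - (α₁ * m₁ + α₂ * m₂))
    (c₄ - ((1 - α₁) * m₁ + (1 - α₂) * m₂))) with hε
  have hε1 : ε ≤ c₁ - m₁ := min_le_left _ _
  have hε3 : ε ≤ c₃ - (α₁ * m₁ + α₂ * m₂) := le_trans (min_le_right _ _) (min_le_left _ _)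
  have hε4 : ε ≤ c₄ - ((1 - α₁) * m₁ + (1 - α₂) * m₂) :=
    le_trans (min_le_right _ _) (min_le_right _ _)
  have hεpos : 0 < ε := by
    apply lt_min (by linarith) (lt_min (by linarith) (by linarith))
  refine ⟨(m₁ + ε, m₂), ⟨?_, ?_, ?_, ?_, ?_, ?_⟩, ?_⟩
  · show (0:ℝ) ≤ m₁ + ε
    simp only [hm₁]; linarith
  · show m₁ + ε ≤ c₁
    linarith
  · show (0:ℝ) ≤ m₂
    simp only [hm₂]; linarith
  · show m₂ ≤ c₂
    simp only [hm₂]; linarith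
  · show α₁ * (m₁ + ε) + α₂ * m₂ ≤ c₃
    have hmul : α₁ * ε ≤ ε := mul_le_of_le_one_left hεpos.le ha2.le
    have hex : α₁ * (m₁ + ε) + α₂ * m₂ = (α₁ * m₁ + α₂ * m₂) + α₁ * ε := by ring
    rw [hex]; linarith
  · show (1 - α₁) * (m₁ + ε) + (1 - α₂) * m₂ ≤ c₄
    have hmul : (1 - α₁) * ε ≤ ε := mul_le_of_le_one_left hεpos.le (by linarith)
    have hex : (1 - α₁) * (m₁ + ε) + (1 - α₂) * m₂
        = ((1 - α₁) * m₁ + (1 - α₂) * m₂) + (1 - α₁) * ε := by ring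
    rw [hex]; linarith
  · show p.1 + p.2 < (m₁ + ε) + m₂
    simp only [hm₁, hm₂]; linarith

/-- At a junction with two incoming and two outgoing roads, with traffic
distribution coefficients `α₁ ≠ α₂`, the functional `E(γ₁,γ₂) = γ₁ + γ₂`
attains its maximum over `Ω(c₁,c₂,c₃,c₄)` at exactly one point. -/
theorem stmt2 (α₁ α₂ : ℝ) (hα₁ : α₁ ∈ Ioo (0 : ℝ) 1) (hα₂ : α₂ ∈ Ioo (0 : ℝ) 1)
    (hne : α₁ ≠ α₂) (c₁ c₂ c₃ c₄ : ℝ)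
    (hc₁ : 0 ≤ c₁) (hc₂ : 0 ≤ c₂) (hc₃ : 0 ≤ c₃) (hc₄ : 0 ≤ c₄)
    (Ω : Set (ℝ × ℝ))
    (hΩ : Ω = {p | 0 ≤ p.1 ∧ p.1 ≤ c₁ ∧ 0 ≤ p.2 ∧ p.2 ≤ c₂ ∧
      α₁ * p.1 + α₂ * p.2 ≤ c₃ ∧ (1 - α₁) * p.1 + (1 - α₂) * p.2 ≤ c₄}) :
    ∃! p, p ∈ Ω ∧ ∀ q ∈ Ω, q.1 + q.2 ≤ p.1 + p.2 := by
  -- Ω is closed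
  have hclosed : IsClosed Ω := by
    rw [hΩ]
    simp only [setOf_and]
    refine IsClosed.inter (isClosed_le continuous_const continuous_fst) ?_
    refine IsClosed.inter (isClosed_le continuous_fst continuous_const) ?_
    refine IsClosed.inter (isClosed_le continuous_const continuous_snd) ?_
    refine IsClosed.inter (isClosed_le continuous_snd continuous_const) ?_
    refine IsClosed.inter
      (isClosed_le (((continuous_const.mul continuous_fst).add
        (continuous_const.mul continuous_snd))) continuous_const)
      (isClosed_le (((continuous_const.mul continuous_fst).add
        (continuous_const.mul continuous_snd))) continuous_const)
  -- Ω is compact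
  have hsub : Ω ⊆ Icc ((0 : ℝ), (0 : ℝ)) (c₁, c₂) := by
    intro x hx
    rw [hΩ] at hx
    exact ⟨⟨hx.1, hx.2.2.1⟩, ⟨hx.2.1, hx.2.2.2.1⟩⟩
  have hcompact : IsCompact Ω := IsCompact.of_isClosed_subset isCompact_Icc hclosed hsub
  have h0 : ((0 : ℝ), (0 : ℝ)) ∈ Ω := by
    rw [hΩ]
    refine ⟨le_refl _, hc₁, le_refl _, hc₂, by simp [hc₃], by simp [hc₄]⟩
  have hcont : ContinuousOn (fun x : ℝ × ℝ => x.1 + x.2) Ω :=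
    (continuous_fst.add continuous_snd).continuousOn
  obtain ⟨p, hpΩ, hmax⟩ := hcompact.exists_isMaxOn ⟨_, h0⟩ hcont
  refine ⟨p, ⟨hpΩ, fun q hq => hmax hq⟩, ?_⟩
  intro y ⟨hyΩ, hymax⟩
  by_contra hne'
  -- sums are equal
  have hsum : y.1 + y.2 = p.1 + p.2 := le_antisymm (hmax hyΩ) (hymax p hpΩ)
  have h1 : y.1 ≠ p.1 := by
    intro h
    apply hne'
    have : y.2 = p.2 := by linarith
    exact Prod.ext h this
  have hAne : α₁ * y.1 + α₂ * y.2 ≠ α₁ * p.1 + α₂ * p.2 := by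
    intro h
    apply h1
    rcases sub_ne_zero.mpr hne with hh
    have : (α₁ - α₂) * (y.1 - p.1) = 0 := by linear_combination h - α₂ * hsum
    rcases mul_eq_zero.mp this with h' | h'
    · exact absurd (sub_eq_zero.mp h') hne
    · exact sub_eq_zero.mp h'
  have hyΩ' := hΩ ▸ hyΩ
  have hpΩ' := hΩ ▸ hpΩ
  rcases lt_or_gt_of_ne hAne with hA | hA
  · obtain ⟨x, hx, hlt⟩ := aux_improve α₁ α₂ hα₁ hα₂ c₁ c₂ c₃ c₄ y p hyΩ' hpΩ' hsum h1 hA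
    have : x ∈ Ω := by rw [hΩ]; exact hx
    have := hymax x this
    linarith
  · obtain ⟨x, hx, hlt⟩ := aux_improve α₁ α₂ hα₁ hα₂ c₁ c₂ c₃ c₄ p y hpΩ' hyΩ' hsum.symm
      (Ne.symm h1) hA
    have : x ∈ Ω := by rw [hΩ]; exact hx
    have := hmax this
    simp only [Set.mem_setOf_eq] at this
    linarith
end

section
/- Let f, σ, τ be as in the context, let n, m ≥ 1 and let A = (α_{ji}), j = n+1,…,n+m, i = 1,…,n, satisfy 0 < α_{ji} < 1 and ∑_{j=n+1}^{n+m} α_{ji} = 1 for each i. Given ρ_{1,0}, …, ρ_{n+m,0} ∈ [0,1], consider the set D of all tuples (u_1,…,u_{n+m}) ∈ [0,1]^{n+m} such that: for i = 1,…,n, u_i ∈ {ρ_{i,0}} ∪ (τ(ρ_{i,0}),1] if 0 ≤ ρ_{i,0} ≤ σ and u_i ∈ [σ,1] if σ ≤ ρ_{i,0} ≤ 1; for j = n+1,…,n+m, u_j ∈ [0,σ] if 0 ≤ ρ_{j,0} ≤ σ and u_j ∈ {ρ_{j,0}} ∪ [0,τ(ρ_{j,0})) if σ ≤ ρ_{j,0}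 ≤ 1; and f(u_j) = ∑_{i=1}^{n} α_{ji} f(u_i) for every j = n+1,…,n+m. Then D is nonempty and there exists a tuple (ρ̂_1,…,ρ̂_{n+m}) ∈ D that maximizes ∑_{i=1}^{n} f(u_i) + ∑_{j=n+1}^{n+m} f(u_j) over D. -/
open Set

set_option maxRecDepth 10000
set_option maxHeartbeats 1000000

/-- Existence part of the Riemann problem at a junction with `n` incoming and
`m` outgoing roads: the admissible set `D` of boundary states is nonempty and
contains a maximizer of the total flux. -/
theorem stmt3 (f : ℝ → ℝ) (σ : ℝ) (τ : ℝ → ℝ)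
    (hf_cont : ContinuousOn f (Icc 0 1))
    (hf_conc : StrictConcaveOn ℝ (Icc 0 1) f)
    (hf0 : f 0 = 0) (hf1 : f 1 = 0)
    (hσ : σ ∈ Ioo (0 : ℝ) 1)
    (hσmax : ∀ x ∈ Icc (0 : ℝ) 1, f x ≤ f σ)
    (hτσ : τ σ = σ)
    (hτ : ∀ ρ ∈ Icc (0 : ℝ) 1, ρ ≠ σ →
      τ ρ ∈ Icc (0 : ℝ) 1 ∧ τ ρ ≠ ρ ∧ f (τ ρ) = f ρ)
    (n m : ℕ) (hn : 1 ≤ n) (hm : 1 ≤ m)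
    (A : Fin m → Fin n → ℝ)
    (hA0 : ∀ j i, 0 < A j i) (hA1 : ∀ j i, A j i < 1)
    (hAcol : ∀ i, ∑ j, A j i = 1)
    (ρ₀ : Fin n → ℝ) (ρ₀' : Fin m → ℝ)
    (hρ₀ : ∀ i, ρ₀ i ∈ Icc (0 : ℝ) 1) (hρ₀' : ∀ j, ρ₀' j ∈ Icc (0 : ℝ) 1)
    (D : Set ((Fin n → ℝ) × (Fin m → ℝ)))
    (hD : D = {p | (∀ i, p.1 i ∈ Icc (0 : ℝ) 1) ∧ (∀ j, p.2 j ∈ Icc (0 : ℝ) 1) ∧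
      (∀ i, (ρ₀ i ≤ σ → p.1 i ∈ insert (ρ₀ i) (Ioc (τ (ρ₀ i)) 1)) ∧
            (σ ≤ ρ₀ i → p.1 i ∈ Icc σ 1)) ∧
      (∀ j, (ρ₀' j ≤ σ → p.2 j ∈ Icc 0 σ) ∧
            (σ ≤ ρ₀' j → p.2 j ∈ insert (ρ₀' j) (Ico 0 (τ (ρ₀' j))))) ∧
      (∀ j, f (p.2 j) = ∑ i, A j i * f (p.1 i))}) :
    D.Nonempty ∧ ∃ p ∈ D, ∀ q ∈ D,
      (∑ i, f (q.1 i)) + (∑ j, f (q.2 j)) ≤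
        (∑ i, f (p.1 i)) + (∑ j, f (p.2 j)) := by
  subst hD
  obtain ⟨hσ0, hσ1⟩ := hσ
  -- f is positive on (0,1)
  have hfpos : ∀ x : ℝ, 0 < x → x < 1 → 0 < f x := by
    intro x hx0 hx1
    have h := hf_conc.2 (show (0:ℝ) ∈ Icc (0:ℝ) 1 by norm_num)
      (show (1:ℝ) ∈ Icc (0:ℝ) 1 by norm_num) (by norm_num)
      (show 0 < 1 - x by linarith) hx0 (by ring)
    simp only [smul_eq_mul, mul_zero, mul_one, hf0, hf1, zero_add, add_zero] at h
    linarith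
  have hτlt1 : ∀ ρ : ℝ, 0 < ρ → ρ ≤ σ → τ ρ < 1 := by
    intro ρ h0 hle
    by_cases hρσ : ρ = σ
    · rw [hρσ, hτσ]; exact hσ1
    · obtain ⟨hmem, hne, hfeq⟩ := hτ ρ ⟨h0.le, hle.trans hσ1.le⟩ hρσ
      rcases lt_or_eq_of_le hmem.2 with h | h
      · exact h
      · exfalso
        have hpos := hfpos ρ h0 (lt_of_le_of_lt hle hσ1)
        rw [h, hf1] at hfeq; linarith
  have hτgt0 : ∀ ρ : ℝ, σ ≤ ρ → ρ < 1 → 0 < τ ρ := by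
    intro ρ hle h1
    by_cases hρσ : ρ = σ
    · rw [hρσ, hτσ]; exact hσ0
    · obtain ⟨hmem, hne, hfeq⟩ := hτ ρ ⟨(hσ0.trans_le hle).le, h1.le⟩ hρσ
      rcases lt_or_eq_of_le hmem.1 with h | h
      · exact h
      · exfalso
        have hpos := hfpos ρ (hσ0.trans_le hle) h1
        rw [← h, hf0] at hfeq; linarith
  -- an explicit element of D
  set p₀ : (Fin n → ℝ) × (Fin m → ℝ) :=
    (fun i => if ρ₀ i = 0 then 0 else 1, fun j => if ρ₀' j = 1 then 1 else 0) with hp₀def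
  have hfu₀ : ∀ i, f (p₀.1 i) = 0 := by
    intro i; by_cases h : ρ₀ i = 0 <;> simp [hp₀def, h, hf0, hf1]
  have hfv₀ : ∀ j, f (p₀.2 j) = 0 := by
    intro j; by_cases h : ρ₀' j = 1 <;> simp [hp₀def, h, hf0, hf1]
  have hp₀D : p₀ ∈ {p : (Fin n → ℝ) × (Fin m → ℝ) |
      (∀ i, p.1 i ∈ Icc (0 : ℝ) 1) ∧ (∀ j, p.2 j ∈ Icc (0 : ℝ) 1) ∧
      (∀ i, (ρ₀ i ≤ σ → p.1 i ∈ insert (ρ₀ i) (Ioc (τ (ρ₀ i)) 1)) ∧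
            (σ ≤ ρ₀ i → p.1 i ∈ Icc σ 1)) ∧
      (∀ j, (ρ₀' j ≤ σ → p.2 j ∈ Icc 0 σ) ∧
            (σ ≤ ρ₀' j → p.2 j ∈ insert (ρ₀' j) (Ico 0 (τ (ρ₀' j))))) ∧
      (∀ j, f (p.2 j) = ∑ i, A j i * f (p.1 i))} := by
    refine ⟨?_, ?_, ?_, ?_, ?_⟩
    · intro i; by_cases h : ρ₀ i = 0 <;> simp [hp₀def, h]
    · intro j; by_cases h : ρ₀' j = 1 <;> simp [hp₀def, h]
    · intro i
      constructor
      · intro hle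
        by_cases h : ρ₀ i = 0
        · simp [hp₀def, h]
        · have h0 : 0 < ρ₀ i := lt_of_le_of_ne (hρ₀ i).1 (Ne.symm h)
          have : p₀.1 i = 1 := by simp [hp₀def, h]
          rw [this]
          exact mem_insert_iff.mpr (Or.inr ⟨hτlt1 _ h0 hle, le_refl 1⟩)
      · intro hge
        have h : ρ₀ i ≠ 0 := by intro h; rw [h] at hge; linarith
        have : p₀.1 i = 1 := by simp [hp₀def, h]
        rw [this]; exact ⟨hσ1.le, le_refl 1⟩
    · intro j
      constructor
      · intro hle
        have h : ρ₀' j ≠ 1 := by intro h; rw [h] at hle; linarith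
        have : p₀.2 j = 0 := by simp [hp₀def, h]
        rw [this]; exact ⟨le_refl 0, hσ0.le⟩
      · intro hge
        by_cases h : ρ₀' j = 1
        · simp [hp₀def, h]
        · have h1 : ρ₀' j < 1 := lt_of_le_of_ne (hρ₀' j).2 h
          have : p₀.2 j = 0 := by simp [hp₀def, h]
          rw [this]
          exact mem_insert_iff.mpr (Or.inr ⟨le_refl 0, hτgt0 _ hge h1⟩)
    · intro j
      rw [hfv₀ j]
      rw [Finset.sum_congr rfl fun i _ => by rw [hfu₀ i]]
      simp
  -- the clamped version of f, continuous on all of ℝ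
  set c : ℝ → ℝ := fun x => max 0 (min x 1) with hcdef
  have hc_cont : Continuous c := continuous_const.max (continuous_id.min continuous_const)
  have hc_mem : ∀ x, c x ∈ Icc (0:ℝ) 1 :=
    fun x => ⟨le_max_left _ _, max_le (by norm_num) (min_le_right _ _)⟩
  have hc_id : ∀ x ∈ Icc (0:ℝ) 1, c x = x := by
    intro x hx
    simp [hcdef, min_eq_left hx.2, max_eq_right hx.1]
  set F : ℝ → ℝ := fun x => f (c x) with hFdef
  have hF_cont : Continuous F := hf_cont.comp_continuous hc_cont hc_mem
  have hF_eq : ∀ x ∈ Icc (0:ℝ) 1, F x = f x := by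
    intro x hx; simp [hFdef, hc_id x hx]
  -- the compactification E of D
  set E : Set ((Fin n → ℝ) × (Fin m → ℝ)) :=
    {p | (∀ i, p.1 i ∈ Icc (0 : ℝ) 1) ∧ (∀ j, p.2 j ∈ Icc (0 : ℝ) 1) ∧
      (∀ i, ρ₀ i ≤ σ → p.1 i ∈ insert (ρ₀ i) (Icc (τ (ρ₀ i)) 1)) ∧
      (∀ i, σ ≤ ρ₀ i → p.1 i ∈ Icc σ 1) ∧
      (∀ j, ρ₀' j ≤ σ → p.2 j ∈ Icc 0 σ) ∧
      (∀ j, σ ≤ ρ₀' j → p.2 j ∈ insert (ρ₀' j) (Icc 0 (τ (ρ₀' j)))) ∧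
      (∀ j, F (p.2 j) = ∑ i, A j i * F (p.1 i))} with hEdef
  have hDE : ∀ p, p ∈ {p : (Fin n → ℝ) × (Fin m → ℝ) |
      (∀ i, p.1 i ∈ Icc (0 : ℝ) 1) ∧ (∀ j, p.2 j ∈ Icc (0 : ℝ) 1) ∧
      (∀ i, (ρ₀ i ≤ σ → p.1 i ∈ insert (ρ₀ i) (Ioc (τ (ρ₀ i)) 1)) ∧
            (σ ≤ ρ₀ i → p.1 i ∈ Icc σ 1)) ∧
      (∀ j, (ρ₀' j ≤ σ → p.2 j ∈ Icc 0 σ) ∧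
            (σ ≤ ρ₀' j → p.2 j ∈ insert (ρ₀' j) (Ico 0 (τ (ρ₀' j))))) ∧
      (∀ j, f (p.2 j) = ∑ i, A j i * f (p.1 i))} → p ∈ E := by
    rintro p ⟨h1, h2, h3, h4, h5⟩
    refine ⟨h1, h2, ?_, fun i => (h3 i).2, fun j => (h4 j).1, ?_, ?_⟩
    · intro i hle
      rcases mem_insert_iff.mp ((h3 i).1 hle) with hc | hc
      · exact mem_insert_iff.mpr (Or.inl hc)
      · exact mem_insert_iff.mpr (Or.inr ⟨hc.1.le, hc.2⟩)
    · intro j hge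
      rcases mem_insert_iff.mp ((h4 j).2 hge) with hc | hc
      · exact mem_insert_iff.mpr (Or.inl hc)
      · exact mem_insert_iff.mpr (Or.inr ⟨hc.1, hc.2.le⟩)
    · intro j
      rw [hF_eq _ (h2 j), h5 j]
      exact Finset.sum_congr rfl fun i _ => by rw [hF_eq _ (h1 i)]
  -- E is closed
  have hclosed : IsClosed E := by
    have e1 : IsClosed {p : (Fin n → ℝ) × (Fin m → ℝ) | ∀ i, p.1 i ∈ Icc (0:ℝ) 1} := by
      rw [setOf_forall]
      exact isClosed_iInter fun i =>
        isClosed_Icc.preimage ((continuous_apply i).comp continuous_fst)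
    have e2 : IsClosed {p : (Fin n → ℝ) × (Fin m → ℝ) | ∀ j, p.2 j ∈ Icc (0:ℝ) 1} := by
      rw [setOf_forall]
      exact isClosed_iInter fun j =>
        isClosed_Icc.preimage ((continuous_apply j).comp continuous_snd)
    have e3 : IsClosed {p : (Fin n → ℝ) × (Fin m → ℝ) |
        ∀ i, ρ₀ i ≤ σ → p.1 i ∈ insert (ρ₀ i) (Icc (τ (ρ₀ i)) 1)} := by
      rw [setOf_forall]
      refine isClosed_iInter fun i => ?_
      by_cases h : ρ₀ i ≤ σ
      · have : {p : (Fin n → ℝ) × (Fin m → ℝ) |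
            ρ₀ i ≤ σ → p.1 i ∈ insert (ρ₀ i) (Icc (τ (ρ₀ i)) 1)} =
            (fun p : (Fin n → ℝ) × (Fin m → ℝ) => p.1 i) ⁻¹'
              ({ρ₀ i} ∪ Icc (τ (ρ₀ i)) 1) := by
          ext p
          rw [← Set.insert_eq]
          exact ⟨fun hp => hp h, fun hp _ => hp⟩
        rw [this]
        exact (isClosed_singleton.union isClosed_Icc).preimage
          ((continuous_apply i).comp continuous_fst)
      · have : {p : (Fin n → ℝ) × (Fin m → ℝ) |
            ρ₀ i ≤ σ → p.1 i ∈ insert (ρ₀ i) (Icc (τ (ρ₀ i)) 1)} = univ := by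
          ext p
          exact ⟨fun _ => trivial, fun _ hle => absurd hle h⟩
        rw [this]; exact isClosed_univ
    have e4 : IsClosed {p : (Fin n → ℝ) × (Fin m → ℝ) |
        ∀ i, σ ≤ ρ₀ i → p.1 i ∈ Icc σ 1} := by
      rw [setOf_forall]
      refine isClosed_iInter fun i => ?_
      by_cases h : σ ≤ ρ₀ i
      · have : {p : (Fin n → ℝ) × (Fin m → ℝ) | σ ≤ ρ₀ i → p.1 i ∈ Icc σ 1} =
            (fun p : (Fin n → ℝ) × (Fin m → ℝ) => p.1 i) ⁻¹' Icc σ 1 := by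
          ext p
          exact ⟨fun hp => hp h, fun hp _ => hp⟩
        rw [this]
        exact isClosed_Icc.preimage ((continuous_apply i).comp continuous_fst)
      · have : {p : (Fin n → ℝ) × (Fin m → ℝ) | σ ≤ ρ₀ i → p.1 i ∈ Icc σ 1} = univ := by
          ext p
          exact ⟨fun _ => trivial, fun _ hle => absurd hle h⟩
        rw [this]; exact isClosed_univ
    have e5 : IsClosed {p : (Fin n → ℝ) × (Fin m → ℝ) |
        ∀ j, ρ₀' j ≤ σ → p.2 j ∈ Icc 0 σ} := by
      rw [setOf_forall]
      refine isClosed_iInter fun j => ?_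
      by_cases h : ρ₀' j ≤ σ
      · have : {p : (Fin n → ℝ) × (Fin m → ℝ) | ρ₀' j ≤ σ → p.2 j ∈ Icc 0 σ} =
            (fun p : (Fin n → ℝ) × (Fin m → ℝ) => p.2 j) ⁻¹' Icc 0 σ := by
          ext p
          exact ⟨fun hp => hp h, fun hp _ => hp⟩
        rw [this]
        exact isClosed_Icc.preimage ((continuous_apply j).comp continuous_snd)
      · have : {p : (Fin n → ℝ) × (Fin m → ℝ) | ρ₀' j ≤ σ → p.2 j ∈ Icc 0 σ} = univ := by
          ext p
          exact ⟨fun _ => trivial, fun _ hle => absurd hle h⟩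
        rw [this]; exact isClosed_univ
    have e6 : IsClosed {p : (Fin n → ℝ) × (Fin m → ℝ) |
        ∀ j, σ ≤ ρ₀' j → p.2 j ∈ insert (ρ₀' j) (Icc 0 (τ (ρ₀' j)))} := by
      rw [setOf_forall]
      refine isClosed_iInter fun j => ?_
      by_cases h : σ ≤ ρ₀' j
      · have : {p : (Fin n → ℝ) × (Fin m → ℝ) |
            σ ≤ ρ₀' j → p.2 j ∈ insert (ρ₀' j) (Icc 0 (τ (ρ₀' j)))} =
            (fun p : (Fin n → ℝ) × (Fin m → ℝ) => p.2 j) ⁻¹'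
              ({ρ₀' j} ∪ Icc 0 (τ (ρ₀' j))) := by
          ext p
          rw [← Set.insert_eq]
          exact ⟨fun hp => hp h, fun hp _ => hp⟩
        rw [this]
        exact (isClosed_singleton.union isClosed_Icc).preimage
          ((continuous_apply j).comp continuous_snd)
      · have : {p : (Fin n → ℝ) × (Fin m → ℝ) |
            σ ≤ ρ₀' j → p.2 j ∈ insert (ρ₀' j) (Icc 0 (τ (ρ₀' j)))} = univ := by
          ext p
          exact ⟨fun _ => trivial, fun _ hle => absurd hle h⟩
        rw [this]; exact isClosed_univ
    have e7 : IsClosed {p : (Fin n → ℝ) × (Fin m → ℝ) |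
        ∀ j, F (p.2 j) = ∑ i, A j i * F (p.1 i)} := by
      rw [setOf_forall]
      refine isClosed_iInter fun j => ?_
      exact isClosed_eq (hF_cont.comp ((continuous_apply j).comp continuous_snd))
        (continuous_finset_sum _ fun i _ =>
          continuous_const.mul (hF_cont.comp ((continuous_apply i).comp continuous_fst)))
    exact e1.inter (e2.inter (e3.inter (e4.inter (e5.inter (e6.inter e7)))))
  -- E is compact
  have hEcomp : IsCompact E := by
    have hK : IsCompact ((Set.pi univ fun _ : Fin n => Icc (0:ℝ) 1) ×ˢ
        (Set.pi univ fun _ : Fin m => Icc (0:ℝ) 1)) :=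
      (isCompact_univ_pi fun _ => isCompact_Icc).prod
        (isCompact_univ_pi fun _ => isCompact_Icc)
    exact hK.of_isClosed_subset hclosed
      (fun p hp => ⟨fun i _ => hp.1 i, fun j _ => hp.2.1 j⟩)
  -- maximize the total flux on E
  have hΦ : Continuous (fun p : (Fin n → ℝ) × (Fin m → ℝ) =>
      (∑ i, F (p.1 i)) + ∑ j, F (p.2 j)) := by
    apply Continuous.add
    · exact continuous_finset_sum _ fun i _ =>
        hF_cont.comp ((continuous_apply i).comp continuous_fst)
    · exact continuous_finset_sum _ fun j _ =>
        hF_cont.comp ((continuous_apply j).comp continuous_snd)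
  obtain ⟨p, hpE, hpmax⟩ := hEcomp.exists_isMaxOn ⟨p₀, hDE p₀ hp₀D⟩ hΦ.continuousOn
  obtain ⟨hp1, hp2, hp3, hp4, hp5, hp6, hp7⟩ := hpE
  -- clean up the maximizer to land in D, coordinatewise
  have hq1ex : ∀ i, ∃ y : ℝ, f y = f (p.1 i) ∧ y ∈ Icc (0:ℝ) 1 ∧
      (ρ₀ i ≤ σ → y ∈ insert (ρ₀ i) (Ioc (τ (ρ₀ i)) 1)) ∧
      (σ ≤ ρ₀ i → y ∈ Icc σ 1) := by
    intro i
    by_cases h : ρ₀ i ≤ σ ∧ p.1 i = τ (ρ₀ i) ∧ p.1 i ≠ ρ₀ i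
    · obtain ⟨h1, h2, h3⟩ := h
      have hne : ρ₀ i ≠ σ := fun he => h3 (by rw [h2, he, hτσ])
      refine ⟨ρ₀ i, ?_, hρ₀ i, fun _ => mem_insert _ _, ?_⟩
      · rw [h2, (hτ (ρ₀ i) (hρ₀ i) hne).2.2]
      · intro hge
        exact absurd (le_antisymm h1 hge) hne
    · refine ⟨p.1 i, rfl, hp1 i, ?_, hp4 i⟩
      intro hle
      push_neg at h
      by_cases hb : p.1 i = ρ₀ i
      · exact mem_insert_iff.mpr (Or.inl hb)
      · have hbt : p.1 i ≠ τ (ρ₀ i) := fun ht => hb (h hle ht)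
        rcases mem_insert_iff.mp (hp3 i hle) with hc | hc
        · exact mem_insert_iff.mpr (Or.inl hc)
        · exact mem_insert_iff.mpr (Or.inr ⟨lt_of_le_of_ne hc.1 (Ne.symm hbt), hc.2⟩)
  have hq2ex : ∀ j, ∃ y : ℝ, f y = f (p.2 j) ∧ y ∈ Icc (0:ℝ) 1 ∧
      (ρ₀' j ≤ σ → y ∈ Icc 0 σ) ∧
      (σ ≤ ρ₀' j → y ∈ insert (ρ₀' j) (Ico 0 (τ (ρ₀' j)))) := by
    intro j
    by_cases h : σ ≤ ρ₀' j ∧ p.2 j = τ (ρ₀' j) ∧ p.2 j ≠ ρ₀' j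
    · obtain ⟨h1, h2, h3⟩ := h
      have hne : ρ₀' j ≠ σ := fun he => h3 (by rw [h2, he, hτσ])
      refine ⟨ρ₀' j, ?_, hρ₀' j, ?_, fun _ => mem_insert _ _⟩
      · rw [h2, (hτ (ρ₀' j) (hρ₀' j) hne).2.2]
      · intro hle
        exact absurd (le_antisymm hle h1) hne
    · refine ⟨p.2 j, rfl, hp2 j, hp5 j, ?_⟩
      intro hge
      push_neg at h
      by_cases hb : p.2 j = ρ₀' j
      · exact mem_insert_iff.mpr (Or.inl hb)
      · have hbt : p.2 j ≠ τ (ρ₀' j) := fun ht => hb (h hge ht)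
        rcases mem_insert_iff.mp (hp6 j hge) with hc | hc
        · exact mem_insert_iff.mpr (Or.inl hc)
        · exact mem_insert_iff.mpr (Or.inr ⟨hc.1, lt_of_le_of_ne hc.2 hbt⟩)
  choose q1 hq1f hq1mem hq1a hq1b using hq1ex
  choose q2 hq2f hq2mem hq2a hq2b using hq2ex
  have hqD : (q1, q2) ∈ {p : (Fin n → ℝ) × (Fin m → ℝ) |
      (∀ i, p.1 i ∈ Icc (0 : ℝ) 1) ∧ (∀ j, p.2 j ∈ Icc (0 : ℝ) 1) ∧
      (∀ i, (ρ₀ i ≤ σ → p.1 i ∈ insert (ρ₀ i) (Ioc (τ (ρ₀ i)) 1)) ∧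
            (σ ≤ ρ₀ i → p.1 i ∈ Icc σ 1)) ∧
      (∀ j, (ρ₀' j ≤ σ → p.2 j ∈ Icc 0 σ) ∧
            (σ ≤ ρ₀' j → p.2 j ∈ insert (ρ₀' j) (Ico 0 (τ (ρ₀' j))))) ∧
      (∀ j, f (p.2 j) = ∑ i, A j i * f (p.1 i))} := by
    refine ⟨hq1mem, hq2mem, fun i => ⟨hq1a i, hq1b i⟩, fun j => ⟨hq2a j, hq2b j⟩, ?_⟩
    intro j
    rw [hq2f j, ← hF_eq _ (hp2 j), hp7 j]
    exact Finset.sum_congr rfl fun i _ => by rw [hF_eq _ (hp1 i), hq1f i]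
  -- conclude
  refine ⟨⟨p₀, hp₀D⟩, (q1, q2), hqD, ?_⟩
  intro r hrD
  have hrE := hDE r hrD
  have hrval : (∑ i, f (r.1 i)) + (∑ j, f (r.2 j)) =
      (∑ i, F (r.1 i)) + (∑ j, F (r.2 j)) := by
    rw [Finset.sum_congr rfl fun i _ => (hF_eq _ (hrE.1 i)).symm,
      Finset.sum_congr rfl fun j _ => (hF_eq _ (hrE.2.1 j)).symm]
  have hq1sum : (∑ i, f (q1 i)) = ∑ i, F (p.1 i) :=
    Finset.sum_congr rfl fun i _ => by rw [hq1f i, ← hF_eq _ (hp1 i)]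
  have hq2sum : (∑ j, f (q2 j)) = ∑ j, F (p.2 j) :=
    Finset.sum_congr rfl fun j _ => by rw [hq2f j, ← hF_eq _ (hp2 j)]
  have hqval : (∑ i, f (q1 i)) + (∑ j, f (q2 j)) =
      (∑ i, F (p.1 i)) + (∑ j, F (p.2 j)) := by
    rw [hq1sum, hq2sum]
  rw [hrval, hqval]
  exact hpmax hrE
end

section
/- Let f, σ, τ be as in the context, let α_1, α_2 ∈ (0,1) with α_1 ≠ α_2, and let ρ_{1,0}, ρ_{2,0}, ρ_{3,0}, ρ_{4,0} ∈ [0,1]. Consider the set D of all tuples (u_1,u_2,u_3,u_4) ∈ [0,1]^4 such that: for i = 1,2, u_i ∈ {ρ_{i,0}} ∪ (τ(ρ_{i,0}),1] if 0 ≤ ρ_{i,0} ≤ σ and u_i ∈ [σ,1] if σ ≤ ρ_{i,0} ≤ 1; for j = 3,4, u_j ∈ [0,σ] if 0 ≤ ρ_{j,0} ≤ σ and u_j ∈ {ρ_{j,0}} ∪ [0,τ(ρ_{j,0})) if σ ≤ ρ_{j,0} ≤ 1; and f(u_3) = α_1 f(u_1) + α_2 f(u_2), f(u_4) = (1−α_1)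 f(u_1) + (1−α_2) f(u_2). Then there exists exactly one tuple (ρ̂_1,ρ̂_2,ρ̂_3,ρ̂_4) ∈ D maximizing f(u_1) + f(u_2) + f(u_3) + f(u_4) over D. -/
open Set Filter Topology

/-!
On each road, `f` restricted to the admissible states is a bijection onto `[0, γ]`, where
`γ = f (min ρ₀ σ)` on incoming and `γ = f (max ρ₀ σ)` on outgoing roads: `f` increases on
`[0, σ]`, decreases on `[σ, 1]`, and `τ` swaps the two branches. Hence admissible tuples
correspond bijectively to the incoming fluxes `(x₁, x₂)` in a compact polygon, and by
conservation of cars the total flux is `2 (x₁ + x₂)`. The linear function `x₁ + x₂` attains its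
maximum on the polygon, and at only one point: no edge of the polygon is parallel to the lines
`x₁ + x₂ = const` (for the two distribution constraints this is `α₁ ≠ α₂`), so the midpoint of
two distinct maximisers lies strictly inside every upper constraint and could be moved in the
direction `(1, 1)`.
-/

section ConcaveFunctions

variable {f : ℝ → ℝ} {s : Set ℝ} {a : ℝ}

theorem StrictConcaveOn.lt_of_isMaxOn (hf : StrictConcaveOn ℝ s f) (ha : a ∈ s)
    (hmax : IsMaxOn f s a) {x : ℝ} (hx : x ∈ s) (hxa : x ≠ a) : f x < f a :=
  (isMaxOn_iff.1 hmax x hx).lt_of_ne fun h => hxa <|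
    hf.eq_of_isMaxOn (isMaxOn_iff.2 fun y hy => h ▸ isMaxOn_iff.1 hmax y hy) hmax hx ha

theorem StrictConcaveOn.strictMonoOn_of_isMaxOn (hf : StrictConcaveOn ℝ s f) (ha : a ∈ s)
    (hmax : IsMaxOn f s a) : StrictMonoOn f (s ∩ Iic a) := by
  rintro x ⟨hx, -⟩ y ⟨hy, hya : y ≤ a⟩ hxy
  rcases hya.eq_or_lt with rfl | hya
  · exact hf.lt_of_isMaxOn hy hmax hx hxy.ne
  · have hy' : y ∈ openSegment ℝ x a := by
      rw [openSegment_eq_Ioo (hxy.trans hya)]; exact ⟨hxy, hya⟩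
    simpa [min_eq_left (isMaxOn_iff.1 hmax x hx)] using
      hf.lt_on_openSegment hx ha (hxy.trans hya).ne hy'

theorem StrictConcaveOn.strictAntiOn_of_isMaxOn (hf : StrictConcaveOn ℝ s f) (ha : a ∈ s)
    (hmax : IsMaxOn f s a) : StrictAntiOn f (s ∩ Ici a) := by
  rintro x ⟨hx, hax : a ≤ x⟩ y ⟨hy, -⟩ hxy
  rcases hax.eq_or_lt with rfl | hax
  · exact hf.lt_of_isMaxOn hx hmax hy hxy.ne'
  · have hx' : x ∈ openSegment ℝ a y := by
      rw [openSegment_eq_Ioo (hax.trans hxy)]; exact ⟨hax, hxy⟩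
    simpa [min_eq_right (isMaxOn_iff.1 hmax y hy)] using
      hf.lt_on_openSegment ha hy (hax.trans hxy).ne hx'

theorem ConcaveOn.nonneg_of_mem_Icc {b x : ℝ} (hf : ConcaveOn ℝ (Icc a b) f) (ha : 0 ≤ f a)
    (hb : 0 ≤ f b) (hx : x ∈ Icc a b) : 0 ≤ f x :=
  (le_min ha hb).trans <| hf.min_le_of_mem_Icc (left_mem_Icc.2 (hx.1.trans hx.2))
    (right_mem_Icc.2 (hx.1.trans hx.2)) hx

end ConcaveFunctions

section IntervalBijections

variable {f : ℝ → ℝ} {a b : ℝ}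

theorem StrictMonoOn.bijOn_Icc (hf : StrictMonoOn f (Icc a b)) (hc : ContinuousOn f (Icc a b))
    (hab : a ≤ b) : BijOn f (Icc a b) (Icc (f a) (f b)) :=
  hc.image_Icc_of_monotoneOn hab hf.monotoneOn ▸ hf.injOn.bijOn_image

theorem StrictAntiOn.bijOn_Icc (hf : StrictAntiOn f (Icc a b)) (hc : ContinuousOn f (Icc a b))
    (hab : a ≤ b) : BijOn f (Icc a b) (Icc (f b) (f a)) :=
  hc.image_Icc_of_antitoneOn hab hf.antitoneOn ▸ hf.injOn.bijOn_image

theorem StrictMonoOn.bijOn_Ico (hf : StrictMonoOn f (Icc a b)) (hc : ContinuousOn f (Icc a b))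
    (hab : a ≤ b) : BijOn f (Ico a b) (Ico (f a) (f b)) :=
  hc.image_Ico_of_strictMonoOn hab hf ▸ (hf.injOn.mono Ico_subset_Icc_self).bijOn_image

theorem StrictAntiOn.bijOn_Ioc (hf : StrictAntiOn f (Icc a b)) (hc : ContinuousOn f (Icc a b))
    (hab : a ≤ b) : BijOn f (Ioc a b) (Ico (f b) (f a)) :=
  hc.image_Ioc_of_strictAntiOn hab hf ▸ (hf.injOn.mono Ioc_subset_Icc_self).bijOn_image

end IntervalBijections

section AdmissibleStates

variable {f : ℝ → ℝ} {σ : ℝ} {τ : ℝ → ℝ} {ρ₀ : ℝ}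

def incomingAdmissible (σ : ℝ) (τ : ℝ → ℝ) (ρ₀ : ℝ) : Set ℝ :=
  {u | u ∈ Icc 0 1 ∧ (ρ₀ ≤ σ → u ∈ insert ρ₀ (Ioc (τ ρ₀) 1)) ∧ (σ ≤ ρ₀ → u ∈ Icc σ 1)}

def outgoingAdmissible (σ : ℝ) (τ : ℝ → ℝ) (ρ₀ : ℝ) : Set ℝ :=
  {u | u ∈ Icc 0 1 ∧ (ρ₀ ≤ σ → u ∈ Icc 0 σ) ∧ (σ ≤ ρ₀ → u ∈ insert ρ₀ (Ico 0 (τ ρ₀)))}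

theorem tau_mem_Ioc (hσ : σ ≤ 1) (hmono : StrictMonoOn f (Icc 0 σ))
    (hτ : ∀ ρ ∈ Icc (0 : ℝ) 1, ρ ≠ σ → τ ρ ∈ Icc (0 : ℝ) 1 ∧ τ ρ ≠ ρ ∧ f (τ ρ) = f ρ)
    {ρ : ℝ} (hρ : ρ ∈ Ico 0 σ) : τ ρ ∈ Ioc σ 1 := by
  obtain ⟨hτρ, hne, hfτ⟩ := hτ ρ ⟨hρ.1, hρ.2.le.trans hσ⟩ hρ.2.ne
  exact ⟨lt_of_not_ge fun h => hne (hmono.injOn ⟨hτρ.1, h⟩ (Ico_subset_Icc_self hρ) hfτ), hτρ.2⟩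

theorem tau_mem_Ico (hσ : 0 ≤ σ) (hanti : StrictAntiOn f (Icc σ 1))
    (hτ : ∀ ρ ∈ Icc (0 : ℝ) 1, ρ ≠ σ → τ ρ ∈ Icc (0 : ℝ) 1 ∧ τ ρ ≠ ρ ∧ f (τ ρ) = f ρ)
    {ρ : ℝ} (hρ : ρ ∈ Ioc σ 1) : τ ρ ∈ Ico 0 σ := by
  obtain ⟨hτρ, hne, hfτ⟩ := hτ ρ ⟨hσ.trans hρ.1.le, hρ.2⟩ hρ.1.ne'
  exact ⟨hτρ.1, lt_of_not_ge fun h => hne (hanti.injOn ⟨h, hτρ.2⟩ (Ioc_subset_Icc_self hρ) hfτ)⟩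

theorem bijOn_incomingAdmissible (hf_cont : ContinuousOn f (Icc 0 1)) (hf1 : f 1 = 0)
    (hσ : σ ∈ Icc (0 : ℝ) 1) (hmono : StrictMonoOn f (Icc 0 σ))
    (hanti : StrictAntiOn f (Icc σ 1)) (hτσ : τ σ = σ)
    (hτ : ∀ ρ ∈ Icc (0 : ℝ) 1, ρ ≠ σ → τ ρ ∈ Icc (0 : ℝ) 1 ∧ τ ρ ≠ ρ ∧ f (τ ρ) = f ρ)
    (hρ₀ : ρ₀ ∈ Icc (0 : ℝ) 1) :
    BijOn f (incomingAdmissible σ τ ρ₀) (Icc 0 (f (min ρ₀ σ))) := by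
  rcases lt_or_ge ρ₀ σ with hlt | hle
  · obtain ⟨hστ, hτ1⟩ := tau_mem_Ioc hσ.2 hmono hτ ⟨hρ₀.1, hlt⟩
    have hfτ : f (τ ρ₀) = f ρ₀ := (hτ ρ₀ hρ₀ hlt.ne).2.2
    have hset : incomingAdmissible σ τ ρ₀ = insert ρ₀ (Ioc (τ ρ₀) 1) := by
      ext u
      refine ⟨fun hu => hu.2.1 hlt.le, fun hu => ⟨?_, fun _ => hu, fun h => absurd h hlt.not_ge⟩⟩
      rcases hu with rfl | hu
      · exact hρ₀
      · exact ⟨hσ.1.trans (hστ.trans hu.1).le, hu.2⟩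
    have hbij : BijOn f (Ioc (τ ρ₀) 1) (Ico 0 (f ρ₀)) := by
      simpa only [hf1, hfτ] using (hanti.mono (Icc_subset_Icc_left hστ.le)).bijOn_Ioc
        (hf_cont.mono (Icc_subset_Icc_left (hσ.1.trans hστ.le))) hτ1
    have hfρ₀ : 0 ≤ f ρ₀ := by
      rw [← hfτ, ← hf1]; exact hanti.antitoneOn ⟨hστ.le, hτ1⟩ ⟨hσ.2, le_rfl⟩ hτ1
    rw [hset, min_eq_left hlt.le, ← Ico_insert_right hfρ₀]
    exact hbij.insert fun h => h.2.false
  · have hset : incomingAdmissible σ τ ρ₀ = Icc σ 1 := by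
      ext u
      refine ⟨fun hu => hu.2.2 hle, fun hu => ⟨⟨hσ.1.trans hu.1, hu.2⟩, fun h => ?_, fun _ => hu⟩⟩
      obtain rfl : ρ₀ = σ := le_antisymm h hle
      rwa [hτσ, Ioc_insert_left hσ.2]
    rw [hset, min_eq_right hle]
    simpa only [hf1] using hanti.bijOn_Icc (hf_cont.mono (Icc_subset_Icc_left hσ.1)) hσ.2

theorem bijOn_outgoingAdmissible (hf_cont : ContinuousOn f (Icc 0 1)) (hf0 : f 0 = 0)
    (hσ : σ ∈ Icc (0 : ℝ) 1) (hmono : StrictMonoOn f (Icc 0 σ))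
    (hanti : StrictAntiOn f (Icc σ 1)) (hτσ : τ σ = σ)
    (hτ : ∀ ρ ∈ Icc (0 : ℝ) 1, ρ ≠ σ → τ ρ ∈ Icc (0 : ℝ) 1 ∧ τ ρ ≠ ρ ∧ f (τ ρ) = f ρ)
    (hρ₀ : ρ₀ ∈ Icc (0 : ℝ) 1) :
    BijOn f (outgoingAdmissible σ τ ρ₀) (Icc 0 (f (max ρ₀ σ))) := by
  rcases lt_or_ge σ ρ₀ with hlt | hle
  · obtain ⟨h0τ, hτσ'⟩ := tau_mem_Ico hσ.1 hanti hτ ⟨hlt, hρ₀.2⟩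
    have hfτ : f (τ ρ₀) = f ρ₀ := (hτ ρ₀ hρ₀ hlt.ne').2.2
    have hset : outgoingAdmissible σ τ ρ₀ = insert ρ₀ (Ico 0 (τ ρ₀)) := by
      ext u
      refine ⟨fun hu => hu.2.2 hlt.le, fun hu => ⟨?_, fun h => absurd h hlt.not_ge, fun _ => hu⟩⟩
      rcases hu with rfl | hu
      · exact hρ₀
      · exact ⟨hu.1, (hu.2.trans hτσ').le.trans hσ.2⟩
    have hbij : BijOn f (Ico 0 (τ ρ₀)) (Ico 0 (f ρ₀)) := by
      simpa only [hf0, hfτ] using (hmono.mono (Icc_subset_Icc_right hτσ'.le)).bijOn_Ico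
        (hf_cont.mono (Icc_subset_Icc_right (hτσ'.le.trans hσ.2))) h0τ
    have hfρ₀ : 0 ≤ f ρ₀ := by
      rw [← hfτ, ← hf0]; exact hmono.monotoneOn ⟨le_rfl, hσ.1⟩ ⟨h0τ, hτσ'.le⟩ h0τ
    rw [hset, max_eq_left hlt.le, ← Ico_insert_right hfρ₀]
    exact hbij.insert fun h => h.2.false
  · have hset : outgoingAdmissible σ τ ρ₀ = Icc 0 σ := by
      ext u
      refine ⟨fun hu => hu.2.1 hle, fun hu => ⟨⟨hu.1, hu.2.trans hσ.2⟩, fun _ => hu, fun h => ?_⟩⟩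
      obtain rfl : ρ₀ = σ := le_antisymm hle h
      rwa [hτσ, Ico_insert_right hσ.1]
    rw [hset, max_eq_right hle]
    simpa only [hf0] using hmono.bijOn_Icc (hf_cont.mono (Icc_subset_Icc_right hσ.2)) hσ.1

end AdmissibleStates

section FluxPolytope

variable {α₁ α₂ γ₁ γ₂ γ₃ γ₄ : ℝ}

def fluxPolytope (α₁ α₂ γ₁ γ₂ γ₃ γ₄ : ℝ) : Set (ℝ × ℝ) :=
  {x | x.1 ∈ Icc 0 γ₁ ∧ x.2 ∈ Icc 0 γ₂ ∧
    α₁ * x.1 + α₂ * x.2 ≤ γ₃ ∧ (1 - α₁) * x.1 + (1 - α₂) * x.2 ≤ γ₄}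

theorem isCompact_fluxPolytope : IsCompact (fluxPolytope α₁ α₂ γ₁ γ₂ γ₃ γ₄) := by
  refine (isCompact_Icc.prod isCompact_Icc).of_isClosed_subset ?_ fun x hx => ⟨hx.1, hx.2.1⟩
  simp only [fluxPolytope, mem_Icc, ofPred_and]
  refine ((isClosed_le continuous_const continuous_fst).inter
    (isClosed_le continuous_fst continuous_const)).inter
    (((isClosed_le continuous_const continuous_snd).inter
    (isClosed_le continuous_snd continuous_const)).inter
    ((isClosed_le (by fun_prop) continuous_const).inter (isClosed_le (by fun_prop) continuous_const)))

theorem linear_ne_of_add_eq {a b : ℝ} {c d : ℝ × ℝ} (hab : a ≠ b) (hcd : c ≠ d)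
    (hsum : c.1 + c.2 = d.1 + d.2) : a * c.1 + b * c.2 ≠ a * d.1 + b * d.2 := by
  intro h
  have h₁ : c.1 = d.1 := by
    have : (a - b) * (c.1 - d.1) = 0 := by linear_combination h - b * hsum
    linarith [(mul_eq_zero.1 this).resolve_left (sub_ne_zero.2 hab)]
  exact hcd (Prod.ext h₁ (by linarith))

theorem eventually_lt_at_midpoint_add {a b γ : ℝ} {c d : ℝ × ℝ} (hcd : c ≠ d)
    (hsum : c.1 + c.2 = d.1 + d.2) (hab : a ≠ b) (hc : a * c.1 + b * c.2 ≤ γ)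
    (hd : a * d.1 + b * d.2 ≤ γ) :
    ∀ᶠ ε in 𝓝 (0 : ℝ), a * ((c.1 + d.1) / 2 + ε) + b * ((c.2 + d.2) / 2 + ε) < γ := by
  have hlt : a * ((c.1 + d.1) / 2 + 0) + b * ((c.2 + d.2) / 2 + 0) < γ := by
    rcases (linear_ne_of_add_eq hab hcd hsum).lt_or_gt with h | h <;> linarith
  exact (Continuous.continuousAt (by fun_prop)).eventually_lt continuousAt_const hlt

theorem eq_of_isMaxOn_fluxPolytope (hα : α₁ ≠ α₂) {c d : ℝ × ℝ}
    (hc : c ∈ fluxPolytope α₁ α₂ γ₁ γ₂ γ₃ γ₄) (hd : d ∈ fluxPolytope α₁ α₂ γ₁ γ₂ γ₃ γ₄)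
    (hcmax : IsMaxOn (fun x => x.1 + x.2) (fluxPolytope α₁ α₂ γ₁ γ₂ γ₃ γ₄) c)
    (hdmax : IsMaxOn (fun x => x.1 + x.2) (fluxPolytope α₁ α₂ γ₁ γ₂ γ₃ γ₄) d) : c = d := by
  by_contra hcd
  have hsum : c.1 + c.2 = d.1 + d.2 := le_antisymm (hdmax hc) (hcmax hd)
  obtain ⟨ε, hε, h₁, h₂, h₃, h₄⟩ :=
    ((eventually_lt_at_midpoint_add hcd hsum one_ne_zero (by simpa using hc.1.2)
      (by simpa using hd.1.2)).and
    ((eventually_lt_at_midpoint_add hcd hsum zero_ne_one (by simpa using hc.2.1.2)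
      (by simpa using hd.2.1.2)).and
    ((eventually_lt_at_midpoint_add hcd hsum hα hc.2.2.1 hd.2.2.1).and
    (eventually_lt_at_midpoint_add hcd hsum (by contrapose! hα; linarith)
      hc.2.2.2 hd.2.2.2)))).exists_gt
  have hmem : ((c.1 + d.1) / 2 + ε, (c.2 + d.2) / 2 + ε) ∈ fluxPolytope α₁ α₂ γ₁ γ₂ γ₃ γ₄ :=
    ⟨⟨by linarith [hc.1.1, hd.1.1], by linarith⟩, ⟨by linarith [hc.2.1.1, hd.2.1.1], by linarith⟩,
      h₃.le, h₄.le⟩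
  have hle : (c.1 + d.1) / 2 + ε + ((c.2 + d.2) / 2 + ε) ≤ c.1 + c.2 := hcmax hmem
  linarith

theorem existsUnique_isMaxOn_fluxPolytope (hα : α₁ ≠ α₂) (hγ₁ : 0 ≤ γ₁) (hγ₂ : 0 ≤ γ₂)
    (hγ₃ : 0 ≤ γ₃) (hγ₄ : 0 ≤ γ₄) :
    ∃! c, c ∈ fluxPolytope α₁ α₂ γ₁ γ₂ γ₃ γ₄ ∧
      IsMaxOn (fun x => x.1 + x.2) (fluxPolytope α₁ α₂ γ₁ γ₂ γ₃ γ₄) c := by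
  have h0 : (0 : ℝ × ℝ) ∈ fluxPolytope α₁ α₂ γ₁ γ₂ γ₃ γ₄ :=
    ⟨⟨le_rfl, hγ₁⟩, ⟨le_rfl, hγ₂⟩, by simpa using hγ₃, by simpa using hγ₄⟩
  obtain ⟨c, hc, hcmax⟩ :=
    isCompact_fluxPolytope.exists_isMaxOn ⟨0, h0⟩ (continuous_fst.add continuous_snd).continuousOn
  exact ⟨c, ⟨hc, hcmax⟩, fun d ⟨hd, hdmax⟩ => eq_of_isMaxOn_fluxPolytope hα hd hc hdmax hcmax⟩

end FluxPolytope

theorem Set.BijOn.existsUnique_isMaxOn {α β γ δ : Type*} [Preorder γ] [LinearOrder δ]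
    {Φ : α → β} {D : Set α} {P : Set β} (hΦ : BijOn Φ D P) {F : α → γ} {G : β → δ}
    {h : δ → γ} (hh : StrictMono h) (hF : ∀ p ∈ D, F p = h (G (Φ p)))
    (hG : ∃! c, c ∈ P ∧ IsMaxOn G P c) : ∃! p, p ∈ D ∧ IsMaxOn F D p := by
  obtain ⟨c, ⟨hcP, hcmax⟩, hcuniq⟩ := hG
  obtain ⟨p, hpD, rfl⟩ := hΦ.surjOn hcP
  refine ⟨p, ⟨hpD, fun q hq => ?_⟩, fun q ⟨hqD, hqmax⟩ => hΦ.injOn hqD hpD ?_⟩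
  · rw [mem_ofPred_eq, hF q hq, hF p hpD]
    exact hh.monotone (hcmax (hΦ.mapsTo hq))
  · refine hcuniq _ ⟨hΦ.mapsTo hqD, fun x hx => ?_⟩
    obtain ⟨r, hrD, rfl⟩ := hΦ.surjOn hx
    have := hqmax hrD
    rw [mem_ofPred_eq, hF r hrD, hF q hqD, hh.le_iff_le] at this
    exact this

section Junction

variable {f : ℝ → ℝ} {α₁ α₂ γ₁ γ₂ γ₃ γ₄ : ℝ} {I₁ I₂ O₃ O₄ : Set ℝ}

def junctionStates (f : ℝ → ℝ) (α₁ α₂ : ℝ) (I₁ I₂ O₃ O₄ : Set ℝ) : Set (ℝ × ℝ × ℝ × ℝ) :=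
  {p | p.1 ∈ I₁ ∧ p.2.1 ∈ I₂ ∧ p.2.2.1 ∈ O₃ ∧ p.2.2.2 ∈ O₄ ∧
    f p.2.2.1 = α₁ * f p.1 + α₂ * f p.2.1 ∧ f p.2.2.2 = (1 - α₁) * f p.1 + (1 - α₂) * f p.2.1}

theorem bijOn_junctionStates (h₁ : BijOn f I₁ (Icc 0 γ₁)) (h₂ : BijOn f I₂ (Icc 0 γ₂))
    (h₃ : BijOn f O₃ (Icc 0 γ₃)) (h₄ : BijOn f O₄ (Icc 0 γ₄))
    (hα₁ : α₁ ∈ Icc (0 : ℝ) 1) (hα₂ : α₂ ∈ Icc (0 : ℝ) 1) :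
    BijOn (fun p => (f p.1, f p.2.1)) (junctionStates f α₁ α₂ I₁ I₂ O₃ O₄)
      (fluxPolytope α₁ α₂ γ₁ γ₂ γ₃ γ₄) := by
  refine ⟨?_, ?_, ?_⟩
  · rintro p ⟨hp₁, hp₂, hp₃, hp₄, e₃, e₄⟩
    exact ⟨h₁.mapsTo hp₁, h₂.mapsTo hp₂, e₃ ▸ (h₃.mapsTo hp₃).2, e₄ ▸ (h₄.mapsTo hp₄).2⟩
  · rintro p ⟨hp₁, hp₂, hp₃, hp₄, e₃, e₄⟩ q ⟨hq₁, hq₂, hq₃, hq₄, e₃', e₄'⟩ h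
    have h₁₂ : f p.1 = f q.1 := congrArg Prod.fst h
    have h₂₂ : f p.2.1 = f q.2.1 := congrArg Prod.snd h
    refine Prod.ext (h₁.injOn hp₁ hq₁ h₁₂) (Prod.ext (h₂.injOn hp₂ hq₂ h₂₂) (Prod.ext ?_ ?_))
    · exact h₃.injOn hp₃ hq₃ (by rw [e₃, e₃', h₁₂, h₂₂])
    · exact h₄.injOn hp₄ hq₄ (by rw [e₄, e₄', h₁₂, h₂₂])
  · rintro ⟨x₁, x₂⟩ ⟨hx₁, hx₂, hx₃, hx₄⟩
    obtain ⟨u₁, hu₁, rfl⟩ := h₁.surjOn hx₁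
    obtain ⟨u₂, hu₂, rfl⟩ := h₂.surjOn hx₂
    obtain ⟨u₃, hu₃, hfu₃⟩ := h₃.surjOn ⟨by nlinarith [hα₁.1, hα₂.1, hx₁.1, hx₂.1], hx₃⟩
    obtain ⟨u₄, hu₄, hfu₄⟩ := h₄.surjOn ⟨by nlinarith [hα₁.2, hα₂.2, hx₁.1, hx₂.1], hx₄⟩
    exact ⟨(u₁, u₂, u₃, u₄), ⟨hu₁, hu₂, hu₃, hu₄, hfu₃, hfu₄⟩, rfl⟩

end Junction

/-- Existence and uniqueness (Theorem 3.1) of the boundary states produced by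
the Riemann solver at a junction with two incoming roads (indices 1,2) and two
outgoing roads (indices 3,4): there is exactly one admissible 4-tuple
maximizing the total flux. -/
theorem stmt4 (f : ℝ → ℝ) (σ : ℝ) (τ : ℝ → ℝ)
    (hf_cont : ContinuousOn f (Icc 0 1))
    (hf_conc : StrictConcaveOn ℝ (Icc 0 1) f)
    (hf0 : f 0 = 0) (hf1 : f 1 = 0)
    (hσ : σ ∈ Ioo (0 : ℝ) 1)
    (hσmax : ∀ x ∈ Icc (0 : ℝ) 1, f x ≤ f σ)
    (hτσ : τ σ = σ)
    (hτ : ∀ ρ ∈ Icc (0 : ℝ) 1, ρ ≠ σ →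
      τ ρ ∈ Icc (0 : ℝ) 1 ∧ τ ρ ≠ ρ ∧ f (τ ρ) = f ρ)
    (α₁ α₂ : ℝ) (hα₁ : α₁ ∈ Ioo (0 : ℝ) 1) (hα₂ : α₂ ∈ Ioo (0 : ℝ) 1)
    (hα : α₁ ≠ α₂)
    (ρ₁₀ ρ₂₀ ρ₃₀ ρ₄₀ : ℝ)
    (h₁₀ : ρ₁₀ ∈ Icc (0 : ℝ) 1) (h₂₀ : ρ₂₀ ∈ Icc (0 : ℝ) 1)
    (h₃₀ : ρ₃₀ ∈ Icc (0 : ℝ) 1) (h₄₀ : ρ₄₀ ∈ Icc (0 : ℝ) 1)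
    (D : Set (ℝ × ℝ × ℝ × ℝ))
    (hD : D = {p | p.1 ∈ Icc (0 : ℝ) 1 ∧ p.2.1 ∈ Icc (0 : ℝ) 1 ∧
      p.2.2.1 ∈ Icc (0 : ℝ) 1 ∧ p.2.2.2 ∈ Icc (0 : ℝ) 1 ∧
      (ρ₁₀ ≤ σ → p.1 ∈ insert ρ₁₀ (Ioc (τ ρ₁₀) 1)) ∧
      (σ ≤ ρ₁₀ → p.1 ∈ Icc σ 1) ∧
      (ρ₂₀ ≤ σ → p.2.1 ∈ insert ρ₂₀ (Ioc (τ ρ₂₀) 1)) ∧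
      (σ ≤ ρ₂₀ → p.2.1 ∈ Icc σ 1) ∧
      (ρ₃₀ ≤ σ → p.2.2.1 ∈ Icc 0 σ) ∧
      (σ ≤ ρ₃₀ → p.2.2.1 ∈ insert ρ₃₀ (Ico 0 (τ ρ₃₀))) ∧
      (ρ₄₀ ≤ σ → p.2.2.2 ∈ Icc 0 σ) ∧
      (σ ≤ ρ₄₀ → p.2.2.2 ∈ insert ρ₄₀ (Ico 0 (τ ρ₄₀))) ∧
      f p.2.2.1 = α₁ * f p.1 + α₂ * f p.2.1 ∧
      f p.2.2.2 = (1 - α₁) * f p.1 + (1 - α₂) * f p.2.1}) :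
    ∃! p, p ∈ D ∧ ∀ q ∈ D,
      f q.1 + f q.2.1 + f q.2.2.1 + f q.2.2.2 ≤
        f p.1 + f p.2.1 + f p.2.2.1 + f p.2.2.2 := by
  have hσI : σ ∈ Icc (0 : ℝ) 1 := Ioo_subset_Icc_self hσ
  have hmax : IsMaxOn f (Icc 0 1) σ := isMaxOn_iff.2 hσmax
  have hmono : StrictMonoOn f (Icc 0 σ) := (hf_conc.strictMonoOn_of_isMaxOn hσI hmax).mono
    fun x hx => ⟨⟨hx.1, hx.2.trans hσI.2⟩, hx.2⟩
  have hanti : StrictAntiOn f (Icc σ 1) := (hf_conc.strictAntiOn_of_isMaxOn hσI hmax).mono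
    fun x hx => ⟨⟨hσI.1.trans hx.1, hx.2⟩, hx.1⟩
  have hin : ∀ ρ₀ ∈ Icc (0 : ℝ) 1, BijOn f (incomingAdmissible σ τ ρ₀) (Icc 0 (f (min ρ₀ σ))) :=
    fun _ => bijOn_incomingAdmissible hf_cont hf1 hσI hmono hanti hτσ hτ
  have hout : ∀ ρ₀ ∈ Icc (0 : ℝ) 1, BijOn f (outgoingAdmissible σ τ ρ₀) (Icc 0 (f (max ρ₀ σ))) :=
    fun _ => bijOn_outgoingAdmissible hf_cont hf0 hσI hmono hanti hτσ hτ
  have hf_nonneg : ∀ x ∈ Icc (0 : ℝ) 1, 0 ≤ f x :=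
    fun _ => hf_conc.concaveOn.nonneg_of_mem_Icc hf0.ge hf1.ge
  have hD' : D = junctionStates f α₁ α₂ (incomingAdmissible σ τ ρ₁₀)
      (incomingAdmissible σ τ ρ₂₀) (outgoingAdmissible σ τ ρ₃₀) (outgoingAdmissible σ τ ρ₄₀) := by
    rw [hD]; ext p
    simp only [junctionStates, incomingAdmissible, outgoingAdmissible, mem_ofPred_eq]
    tauto
  subst hD'
  simpa only [isMaxOn_iff] using
    (bijOn_junctionStates (hin _ h₁₀) (hin _ h₂₀) (hout _ h₃₀) (hout _ h₄₀)
      (Ioo_subset_Icc_self hα₁) (Ioo_subset_Icc_self hα₂)).existsUnique_isMaxOn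
      (strictMono_mul_left_of_pos two_pos) (fun p ⟨_, _, _, _, e₃, e₄⟩ => by rw [e₃, e₄]; ring)
      (existsUnique_isMaxOn_fluxPolytope hα
        (hf_nonneg _ ⟨le_min h₁₀.1 hσI.1, (min_le_right _ _).trans hσI.2⟩)
        (hf_nonneg _ ⟨le_min h₂₀.1 hσI.1, (min_le_right _ _).trans hσI.2⟩)
        (hf_nonneg _ ⟨h₃₀.1.trans (le_max_left _ _), max_le h₃₀.2 hσI.2⟩)
        (hf_nonneg _ ⟨h₄₀.1.trans (le_max_left _ _), max_le h₄₀.2 hσI.2⟩))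
end

section
/- Let f : [0,1] → ℝ be twice continuously differentiable with f'' ≤ −c < 0 on [0,1] (so f' is strictly decreasing, with continuous inverse g = (f')^{-1} defined on [f'(1), f'(0)]). Let ρ_l, ρ_r ∈ [0,1] with ρ_r < ρ_l, and define u : (0,∞) × ℝ → ℝ by u(t,x) = ρ_l if x ≤ f'(ρ_l) t, u(t,x) = g(x/t) if f'(ρ_l) t ≤ x ≤ f'(ρ_r) t, and u(t,x) = ρ_r if x ≥ f'(ρ_r) t. Then u is a weak solution of u_t + f(u)_x = 0 on (0,∞) × ℝ, i.e. ∫_0^∞ ∫_ℝ ( u ∂_t φ + f(u) ∂_x φ ) dx dt = 0 for every smooth compactly supported φ on (0,∞) × ℝ, and u satisfies the Kruzhkov entropy inequalities: for every k ∈ [0,1] and every nonnegative smooth compactly supported φ on (0,∞) × ℝ, ∫_0^∞ ∫_ℝ ( |u − k| ∂_t φ + sgn(u − k)(f(u) − f(k)) ∂_x φ ) dx dt ≥ 0, with sgn(0) = 0. -/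
open Set MeasureTheory Filter Topology

set_option maxHeartbeats 4000000 in
theorem rarefaction_core (f'' : ℝ → ℝ) (c : ℝ) (hc : 0 < c)
    (A B : ℝ) (hAB : A < B) (G : ℝ → ℝ)
    (hGc : Continuous G)
    (hGrange : ∀ y, G y ∈ Icc (0:ℝ) 1)
    (hGl : ∀ y, y ≤ A → G y = G A)
    (hGr : ∀ y, B ≤ y → G y = G B)
    (hGd : ∀ y ∈ Ioo A B, HasDerivAt G ((f'' (G y))⁻¹) y)
    (hf''G : Continuous fun y => f'' (G y))
    (hf''neg : ∀ y, f'' (G y) ≤ -c)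
    (η q ηd : ℝ → ℝ) (k' : ℝ)
    (hηc : ContinuousOn η (Icc 0 1))
    (hqc : ContinuousOn q (Icc 0 1))
    (hηdm : Measurable ηd)
    (hηdb : ∀ v ∈ Icc (0:ℝ) 1, |ηd v| ≤ 1)
    (hηd : ∀ y ∈ Ioo A B, y ≠ k' → HasDerivAt η (ηd (G y)) (G y))
    (hqd : ∀ y ∈ Ioo A B, y ≠ k' → HasDerivAt q (ηd (G y) * y) (G y))
    (φ : ℝ × ℝ → ℝ) (hφ : ContDiff ℝ (⊤ : ℕ∞) φ) (hφc : HasCompactSupport φ)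
    (hφs : tsupport φ ⊆ Ioi (0 : ℝ) ×ˢ (univ : Set ℝ)) :
    ∫ t in Ioi (0:ℝ), ∫ x : ℝ,
      (η (G (x / t)) * fderiv ℝ φ (t, x) (1, 0)
        + q (G (x / t)) * fderiv ℝ φ (t, x) (0, 1)) = 0 := by
  classical
  -- trivial case: φ = 0
  rcases eq_or_ne (tsupport φ) ∅ with hK0 | hKne
  · have hφ0 : φ = fun _ => (0:ℝ) := by
      ext p
      have : p ∉ tsupport φ := by rw [hK0]; exact notMem_empty p
      exact image_eq_zero_of_notMem_tsupport this
    subst hφ0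
    simp [fderiv_const]
  set K := tsupport φ with hK
  have hKc : IsCompact K := hφc
  have hKm : MeasurableSet K := (isClosed_tsupport φ).measurableSet
  have hφcont : Continuous φ := hφ.continuous
  have hφd : Differentiable ℝ φ := hφ.differentiable (by simp)
  have hfdc : Continuous (fderiv ℝ φ) := hφ.continuous_fderiv (by simp)
  set D1 : ℝ × ℝ → ℝ := fun p => fderiv ℝ φ p (1, 0) with hD1def
  set D2 : ℝ × ℝ → ℝ := fun p => fderiv ℝ φ p (0, 1) with hD2def
  have hD1c : Continuous D1 := hfdc.clm_apply continuous_const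
  have hD2c : Continuous D2 := hfdc.clm_apply continuous_const
  have hfd0 : ∀ p, p ∉ K → fderiv ℝ φ p = 0 := by
    intro p hp
    by_contra h
    exact hp (support_fderiv_subset ℝ (Function.mem_support.2 h))
  have hD10 : ∀ p, p ∉ K → D1 p = 0 := fun p hp => by simp [hD1def, hfd0 p hp]
  have hD20 : ∀ p, p ∉ K → D2 p = 0 := fun p hp => by simp [hD2def, hfd0 p hp]
  have hφ0 : ∀ p, p ∉ K → φ p = 0 := fun p hp => image_eq_zero_of_notMem_tsupport hp
  -- bounds on φ, D1, D2
  obtain ⟨Cφ, hCφ⟩ : ∃ C, ∀ p, |φ p| ≤ C := by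
    obtain ⟨C, hC⟩ := hφc.exists_bound_of_continuous hφcont
    exact ⟨C, fun p => by simpa [Real.norm_eq_abs] using hC p⟩
  obtain ⟨C1, hC1⟩ : ∃ C, ∀ p, |D1 p| ≤ C := by
    obtain ⟨C, hC⟩ := hKc.exists_bound_of_continuousOn hD1c.continuousOn
    refine ⟨max C 0, fun p => ?_⟩
    by_cases hp : p ∈ K
    · exact le_max_of_le_left (by simpa [Real.norm_eq_abs] using hC p hp)
    · simp [hD10 p hp]
  obtain ⟨C2, hC2⟩ : ∃ C, ∀ p, |D2 p| ≤ C := by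
    obtain ⟨C, hC⟩ := hKc.exists_bound_of_continuousOn hD2c.continuousOn
    refine ⟨max C 0, fun p => ?_⟩
    by_cases hp : p ∈ K
    · exact le_max_of_le_left (by simpa [Real.norm_eq_abs] using hC p hp)
    · simp [hD20 p hp]
  -- bounds on η∘G, q∘G
  have hηGc : Continuous fun y => η (G y) := hηc.comp_continuous hGc hGrange
  have hqGc : Continuous fun y => q (G y) := hqc.comp_continuous hGc hGrange
  obtain ⟨Mη, hMη⟩ : ∃ C, ∀ y : ℝ, |η (G y)| ≤ C := by
    obtain ⟨C, hC⟩ := isCompact_Icc.exists_bound_of_continuousOn hηc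
    exact ⟨C, fun y => by simpa [Real.norm_eq_abs] using hC (G y) (hGrange y)⟩
  obtain ⟨Mq, hMq⟩ : ∃ C, ∀ y : ℝ, |q (G y)| ≤ C := by
    obtain ⟨C, hC⟩ := isCompact_Icc.exists_bound_of_continuousOn hqc
    exact ⟨C, fun y => by simpa [Real.norm_eq_abs] using hC (G y) (hGrange y)⟩
  have hinvb : ∀ y : ℝ, |(f'' (G y))⁻¹| ≤ c⁻¹ := by
    intro y
    have h1 : f'' (G y) ≤ -c := hf''neg y
    have h2 : c ≤ |f'' (G y)| := by
      rw [abs_of_neg (lt_of_le_of_lt h1 (by linarith))]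
      linarith
    rw [abs_inv]
    exact inv_anti₀ hc h2
  -- support bounds
  obtain ⟨a, b, R, ha, hab', hR0, hKsub⟩ :
      ∃ a b R : ℝ, 0 < a ∧ a ≤ b ∧ 0 ≤ R ∧ ∀ p ∈ K, a ≤ p.1 ∧ p.1 ≤ b ∧ |p.2| ≤ R := by
    obtain ⟨r, hr⟩ := hKc.isBounded.subset_closedBall 0
    have hKne' : K.Nonempty := nonempty_iff_ne_empty.2 hKne
    set K1 := Prod.fst '' K with hK1
    have hK1c : IsCompact K1 := hKc.image continuous_fst
    have hK1ne : K1.Nonempty := hKne'.image _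
    have hK1pos : ∀ s ∈ K1, 0 < s := by
      rintro s ⟨p, hp, rfl⟩
      exact (hφs hp).1
    have hr0 : 0 ≤ r := by
      obtain ⟨p, hp⟩ := hKne'
      have h2 : ‖p‖ ≤ r := by simpa using hr hp
      exact (norm_nonneg p).trans h2
    refine ⟨sInf K1, r, r, hK1pos _ (hK1c.sInf_mem hK1ne), ?_, hr0, ?_⟩
    · obtain ⟨p, hp⟩ := hKne'
      have h1 : sInf K1 ≤ p.1 := csInf_le hK1c.bddBelow ⟨p, hp, rfl⟩
      have h2 : ‖p‖ ≤ r := by simpa using hr hp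
      have h3 : |p.1| ≤ r := by simpa [Real.norm_eq_abs] using (norm_fst_le p).trans h2
      exact h1.trans ((le_abs_self _).trans h3)
    · intro p hp
      have h2 : ‖p‖ ≤ r := by simpa using hr hp
      have h3 : |p.1| ≤ r := by simpa [Real.norm_eq_abs] using (norm_fst_le p).trans h2
      have h4 : |p.2| ≤ r := by simpa [Real.norm_eq_abs] using (norm_snd_le p).trans h2
      exact ⟨csInf_le hK1c.bddBelow ⟨p, hp, rfl⟩, (le_abs_self _).trans h3, h4⟩
  -- the exact derivative in the fan
  set P : ℝ → ℝ → ℝ := fun t x =>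
    if A * t < x ∧ x < B * t then ηd (G (x / t)) * (f'' (G (x / t)))⁻¹ * (x / t ^ 2)
    else 0 with hPdef
  -- bound for P on K
  have hPbound : ∀ t x : ℝ, (t, x) ∈ K → |P t x| ≤ c⁻¹ * (R / a ^ 2) := by
    intro t x hp
    obtain ⟨h1, _, h3⟩ := hKsub _ hp
    have ht0 : (0:ℝ) < t := lt_of_lt_of_le ha h1
    have hR0 : 0 ≤ R := (abs_nonneg x).trans h3
    rw [hPdef]
    dsimp only
    split_ifs with hcond
    · have e1 : |ηd (G (x / t))| ≤ 1 := hηdb _ (hGrange _)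
      have e2 : |(f'' (G (x / t)))⁻¹| ≤ c⁻¹ := hinvb _
      have e3 : |x / t ^ 2| ≤ R / a ^ 2 := by
        rw [abs_div]
        apply div_le_div₀ hR0 h3 (by positivity)
        rw [abs_of_pos (by positivity : (0:ℝ) < t ^ 2)]
        nlinarith
      calc |ηd (G (x / t)) * (f'' (G (x / t)))⁻¹ * (x / t ^ 2)|
          = |ηd (G (x / t))| * |(f'' (G (x / t)))⁻¹| * |x / t ^ 2| := by
            rw [abs_mul, abs_mul]
        _ ≤ 1 * c⁻¹ * (R / a ^ 2) := by
            apply mul_le_mul (mul_le_mul e1 e2 (abs_nonneg _) zero_le_one) e3 (abs_nonneg _)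
            positivity
        _ = c⁻¹ * (R / a ^ 2) := by ring
    · simp; positivity
  -- measurability
  have hdivm : Measurable fun p : ℝ × ℝ => p.2 / p.1 :=
    measurable_snd.div measurable_fst
  have hPm : Measurable fun p : ℝ × ℝ => P p.1 p.2 := by
    apply Measurable.ite
    · exact (measurableSet_lt (measurable_const.mul measurable_fst) measurable_snd).inter
        (measurableSet_lt measurable_snd (measurable_const.mul measurable_fst))
    · exact ((hηdm.comp (hGc.measurable.comp hdivm)).mul
        ((hf''G.measurable.comp hdivm).inv)).mul
        (measurable_snd.div (measurable_fst.pow measurable_const))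
    · exact measurable_const
  -- step (T) : integration by parts in t for fixed x
  have hCφ0 : 0 ≤ Cφ := (abs_nonneg _).trans (hCφ (0, 0))
  have hC10 : 0 ≤ C1 := (abs_nonneg _).trans (hC1 (0, 0))
  have hC20 : 0 ≤ C2 := (abs_nonneg _).trans (hC2 (0, 0))
  have hMη0 : 0 ≤ Mη := (abs_nonneg _).trans (hMη 0)
  have hMq0 : 0 ≤ Mq := (abs_nonneg _).trans (hMq 0)
  have hCP0 : 0 ≤ c⁻¹ * (R / a ^ 2) := by positivity
  have hT : ∀ x : ℝ, ∫ t in Ioi (0:ℝ),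
      (η (G (x / t)) * D1 (t, x) - P t x * φ (t, x)) = 0 := by
    intro x
    have ha2 : (0:ℝ) < a / 2 := by positivity
    have hab2 : a / 2 ≤ b + 1 := by linarith
    set F : ℝ → ℝ := fun t => η (G (x / t)) * φ (t, x) with hFdef
    set h' : ℝ → ℝ := fun t => η (G (x / t)) * D1 (t, x) - P t x * φ (t, x) with hh'def
    have hvan : ∀ t : ℝ, (t, x) ∉ K → h' t = 0 := by
      intro t hpK
      rw [hh'def]
      dsimp only
      rw [hD10 _ hpK, hφ0 _ hpK]
      ring
    set S : Set ℝ := {x / A, x / B, x / k'} with hSdef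
    have hScount : S.Countable :=
      (((Set.finite_singleton _).insert _).insert _).countable
    have hderivF : ∀ t ∈ Ioo (a / 2) (b + 1) \ S, HasDerivAt F (h' t) t := by
      intro t ht
      have ht0 : 0 < t := lt_trans ha2 ht.1.1
      have hφt : HasDerivAt (fun s => φ (s, x)) (D1 (t, x)) t := by
        have h1 : HasDerivAt (fun s : ℝ => (s, x)) ((1:ℝ), (0:ℝ)) t :=
          (hasDerivAt_id t).prodMk (hasDerivAt_const t x)
        exact (hφd (t, x)).hasFDerivAt.comp_hasDerivAt t h1
      rcases eq_or_ne x 0 with rfl | hx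
      · have hF : F = fun s => η (G 0) * φ (s, 0) := by
          funext s; rw [hFdef]; dsimp only; rw [zero_div]
        have hP0 : P t 0 = 0 := by
          rw [hPdef]; dsimp only; rw [zero_div]
          split_ifs <;> simp
        have hh : h' t = η (G 0) * D1 (t, 0) := by
          rw [hh'def]; dsimp only; rw [zero_div, hP0]; ring
        rw [hF, hh]
        exact hφt.const_mul _
      · have hmemS : ∀ z : ℝ, x / t = z → t = x / z := by
          intro z hz
          have hz0 : z ≠ 0 := by
            intro h0
            rw [h0] at hz
            exact hx ((div_eq_zero_iff.1 hz).resolve_right (ne_of_gt ht0))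
          field_simp [← hz]
          rw [← hz]; field_simp [ne_of_gt ht0]
        have hcxs : ContinuousAt (fun s : ℝ => x / s) t :=
          continuousAt_const.div continuousAt_id (ne_of_gt ht0)
        rcases lt_trichotomy (x / t) A with h1 | h1 | h1
        · -- left constant region
          have hev : ∀ᶠ s in 𝓝 t, x / s < A := hcxs.tendsto.eventually_lt_const h1
          have hFev : (fun s => η (G A) * φ (s, x)) =ᶠ[𝓝 t] F := by
            filter_upwards [hev] with s hs
            rw [hFdef]; dsimp only; rw [hGl _ hs.le]
          have hder : HasDerivAt (fun s => η (G A) * φ (s, x)) (η (G A) * D1 (t, x)) t :=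
            hφt.const_mul _
          have hd2 := hder.congr_of_eventuallyEq hFev.symm
          have hP0 : P t x = 0 := by
            rw [hPdef]; dsimp only
            rw [if_neg]
            rintro ⟨hcd, -⟩
            have : x < A * t := (div_lt_iff₀ ht0).1 h1
            linarith
          have hh : h' t = η (G A) * D1 (t, x) := by
            rw [hh'def]; dsimp only; rw [hGl _ h1.le, hP0]; ring
          rw [hh]; exact hd2
        · exact absurd (hmemS A h1) (fun h => ht.2 (by rw [hSdef, h]; exact mem_insert _ _))
        · rcases lt_trichotomy (x / t) B with h2 | h2 | h2
          · -- fan region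
            have hyI : (x / t) ∈ Ioo A B := ⟨h1, h2⟩
            have hyk : x / t ≠ k' := fun h =>
              ht.2 (by rw [hSdef, hmemS k' h]; exact mem_insert_of_mem _ (mem_insert_of_mem _ rfl))
            have hxs : HasDerivAt (fun s : ℝ => x / s) (x * -(t ^ 2)⁻¹) t :=
              (hasDerivAt_inv (ne_of_gt ht0)).const_mul x
            have hG' : HasDerivAt (fun s : ℝ => G (x / s))
                ((f'' (G (x / t)))⁻¹ * (x * -(t ^ 2)⁻¹)) t := (hGd _ hyI).comp t hxs
            have hη' : HasDerivAt (fun s : ℝ => η (G (x / s)))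
                (ηd (G (x / t)) * ((f'' (G (x / t)))⁻¹ * (x * -(t ^ 2)⁻¹))) t :=
              (hηd _ hyI hyk).comp t hG'
            have hder := hη'.mul hφt
            have hh : h' t = ηd (G (x / t)) * ((f'' (G (x / t)))⁻¹ * (x * -(t ^ 2)⁻¹)) * φ (t, x)
                + η (G (x / t)) * D1 (t, x) := by
              rw [hh'def]; dsimp only
              have hcond : A * t < x ∧ x < B * t := ⟨(lt_div_iff₀ ht0).1 h1, (div_lt_iff₀ ht0).1 h2⟩
              rw [hPdef]; dsimp only; rw [if_pos hcond]
              ring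
            rw [hFdef, hh]
            exact hder
          · exact absurd (hmemS B h2)
              (fun h => ht.2 (by rw [hSdef, h]; exact mem_insert_of_mem _ (mem_insert _ _)))
          · -- right constant region
            have hev : ∀ᶠ s in 𝓝 t, B < x / s := hcxs.tendsto.eventually_const_lt h2
            have hFev : (fun s => η (G B) * φ (s, x)) =ᶠ[𝓝 t] F := by
              filter_upwards [hev] with s hs
              rw [hFdef]; dsimp only; rw [hGr _ hs.le]
            have hder : HasDerivAt (fun s => η (G B) * φ (s, x)) (η (G B) * D1 (t, x)) t :=
              hφt.const_mul _
            have hd2 := hder.congr_of_eventuallyEq hFev.symm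
            have hP0 : P t x = 0 := by
              rw [hPdef]; dsimp only
              rw [if_neg]
              rintro ⟨-, hcd⟩
              have : B * t < x := (lt_div_iff₀ ht0).1 h2
              linarith
            have hh : h' t = η (G B) * D1 (t, x) := by
              rw [hh'def]; dsimp only; rw [hGr _ h2.le, hP0]; ring
            rw [hh]; exact hd2
    have hcontF : ContinuousOn F (Icc (a / 2) (b + 1)) := by
      rw [hFdef]
      apply ContinuousOn.mul
      · exact hηGc.comp_continuousOn
          (continuousOn_const.div continuousOn_id
            (fun s hs => ne_of_gt (lt_of_lt_of_le ha2 hs.1)))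
      · exact (hφcont.comp (continuous_id.prodMk continuous_const)).continuousOn
    have hh'm : Measurable h' := by
      rw [hh'def]
      apply Measurable.sub
      · exact (hηGc.measurable.comp (measurable_const.div measurable_id)).mul
          (hD1c.measurable.comp (measurable_id.prodMk measurable_const))
      · exact ((hPm.comp (measurable_id.prodMk measurable_const)).mul
          (hφcont.measurable.comp (measurable_id.prodMk measurable_const)))
    have hbound : ∀ t : ℝ, |h' t| ≤ Mη * C1 + c⁻¹ * (R / a ^ 2) * Cφ := by
      intro t
      by_cases hpK : (t, x) ∈ K
      · rw [hh'def]; dsimp only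
        calc |η (G (x / t)) * D1 (t, x) - P t x * φ (t, x)|
            ≤ |η (G (x / t)) * D1 (t, x)| + |P t x * φ (t, x)| := abs_sub _ _
          _ ≤ Mη * C1 + c⁻¹ * (R / a ^ 2) * Cφ := by
              rw [abs_mul, abs_mul]
              exact add_le_add
                (mul_le_mul (hMη _) (hC1 _) (abs_nonneg _) hMη0)
                (mul_le_mul (hPbound _ _ hpK) (hCφ _) (abs_nonneg _) hCP0)
      · rw [hvan t hpK, abs_zero]; positivity
    have hint : IntervalIntegrable h' volume (a / 2) (b + 1) := by
      rw [intervalIntegrable_iff_integrableOn_Icc_of_le hab2]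
      apply Integrable.mono' (g := fun _ => Mη * C1 + c⁻¹ * (R / a ^ 2) * Cφ)
        (integrableOn_const measure_Icc_lt_top.ne)
        hh'm.aestronglyMeasurable.restrict
      exact ae_of_all _ fun t => by rw [Real.norm_eq_abs]; exact hbound t
    have hFa : F (a / 2) = 0 := by
      have hK' : (a / 2, x) ∉ K := fun h => by
        have := (hKsub _ h).1
        simp only at this
        linarith
      rw [hFdef]; dsimp only; rw [hφ0 _ hK', mul_zero]
    have hFb : F (b + 1) = 0 := by
      have hK' : (b + 1, x) ∉ K := fun h => by
        have := (hKsub _ h).2.1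
        simp only at this
        linarith
      rw [hFdef]; dsimp only; rw [hφ0 _ hK', mul_zero]
    have hFTC : ∫ t in (a / 2)..(b + 1), h' t = 0 := by
      rw [integral_eq_of_hasDerivAt_off_countable_of_le F h' hab2 hScount hcontF
        hderivF hint, hFa, hFb, sub_zero]
    have hIccsub : Icc a b ⊆ Ioc (a / 2) (b + 1) := fun s hs =>
      ⟨lt_of_lt_of_le (by linarith) hs.1, by linarith [hs.2]⟩
    calc ∫ t in Ioi (0:ℝ), (η (G (x / t)) * D1 (t, x) - P t x * φ (t, x))
        = ∫ t in Ioi (0:ℝ), (Ioc (a / 2) (b + 1)).indicator h' t := by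
          apply setIntegral_congr_fun measurableSet_Ioi
          intro t _
          by_cases hti : t ∈ Ioc (a / 2) (b + 1)
          · rw [Set.indicator_of_mem hti]
          · rw [Set.indicator_of_notMem hti]
            have hpK : (t, x) ∉ K := fun h =>
              hti (hIccsub ⟨(hKsub _ h).1, (hKsub _ h).2.1⟩)
            exact hvan t hpK
      _ = ∫ t in Ioi (0:ℝ) ∩ Ioc (a / 2) (b + 1), h' t :=
          setIntegral_indicator measurableSet_Ioc
      _ = ∫ t in Ioc (a / 2) (b + 1), h' t := by
          rw [show Ioi (0:ℝ) ∩ Ioc (a / 2) (b + 1) = Ioc (a / 2) (b + 1) from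
            inter_eq_self_of_subset_right (fun s hs => lt_trans ha2 hs.1)]
      _ = ∫ t in (a / 2)..(b + 1), h' t := (intervalIntegral.integral_of_le hab2).symm
      _ = 0 := hFTC
  -- step (X) : integration by parts in x for fixed t
  have hX : ∀ t ∈ Ioi (0:ℝ), ∫ x : ℝ,
      (q (G (x / t)) * D2 (t, x) + P t x * φ (t, x)) = 0 := by
    intro t ht
    have ht0 : (0:ℝ) < t := ht
    have hRR : -(R + 1) ≤ R + 1 := by linarith
    set F : ℝ → ℝ := fun x => q (G (x / t)) * φ (t, x) with hFdef
    set h' : ℝ → ℝ := fun x => q (G (x / t)) * D2 (t, x) + P t x * φ (t, x) with hh'def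
    have hvan : ∀ x : ℝ, (t, x) ∉ K → h' x = 0 := by
      intro x hpK
      rw [hh'def]; dsimp only
      rw [hD20 _ hpK, hφ0 _ hpK]
      ring
    set S : Set ℝ := {A * t, B * t, k' * t} with hSdef
    have hScount : S.Countable :=
      (((Set.finite_singleton _).insert _).insert _).countable
    have hderivF : ∀ x ∈ Ioo (-(R + 1)) (R + 1) \ S, HasDerivAt F (h' x) x := by
      intro x hx
      have hφx : HasDerivAt (fun w => φ (t, w)) (D2 (t, x)) x := by
        have h1 : HasDerivAt (fun w : ℝ => (t, w)) ((0:ℝ), (1:ℝ)) x :=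
          (hasDerivAt_const x t).prodMk (hasDerivAt_id x)
        exact (hφd (t, x)).hasFDerivAt.comp_hasDerivAt x h1
      rcases lt_trichotomy x (A * t) with h1 | h1 | h1
      · have hev : ∀ᶠ w in 𝓝 x, w < A * t := eventually_lt_nhds h1
        have hFev : (fun w => q (G A) * φ (t, w)) =ᶠ[𝓝 x] F := by
          filter_upwards [hev] with w hw
          rw [hFdef]; dsimp only
          rw [hGl _ ((div_le_iff₀ ht0).2 hw.le)]
        have hder : HasDerivAt (fun w => q (G A) * φ (t, w)) (q (G A) * D2 (t, x)) x :=
          hφx.const_mul _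
        have hd2 := hder.congr_of_eventuallyEq hFev.symm
        have hP0 : P t x = 0 := by
          rw [hPdef]; dsimp only
          rw [if_neg]
          rintro ⟨hcd, -⟩
          linarith
        have hh : h' x = q (G A) * D2 (t, x) := by
          rw [hh'def]; dsimp only
          rw [hGl _ ((div_le_iff₀ ht0).2 h1.le), hP0]; ring
        rw [hh]; exact hd2
      · exact absurd (by rw [hSdef, h1]; exact mem_insert _ _) hx.2
      · rcases lt_trichotomy x (B * t) with h2 | h2 | h2
        · -- fan region
          have hyI : x / t ∈ Ioo A B := ⟨(lt_div_iff₀ ht0).2 h1, (div_lt_iff₀ ht0).2 h2⟩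
          have hyk : x / t ≠ k' := by
            intro h
            have : x = k' * t := by
              rw [div_eq_iff (ne_of_gt ht0)] at h; exact h
            exact hx.2 (by rw [hSdef, this]; exact
              mem_insert_of_mem _ (mem_insert_of_mem _ rfl))
          have hxs : HasDerivAt (fun w : ℝ => w / t) (1 / t) x := by
            simpa using (hasDerivAt_id x).div_const t
          have hG' : HasDerivAt (fun w : ℝ => G (w / t))
              ((f'' (G (x / t)))⁻¹ * (1 / t)) x := (hGd _ hyI).comp x hxs
          have hq' : HasDerivAt (fun w : ℝ => q (G (w / t)))
              (ηd (G (x / t)) * (x / t) * ((f'' (G (x / t)))⁻¹ * (1 / t))) x :=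
            (hqd _ hyI hyk).comp x hG'
          have hder := hq'.mul hφx
          have hh : h' x = ηd (G (x / t)) * (x / t) * ((f'' (G (x / t)))⁻¹ * (1 / t)) * φ (t, x)
              + q (G (x / t)) * D2 (t, x) := by
            rw [hh'def]; dsimp only
            rw [hPdef]; dsimp only
            rw [if_pos ⟨h1, h2⟩]
            have htne : t ≠ 0 := ne_of_gt ht0
            field_simp
            ring
          rw [hFdef, hh]
          exact hder
        · exact absurd (by rw [hSdef, h2]; exact mem_insert_of_mem _ (mem_insert _ _)) hx.2
        · have hev : ∀ᶠ w in 𝓝 x, B * t < w := eventually_gt_nhds h2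
          have hFev : (fun w => q (G B) * φ (t, w)) =ᶠ[𝓝 x] F := by
            filter_upwards [hev] with w hw
            rw [hFdef]; dsimp only
            rw [hGr _ ((le_div_iff₀ ht0).2 hw.le)]
          have hder : HasDerivAt (fun w => q (G B) * φ (t, w)) (q (G B) * D2 (t, x)) x :=
            hφx.const_mul _
          have hd2 := hder.congr_of_eventuallyEq hFev.symm
          have hP0 : P t x = 0 := by
            rw [hPdef]; dsimp only
            rw [if_neg]
            rintro ⟨-, hcd⟩
            linarith
          have hh : h' x = q (G B) * D2 (t, x) := by
            rw [hh'def]; dsimp only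
            rw [hGr _ ((le_div_iff₀ ht0).2 h2.le), hP0]; ring
          rw [hh]; exact hd2
      -- impossible: covered all
    have hcontF : ContinuousOn F (Icc (-(R + 1)) (R + 1)) := by
      rw [hFdef]
      apply ContinuousOn.mul
      · exact (hqGc.comp (continuous_id.div_const t)).continuousOn
      · exact (hφcont.comp (continuous_const.prodMk continuous_id)).continuousOn
    have hh'm : Measurable h' := by
      rw [hh'def]
      apply Measurable.add
      · exact ((hqGc.comp (continuous_id.div_const t)).measurable).mul
          (hD2c.measurable.comp (measurable_const.prodMk measurable_id))
      · exact ((hPm.comp (measurable_const.prodMk measurable_id)).mul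
          (hφcont.measurable.comp (measurable_const.prodMk measurable_id)))
    have hbound : ∀ x : ℝ, |h' x| ≤ Mq * C2 + c⁻¹ * (R / a ^ 2) * Cφ := by
      intro x
      by_cases hpK : (t, x) ∈ K
      · rw [hh'def]; dsimp only
        calc |q (G (x / t)) * D2 (t, x) + P t x * φ (t, x)|
            ≤ |q (G (x / t)) * D2 (t, x)| + |P t x * φ (t, x)| := abs_add_le _ _
          _ ≤ Mq * C2 + c⁻¹ * (R / a ^ 2) * Cφ := by
              rw [abs_mul, abs_mul]
              exact add_le_add
                (mul_le_mul (hMq _) (hC2 _) (abs_nonneg _) hMq0)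
                (mul_le_mul (hPbound _ _ hpK) (hCφ _) (abs_nonneg _) hCP0)
      · rw [hvan x hpK, abs_zero]; positivity
    have hint : IntervalIntegrable h' volume (-(R + 1)) (R + 1) := by
      rw [intervalIntegrable_iff_integrableOn_Icc_of_le hRR]
      apply Integrable.mono' (g := fun _ => Mq * C2 + c⁻¹ * (R / a ^ 2) * Cφ)
        (integrableOn_const measure_Icc_lt_top.ne)
        hh'm.aestronglyMeasurable.restrict
      exact ae_of_all _ fun x => by rw [Real.norm_eq_abs]; exact hbound x
    have hFa : F (-(R + 1)) = 0 := by
      have hK' : (t, -(R + 1)) ∉ K := fun h => by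
        have := (hKsub _ h).2.2
        simp only at this
        rw [abs_neg, abs_of_pos (by linarith : (0:ℝ) < R + 1)] at this
        linarith
      rw [hFdef]; dsimp only; rw [hφ0 _ hK', mul_zero]
    have hFb : F (R + 1) = 0 := by
      have hK' : (t, R + 1) ∉ K := fun h => by
        have := (hKsub _ h).2.2
        simp only at this
        rw [abs_of_pos (by linarith : (0:ℝ) < R + 1)] at this
        linarith
      rw [hFdef]; dsimp only; rw [hφ0 _ hK', mul_zero]
    have hFTC : ∫ x in (-(R + 1))..(R + 1), h' x = 0 := by
      rw [integral_eq_of_hasDerivAt_off_countable_of_le F h' hRR hScount hcontF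
        hderivF hint, hFa, hFb, sub_zero]
    calc ∫ x : ℝ, (q (G (x / t)) * D2 (t, x) + P t x * φ (t, x))
        = ∫ x : ℝ, (Ioc (-(R + 1)) (R + 1)).indicator h' x := by
          apply integral_congr_ae (ae_of_all _ ?_)
          intro x
          by_cases hxi : x ∈ Ioc (-(R + 1)) (R + 1)
          · rw [Set.indicator_of_mem hxi]
          · rw [Set.indicator_of_notMem hxi]
            have hpK : (t, x) ∉ K := fun h => by
              have := (hKsub _ h).2.2
              exact hxi ⟨by simp only at this ⊢; cases abs_le.1 this; linarith,
                by have := (abs_le.1 ((hKsub _ h).2.2)).2; linarith⟩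
            exact hvan x hpK
      _ = ∫ x in Ioc (-(R + 1)) (R + 1), h' x := integral_indicator measurableSet_Ioc
      _ = ∫ x in (-(R + 1))..(R + 1), h' x := (intervalIntegral.integral_of_le hRR).symm
      _ = 0 := hFTC
  -- integrability infrastructure
  have hKint : ∀ C : ℝ, Integrable (K.indicator fun _ => C)
      ((volume.restrict (Ioi (0:ℝ))).prod (volume : Measure ℝ)) := by
    intro C
    have h1 : Integrable (K.indicator fun _ => C) (volume : Measure (ℝ × ℝ)) := by
      rw [integrable_indicator_iff hKm]
      exact integrableOn_const hKc.measure_lt_top.ne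
    have h2 : (volume.restrict (Ioi (0:ℝ))).prod (volume : Measure ℝ)
        = (volume : Measure (ℝ × ℝ)).restrict ((Ioi 0) ×ˢ univ) := by
      rw [Measure.volume_eq_prod, ← Measure.prod_restrict, Measure.restrict_univ]
    rw [h2]
    exact h1.restrict
  have hmono0 : ∀ (e : ℝ × ℝ → ℝ) (C : ℝ), Measurable e → (∀ p ∈ K, |e p| ≤ C) →
      (∀ p, p ∉ K → e p = 0) →
      Integrable e ((volume.restrict (Ioi (0:ℝ))).prod (volume : Measure ℝ)) := by
    intro e C hm hb h0
    apply Integrable.mono' (hKint C) hm.aestronglyMeasurable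
    refine ae_of_all _ fun p => ?_
    rw [Real.norm_eq_abs]
    by_cases hp : p ∈ K
    · rw [Set.indicator_of_mem hp]; exact hb p hp
    · rw [Set.indicator_of_notMem hp, h0 p hp, abs_zero]
  have hmono1 : ∀ (e : ℝ × ℝ → ℝ) (C : ℝ) (t : ℝ), 0 ≤ C → Measurable e →
      (∀ p ∈ K, |e p| ≤ C) → (∀ p, p ∉ K → e p = 0) →
      Integrable (fun x => e (t, x)) (volume : Measure ℝ) := by
    intro e C t hC hm hb h0
    apply Integrable.mono' (g := (Icc (-R) R).indicator fun _ => C)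
    · rw [integrable_indicator_iff measurableSet_Icc]
      exact integrableOn_const measure_Icc_lt_top.ne
    · exact (hm.comp (measurable_const.prodMk measurable_id)).aestronglyMeasurable
    · refine ae_of_all _ fun x => ?_
      rw [Real.norm_eq_abs]
      by_cases hp : (t, x) ∈ K
      · rw [Set.indicator_of_mem (mem_Icc.2 (abs_le.1 (hKsub _ hp).2.2))]
        exact hb _ hp
      · rw [h0 _ hp, abs_zero]
        exact Set.indicator_apply_nonneg fun _ => hC
  have hmono2 : ∀ (e : ℝ × ℝ → ℝ) (C : ℝ) (x : ℝ), 0 ≤ C → Measurable e →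
      (∀ p ∈ K, |e p| ≤ C) → (∀ p, p ∉ K → e p = 0) →
      Integrable (fun t => e (t, x)) (volume.restrict (Ioi (0:ℝ))) := by
    intro e C x hC hm hb h0
    apply Integrable.mono' (g := (Icc a b).indicator fun _ => C)
    · refine Integrable.restrict ?_
      rw [integrable_indicator_iff measurableSet_Icc]
      exact integrableOn_const measure_Icc_lt_top.ne
    · exact ((hm.comp (measurable_id.prodMk measurable_const))).aestronglyMeasurable.restrict
    · refine ae_of_all _ fun t => ?_
      rw [Real.norm_eq_abs]
      by_cases hp : (t, x) ∈ K
      · rw [Set.indicator_of_mem (mem_Icc.2 ⟨(hKsub _ hp).1, (hKsub _ hp).2.1⟩)]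
        exact hb _ hp
      · rw [h0 _ hp, abs_zero]
        exact Set.indicator_apply_nonneg fun _ => hC
  -- the three integrands
  have hm1 : Measurable fun p : ℝ × ℝ => η (G (p.2 / p.1)) * D1 p :=
    (hηGc.measurable.comp hdivm).mul hD1c.measurable
  have hm2 : Measurable fun p : ℝ × ℝ => q (G (p.2 / p.1)) * D2 p :=
    (hqGc.measurable.comp hdivm).mul hD2c.measurable
  have hm3 : Measurable fun p : ℝ × ℝ => P p.1 p.2 * φ p :=
    hPm.mul hφcont.measurable
  have hb1 : ∀ p ∈ K, |η (G (p.2 / p.1)) * D1 p| ≤ Mη * C1 := fun p _ => by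
    rw [abs_mul]; exact mul_le_mul (hMη _) (hC1 _) (abs_nonneg _) hMη0
  have hb2 : ∀ p ∈ K, |q (G (p.2 / p.1)) * D2 p| ≤ Mq * C2 := fun p _ => by
    rw [abs_mul]; exact mul_le_mul (hMq _) (hC2 _) (abs_nonneg _) hMq0
  have hb3 : ∀ p ∈ K, |P p.1 p.2 * φ p| ≤ c⁻¹ * (R / a ^ 2) * Cφ := fun p hp => by
    rw [abs_mul]; exact mul_le_mul (hPbound p.1 p.2 hp) (hCφ _) (abs_nonneg _) hCP0
  have h01 : ∀ p : ℝ × ℝ, p ∉ K → η (G (p.2 / p.1)) * D1 p = 0 := fun p hp => by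
    rw [hD10 p hp, mul_zero]
  have h02 : ∀ p : ℝ × ℝ, p ∉ K → q (G (p.2 / p.1)) * D2 p = 0 := fun p hp => by
    rw [hD20 p hp, mul_zero]
  have h03 : ∀ p : ℝ × ℝ, p ∉ K → P p.1 p.2 * φ p = 0 := fun p hp => by
    rw [hφ0 p hp, mul_zero]
  have hi1 : Integrable (Function.uncurry fun t x => η (G (x / t)) * D1 (t, x))
      ((volume.restrict (Ioi (0:ℝ))).prod (volume : Measure ℝ)) :=
    hmono0 _ (Mη * C1) hm1 hb1 h01
  have hi3 : Integrable (Function.uncurry fun t x => P t x * φ (t, x))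
      ((volume.restrict (Ioi (0:ℝ))).prod (volume : Measure ℝ)) :=
    hmono0 _ (c⁻¹ * (R / a ^ 2) * Cφ) hm3 hb3 h03
  have hCb3 : (0:ℝ) ≤ c⁻¹ * (R / a ^ 2) * Cφ := by positivity
  -- assembly
  calc ∫ t in Ioi (0:ℝ), ∫ x : ℝ,
        (η (G (x / t)) * fderiv ℝ φ (t, x) (1, 0) + q (G (x / t)) * fderiv ℝ φ (t, x) (0, 1))
      = ∫ t in Ioi (0:ℝ), ((∫ x : ℝ, η (G (x / t)) * D1 (t, x))
          - ∫ x : ℝ, P t x * φ (t, x)) := by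
        apply setIntegral_congr_fun measurableSet_Ioi
        intro t ht
        have i1 : Integrable (fun x => η (G (x / t)) * D1 (t, x)) (volume : Measure ℝ) :=
          hmono1 _ (Mη * C1) t (by positivity) hm1 hb1 h01
        have i2 : Integrable (fun x => q (G (x / t)) * D2 (t, x)) (volume : Measure ℝ) :=
          hmono1 _ (Mq * C2) t (by positivity) hm2 hb2 h02
        have i3 : Integrable (fun x => P t x * φ (t, x)) (volume : Measure ℝ) :=
          hmono1 _ (c⁻¹ * (R / a ^ 2) * Cφ) t hCb3 hm3 hb3 h03
        have hsum : (∫ x : ℝ, q (G (x / t)) * D2 (t, x)) + ∫ x : ℝ, P t x * φ (t, x) = 0 := by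
          rw [← integral_add i2 i3]
          exact hX t ht
        show (∫ x : ℝ, (η (G (x / t)) * D1 (t, x) + q (G (x / t)) * D2 (t, x))) = _
        rw [integral_add i1 i2]
        have : (∫ x : ℝ, q (G (x / t)) * D2 (t, x)) = - ∫ x : ℝ, P t x * φ (t, x) := by
          linarith
        rw [this]
        ring
    _ = (∫ t in Ioi (0:ℝ), ∫ x : ℝ, η (G (x / t)) * D1 (t, x))
          - ∫ t in Ioi (0:ℝ), ∫ x : ℝ, P t x * φ (t, x) :=
        integral_sub hi1.integral_prod_left hi3.integral_prod_left
    _ = 0 := by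
        have hswap1 : (∫ t in Ioi (0:ℝ), ∫ x : ℝ, η (G (x / t)) * D1 (t, x))
            = ∫ x : ℝ, ∫ t in Ioi (0:ℝ), η (G (x / t)) * D1 (t, x) :=
          integral_integral_swap hi1
        have hswap3 : (∫ t in Ioi (0:ℝ), ∫ x : ℝ, P t x * φ (t, x))
            = ∫ x : ℝ, ∫ t in Ioi (0:ℝ), P t x * φ (t, x) :=
          integral_integral_swap hi3
        rw [hswap1, hswap3]
        rw [sub_eq_zero]
        apply integral_congr_ae (ae_of_all _ ?_)
        intro x
        have j1 : Integrable (fun t => η (G (x / t)) * D1 (t, x)) (volume.restrict (Ioi (0:ℝ))) :=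
          hmono2 _ (Mη * C1) x (by positivity) hm1 hb1 h01
        have j3 : Integrable (fun t => P t x * φ (t, x)) (volume.restrict (Ioi (0:ℝ))) :=
          hmono2 _ (c⁻¹ * (R / a ^ 2) * Cφ) x hCb3 hm3 hb3 h03
        have hdiff : (∫ t in Ioi (0:ℝ), η (G (x / t)) * D1 (t, x))
            - ∫ t in Ioi (0:ℝ), P t x * φ (t, x) = 0 := by
          rw [← integral_sub j1 j3]
          exact hT x
        linarith

set_option maxHeartbeats 1000000 in
/-- The centered rarefaction wave joining a left state `ρl` to a right state
`ρr < ρl` for a uniformly concave flux is a weak entropic solution of the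
scalar conservation law. -/
theorem stmt7 (f f' f'' : ℝ → ℝ) (c : ℝ) (hc : 0 < c)
    (hder1 : ∀ x ∈ Icc (0 : ℝ) 1, HasDerivWithinAt f (f' x) (Icc 0 1) x)
    (hder2 : ∀ x ∈ Icc (0 : ℝ) 1, HasDerivWithinAt f' (f'' x) (Icc 0 1) x)
    (hcont : ContinuousOn f'' (Icc 0 1))
    (hconc : ∀ x ∈ Icc (0 : ℝ) 1, f'' x ≤ -c)
    (g : ℝ → ℝ)
    (hg : ∀ y ∈ Icc (f' 1) (f' 0), g y ∈ Icc (0 : ℝ) 1 ∧ f' (g y) = y)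
    (hg' : ∀ x ∈ Icc (0 : ℝ) 1, g (f' x) = x)
    (hgcont : ContinuousOn g (Icc (f' 1) (f' 0)))
    (ρl ρr : ℝ) (hl : ρl ∈ Icc (0 : ℝ) 1) (hr : ρr ∈ Icc (0 : ℝ) 1)
    (hlr : ρr < ρl)
    (u : ℝ → ℝ → ℝ)
    (hu : ∀ t x, u t x = if x ≤ f' ρl * t then ρl
        else if x < f' ρr * t then g (x / t) else ρr) :
    (∀ φ : ℝ × ℝ → ℝ, ContDiff ℝ (⊤ : ℕ∞) φ → HasCompactSupport φ →
        tsupport φ ⊆ Ioi (0 : ℝ) ×ˢ (univ : Set ℝ) →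
      ∫ t in Ioi (0 : ℝ), ∫ x : ℝ,
        (u t x * fderiv ℝ φ (t, x) (1, 0) +
          f (u t x) * fderiv ℝ φ (t, x) (0, 1)) = 0) ∧
    (∀ k ∈ Icc (0 : ℝ) 1, ∀ φ : ℝ × ℝ → ℝ, ContDiff ℝ (⊤ : ℕ∞) φ →
        HasCompactSupport φ → tsupport φ ⊆ Ioi (0 : ℝ) ×ˢ (univ : Set ℝ) →
        (∀ p, 0 ≤ φ p) →
      0 ≤ ∫ t in Ioi (0 : ℝ), ∫ x : ℝ,
        (|u t x - k| * fderiv ℝ φ (t, x) (1, 0) +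
          Real.sign (u t x - k) * (f (u t x) - f k) *
            fderiv ℝ φ (t, x) (0, 1))) := by
  have h01 : (0:ℝ) ∈ Icc (0:ℝ) 1 := by norm_num
  have h11 : (1:ℝ) ∈ Icc (0:ℝ) 1 := by norm_num
  have hfc : ContinuousOn f (Icc 0 1) := fun v hv => (hder1 v hv).continuousWithinAt
  have hf'c : ContinuousOn f' (Icc 0 1) := fun v hv => (hder2 v hv).continuousWithinAt
  have hf'anti : StrictAntiOn f' (Icc 0 1) := by
    apply strictAntiOn_of_deriv_neg (convex_Icc 0 1) hf'c
    intro v hv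
    rw [interior_Icc] at hv
    have hd : HasDerivAt f' (f'' v) v :=
      (hder2 v (Ioo_subset_Icc_self hv)).hasDerivAt (Icc_mem_nhds hv.1 hv.2)
    rw [hd.deriv]
    exact lt_of_le_of_lt (hconc v (Ioo_subset_Icc_self hv)) (by linarith)
  have hf'mono : ∀ v w, v ∈ Icc (0:ℝ) 1 → w ∈ Icc (0:ℝ) 1 → v ≤ w → f' w ≤ f' v := by
    intro v w hv hw hvw
    rcases eq_or_lt_of_le hvw with rfl | h
    · exact le_rfl
    · exact (hf'anti hv hw h).le
  set A := f' ρl with hAdef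
  set B := f' ρr with hBdef
  have hAB : A < B := hf'anti hr hl hlr
  have h1A : f' 1 ≤ A := hf'mono ρl 1 hl h11 hl.2
  have hB0 : B ≤ f' 0 := hf'mono 0 ρr h01 hr hr.1
  set G : ℝ → ℝ := fun y => g (min B (max A y)) with hGdef
  have hclampmem : ∀ y : ℝ, min B (max A y) ∈ Icc (f' 1) (f' 0) := by
    intro y
    constructor
    · have h : A ≤ min B (max A y) := le_min hAB.le (le_max_left _ _)
      linarith
    · exact le_trans (min_le_left _ _) hB0
  have hGc : Continuous G := by
    apply hgcont.comp_continuous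
    · exact continuous_const.min (continuous_const.max continuous_id)
    · exact hclampmem
  have hGrange : ∀ y, G y ∈ Icc (0:ℝ) 1 := fun y => (hg _ (hclampmem y)).1
  have hGA : G A = ρl := by
    rw [hGdef]; dsimp only
    rw [max_self, min_eq_right hAB.le, hAdef]
    exact hg' ρl hl
  have hGB : G B = ρr := by
    rw [hGdef]; dsimp only
    rw [max_eq_right hAB.le, min_self, hBdef]
    exact hg' ρr hr
  have hGl : ∀ y, y ≤ A → G y = G A := by
    intro y hy
    rw [hGdef]; dsimp only
    rw [max_eq_left hy, max_self]
  have hGr : ∀ y, B ≤ y → G y = G B := by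
    intro y hy
    rw [hGdef]; dsimp only
    rw [min_eq_left (le_max_of_le_right hy), max_eq_right hAB.le, min_self]
  have hGfan : ∀ y ∈ Ioo A B, G y = g y := by
    intro y hy
    rw [hGdef]; dsimp only
    rw [max_eq_right hy.1.le, min_eq_right hy.2.le]
  have hyIcc : ∀ y ∈ Ioo A B, y ∈ Icc (f' 1) (f' 0) := fun y hy =>
    ⟨le_trans h1A hy.1.le, le_trans hy.2.le hB0⟩
  have hf'G : ∀ y ∈ Ioo A B, f' (G y) = y := by
    intro y hy
    rw [hGfan y hy]
    exact (hg y (hyIcc y hy)).2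
  have hGmemI : ∀ y ∈ Ioo A B, G y ∈ Ioo (0:ℝ) 1 := by
    intro y hy
    have hrange := hGrange y
    constructor
    · rcases lt_or_ge ρr (G y) with h | h
      · linarith [hr.1]
      · exfalso
        have := hf'mono (G y) ρr hrange hr h
        rw [hf'G y hy] at this
        exact absurd this (not_le.2 hy.2)
    · rcases lt_or_ge (G y) ρl with h | h
      · linarith [hl.2]
      · exfalso
        have := hf'mono ρl (G y) hl hrange h
        rw [hf'G y hy] at this
        exact absurd this (not_le.2 hy.1)
  have hGd : ∀ y ∈ Ioo A B, HasDerivAt G ((f'' (G y))⁻¹) y := by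
    intro y hy
    have hyI : y ∈ Ioo (f' 1) (f' 0) :=
      ⟨lt_of_le_of_lt h1A hy.1, lt_of_lt_of_le hy.2 hB0⟩
    have hgy : G y = g y := hGfan y hy
    have hv : g y ∈ Ioo (0:ℝ) 1 := hgy ▸ hGmemI y hy
    have hd2 : HasDerivAt f' (f'' (g y)) (g y) :=
      (hder2 _ (Ioo_subset_Icc_self hv)).hasDerivAt (Icc_mem_nhds hv.1 hv.2)
    have hcg : ContinuousAt g y := hgcont.continuousAt (Icc_mem_nhds hyI.1 hyI.2)
    have hne : f'' (g y) ≠ 0 :=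
      ne_of_lt (lt_of_le_of_lt (hconc _ (Ioo_subset_Icc_self hv)) (by linarith))
    have hfg : ∀ᶠ z in 𝓝 y, f' (g z) = z := by
      filter_upwards [Ioo_mem_nhds hyI.1 hyI.2] with z hz
      exact (hg z (Ioo_subset_Icc_self hz)).2
    have hginv : HasDerivAt g ((f'' (g y))⁻¹) y :=
      HasDerivAt.of_local_left_inverse hcg hd2 hne hfg
    have hev : G =ᶠ[𝓝 y] g := by
      filter_upwards [Ioo_mem_nhds hy.1 hy.2] with z hz
      exact hGfan z hz
    rw [hgy]
    exact hginv.congr_of_eventuallyEq hev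
  have hf''Gc : Continuous fun y => f'' (G y) := hcont.comp_continuous hGc hGrange
  have hf''neg : ∀ y, f'' (G y) ≤ -c := fun y => hconc _ (hGrange y)
  have key : ∀ t, 0 < t → ∀ x, u t x = G (x / t) := by
    intro t ht x
    rw [hu]
    rcases le_or_gt x (A * t) with h1 | h1
    · rw [if_pos h1, hGl _ ((div_le_iff₀ ht).2 h1), hGA]
    · rw [if_neg (not_le.2 h1)]
      rcases lt_or_ge x (B * t) with h2 | h2
      · rw [if_pos h2]
        exact (hGfan _ ⟨(lt_div_iff₀ ht).2 h1, (div_lt_iff₀ ht).2 h2⟩).symm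
      · rw [if_neg (not_lt.2 h2), hGr _ ((le_div_iff₀ ht).2 h2), hGB]
  have hsb : ∀ z : ℝ, |Real.sign z| ≤ 1 := by
    intro z
    rcases lt_trichotomy z 0 with h | h | h
    · rw [Real.sign_of_neg h]; norm_num
    · rw [h, Real.sign_zero]; norm_num
    · rw [Real.sign_of_pos h]; norm_num
  have hsm : Measurable Real.sign := by
    have hde : Real.sign = fun r : ℝ => if r < 0 then (-1:ℝ) else if 0 < r then 1 else 0 :=
      funext fun r => rfl
    rw [hde]
    exact Measurable.ite (measurableSet_lt measurable_id measurable_const) measurable_const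
      (Measurable.ite (measurableSet_lt measurable_const measurable_id) measurable_const
        measurable_const)
  constructor
  · -- weak solution
    intro φ hφ hφc hφs
    have hqd : ∀ y ∈ Ioo A B, y ≠ A - 1 →
        HasDerivAt f ((fun _ : ℝ => (1:ℝ)) (G y) * y) (G y) := by
      intro y hy _
      have hv := hGmemI y hy
      have hfd : HasDerivAt f (f' (G y)) (G y) :=
        (hder1 _ (Ioo_subset_Icc_self hv)).hasDerivAt (Icc_mem_nhds hv.1 hv.2)
      have : (fun _ : ℝ => (1:ℝ)) (G y) * y = f' (G y) := by
        rw [hf'G y hy]; ring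
      rw [this]
      exact hfd
    have hcore := rarefaction_core f'' c hc A B hAB G hGc hGrange hGl hGr hGd hf''Gc hf''neg
      (fun v => v) f (fun _ => 1) (A - 1)
      continuousOn_id hfc measurable_const (fun v _ => by norm_num)
      (fun y _ _ => hasDerivAt_id _) hqd φ hφ hφc hφs
    calc ∫ t in Ioi (0:ℝ), ∫ x : ℝ,
          (u t x * fderiv ℝ φ (t, x) (1, 0) + f (u t x) * fderiv ℝ φ (t, x) (0, 1))
        = ∫ t in Ioi (0:ℝ), ∫ x : ℝ,
          (G (x / t) * fderiv ℝ φ (t, x) (1, 0) + f (G (x / t)) * fderiv ℝ φ (t, x) (0, 1)) := by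
          apply setIntegral_congr_fun measurableSet_Ioi
          intro t ht
          apply integral_congr_ae (ae_of_all _ ?_)
          intro x
          rw [key t ht x]
      _ = 0 := hcore
  · -- entropy inequalities
    intro k hk φ hφ hφc hφs _
    have hηc : ContinuousOn (fun v : ℝ => |v - k|) (Icc 0 1) :=
      (continuous_abs.comp (continuous_id.sub continuous_const)).continuousOn
    have hηdm : Measurable (fun v : ℝ => Real.sign (v - k)) :=
      hsm.comp (measurable_id.sub measurable_const)
    have hηdb : ∀ v ∈ Icc (0:ℝ) 1, |Real.sign (v - k)| ≤ 1 := fun v _ => hsb _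
    have hqc : ContinuousOn (fun v : ℝ => Real.sign (v - k) * (f v - f k)) (Icc 0 1) := by
      intro v hv
      rcases eq_or_ne v k with rfl | hvk
      · have hfw : Tendsto (fun w => f w - f v) (𝓝[Icc (0:ℝ) 1] v) (𝓝 (f v - f v)) :=
          (hfc v hv).sub continuousWithinAt_const
        rw [sub_self] at hfw
        have htend : Tendsto (fun w => |f w - f v|) (𝓝[Icc (0:ℝ) 1] v) (𝓝 0) := by
          simpa using hfw.abs
        have hsq : Tendsto (fun w : ℝ => Real.sign (w - v) * (f w - f v))
            (𝓝[Icc (0:ℝ) 1] v) (𝓝 0) := by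
          apply squeeze_zero_norm _ htend
          intro w
          rw [Real.norm_eq_abs, abs_mul]
          calc |Real.sign (w - v)| * |f w - f v| ≤ 1 * |f w - f v| :=
                mul_le_mul_of_nonneg_right (hsb _) (abs_nonneg _)
            _ = |f w - f v| := one_mul _
        have h0 : Real.sign (v - v) * (f v - f v) = 0 := by
          rw [sub_self, Real.sign_zero, zero_mul]
        show Tendsto (fun w : ℝ => Real.sign (w - v) * (f w - f v)) (𝓝[Icc (0:ℝ) 1] v)
          (𝓝 (Real.sign (v - v) * (f v - f v)))
        rw [h0]
        exact hsq
      · have hev0 : ∀ᶠ w in 𝓝 v, Real.sign (w - k) = Real.sign (v - k) := by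
          rcases (sub_ne_zero.2 hvk).lt_or_gt with h | h
          · filter_upwards [((continuous_sub_right k).tendsto v).eventually_lt_const h]
              with w hw
            rw [Real.sign_of_neg hw, Real.sign_of_neg h]
          · filter_upwards [((continuous_sub_right k).tendsto v).eventually_const_lt h]
              with w hw
            rw [Real.sign_of_pos hw, Real.sign_of_pos h]
        have hbase : ContinuousWithinAt (fun w => Real.sign (v - k) * (f w - f k)) (Icc 0 1) v :=
          ((hfc v hv).sub continuousWithinAt_const).const_mul _
        apply hbase.congr_of_eventuallyEq _ rfl
        filter_upwards [nhdsWithin_le_nhds hev0] with w hw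
        rw [hw]
    have hGnek : ∀ y ∈ Ioo A B, y ≠ f' k → G y - k ≠ 0 := by
      intro y hy hyk
      refine sub_ne_zero.2 fun h => hyk ?_
      rw [← hf'G y hy, h]
    have hηd : ∀ y ∈ Ioo A B, y ≠ f' k →
        HasDerivAt (fun v : ℝ => |v - k|) (Real.sign (G y - k)) (G y) := by
      intro y hy hyk
      rcases (hGnek y hy hyk).lt_or_gt with hlt | hgt
      · have hev : ∀ᶠ w in 𝓝 (G y), w - k < 0 :=
          ((continuous_sub_right k).tendsto (G y)).eventually_lt_const hlt
        have hder : HasDerivAt (fun w : ℝ => -(w - k)) (-1) (G y) :=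
          ((hasDerivAt_id _).sub_const k).neg
        have h2 : HasDerivAt (fun v : ℝ => |v - k|) (-1) (G y) := by
          apply hder.congr_of_eventuallyEq
          filter_upwards [hev] with w hw
          rw [abs_of_neg hw]
        rw [Real.sign_of_neg hlt]
        exact h2
      · have hev : ∀ᶠ w in 𝓝 (G y), 0 < w - k :=
          ((continuous_sub_right k).tendsto (G y)).eventually_const_lt hgt
        have hder : HasDerivAt (fun w : ℝ => w - k) 1 (G y) := (hasDerivAt_id _).sub_const k
        have h2 : HasDerivAt (fun v : ℝ => |v - k|) 1 (G y) := by
          apply hder.congr_of_eventuallyEq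
          filter_upwards [hev] with w hw
          rw [abs_of_pos hw]
        rw [Real.sign_of_pos hgt]
        exact h2
    have hqd : ∀ y ∈ Ioo A B, y ≠ f' k →
        HasDerivAt (fun v : ℝ => Real.sign (v - k) * (f v - f k))
          (Real.sign (G y - k) * y) (G y) := by
      intro y hy hyk
      have hv := hGmemI y hy
      have hfd : HasDerivAt f (f' (G y)) (G y) :=
        (hder1 _ (Ioo_subset_Icc_self hv)).hasDerivAt (Icc_mem_nhds hv.1 hv.2)
      rcases (hGnek y hy hyk).lt_or_gt with hlt | hgt
      · have hev : ∀ᶠ w in 𝓝 (G y), w - k < 0 :=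
          ((continuous_sub_right k).tendsto (G y)).eventually_lt_const hlt
        have hder : HasDerivAt (fun w : ℝ => -(f w - f k)) (-(f' (G y))) (G y) :=
          (hfd.sub_const (f k)).neg
        have h2 : HasDerivAt (fun v : ℝ => Real.sign (v - k) * (f v - f k))
            (-(f' (G y))) (G y) := by
          apply hder.congr_of_eventuallyEq
          filter_upwards [hev] with w hw
          rw [Real.sign_of_neg hw, neg_one_mul]
        have : Real.sign (G y - k) * y = -(f' (G y)) := by
          rw [Real.sign_of_neg hlt, hf'G y hy]; ring
        rw [this]
        exact h2
      · have hev : ∀ᶠ w in 𝓝 (G y), 0 < w - k :=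
          ((continuous_sub_right k).tendsto (G y)).eventually_const_lt hgt
        have hder : HasDerivAt (fun w : ℝ => f w - f k) (f' (G y)) (G y) :=
          hfd.sub_const (f k)
        have h2 : HasDerivAt (fun v : ℝ => Real.sign (v - k) * (f v - f k))
            (f' (G y)) (G y) := by
          apply hder.congr_of_eventuallyEq
          filter_upwards [hev] with w hw
          rw [Real.sign_of_pos hw, one_mul]
        have : Real.sign (G y - k) * y = f' (G y) := by
          rw [Real.sign_of_pos hgt, hf'G y hy]; ring
        rw [this]
        exact h2
    have hcore := rarefaction_core f'' c hc A B hAB G hGc hGrange hGl hGr hGd hf''Gc hf''neg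
      (fun v => |v - k|) (fun v => Real.sign (v - k) * (f v - f k))
      (fun v => Real.sign (v - k)) (f' k)
      hηc hqc hηdm hηdb hηd hqd φ hφ hφc hφs
    have heq : ∫ t in Ioi (0:ℝ), ∫ x : ℝ,
        (|u t x - k| * fderiv ℝ φ (t, x) (1, 0) +
          Real.sign (u t x - k) * (f (u t x) - f k) * fderiv ℝ φ (t, x) (0, 1)) = 0 := by
      calc ∫ t in Ioi (0:ℝ), ∫ x : ℝ,
            (|u t x - k| * fderiv ℝ φ (t, x) (1, 0) +
              Real.sign (u t x - k) * (f (u t x) - f k) * fderiv ℝ φ (t, x) (0, 1))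
          = ∫ t in Ioi (0:ℝ), ∫ x : ℝ,
            (|G (x / t) - k| * fderiv ℝ φ (t, x) (1, 0) +
              Real.sign (G (x / t) - k) * (f (G (x / t)) - f k) * fderiv ℝ φ (t, x) (0, 1)) := by
            apply setIntegral_congr_fun measurableSet_Ioi
            intro t ht
            apply integral_congr_ae (ae_of_all _ ?_)
            intro x
            rw [key t ht x]
        _ = 0 := hcore
    rw [heq]
end

section
/- Let α_1, α_2 ∈ (0,1) with α_1 ≠ α_2 and c_1, c_2, c_3, c_4 ≥ 0. Let (γ_1,γ_2) be the maximizer of E over Ω(c_1,c_2,c_3,c_4), let 0 ≤ r < γ_1, and let (γ̂_1,γ̂_2) be the maximizer of E over Ω(r,c_2,c_3,c_4). Then: γ̂_1 = r; γ̂_2 ≥ γ_2; α_1 γ̂_1 + α_2 γ̂_2 ≤ α_1 γ_1 + α_2 γ_2; (1−α_1) γ̂_1 + (1−α_2) γ̂_2 ≤ (1−α_1) γ_1 + (1−α_2) γ_2; and |γ̂_1 − r| + |γ̂_2 − γ_2| + |(α_1γ̂_1 + α_2γ̂_2) − (α_1γ_1 + α_2γ_2)| + |((1−α_1)γ̂_1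 + (1−α_2)γ̂_2) − ((1−α_1)γ_1 + (1−α_2)γ_2)| = γ_1 − r. -/
/-! The maximizer of `E = γ₁ + γ₂` over `Ω` is characterised by a first-order condition: no
direction that increases `E` is admissible at it, i.e. keeps all active constraints satisfied.
Along `(1, -1)` the two fluxes change by `±(α₁ - α₂)`, which makes the maximizer unique, and
lowering the cap of the first road from `γ₁` to `r` therefore moves the maximizer to the
boundary `γ̂₁ = r` (otherwise it would be a second maximizer of the original problem). The
constraints still active at `γ` then force `γ̂₂ - γ₂` to be at most `α₁ (γ₁ - r) / α₂` and
`(1 - α₁) (γ₁ - r) / (1 - α₂)`, i.e. both fluxes decrease; their decrements add up to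
`(γ₁ - r) - (γ̂₂ - γ₂)`, which gives the conservation of total variation. -/

open Set

/-- Membership in the feasible set `Ω(c₁,c₂,c₃,c₄)` of incoming fluxes at a
junction with two incoming and two outgoing roads. -/
def memOmega (α₁ α₂ c₁ c₂ c₃ c₄ γ₁ γ₂ : ℝ) : Prop :=
  0 ≤ γ₁ ∧ γ₁ ≤ c₁ ∧ 0 ≤ γ₂ ∧ γ₂ ≤ c₂ ∧
    α₁ * γ₁ + α₂ * γ₂ ≤ c₃ ∧ (1 - α₁) * γ₁ + (1 - α₂) * γ₂ ≤ c₄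

def IsFluxMaximizer (α₁ α₂ c₁ c₂ c₃ c₄ γ₁ γ₂ : ℝ) : Prop :=
  memOmega α₁ α₂ c₁ c₂ c₃ c₄ γ₁ γ₂ ∧
    ∀ δ₁ δ₂, memOmega α₁ α₂ c₁ c₂ c₃ c₄ δ₁ δ₂ → δ₁ + δ₂ ≤ γ₁ + γ₂

open Filter Topology

theorem eventually_add_mul_le {a b c : ℝ} (hac : a ≤ c) (h : a < c ∨ b ≤ 0) :
    ∀ᶠ t in 𝓝[>] (0 : ℝ), a + t * b ≤ c := by
  rcases h with h | h
  · have hcont : Continuous fun t : ℝ => a + t * b := by fun_prop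
    have hlim := hcont.tendsto' 0 a (by simp)
    exact nhdsWithin_le_nhds ((hlim.eventually (eventually_lt_nhds h)).mono fun _ => le_of_lt)
  · exact eventually_nhdsWithin_of_forall fun t (ht : 0 < t) => by nlinarith

theorem eventually_le_add_mul {a b c : ℝ} (hca : c ≤ a) (h : c < a ∨ 0 ≤ b) :
    ∀ᶠ t in 𝓝[>] (0 : ℝ), c ≤ a + t * b :=
  (eventually_add_mul_le (a := -a) (b := -b) (c := -c) (neg_le_neg hca)
    (h.imp neg_lt_neg neg_nonpos.2)).mono fun _ ht => by linarith

variable {α₁ α₂ c₁ c₂ c₃ c₄ : ℝ}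

theorem memOmega.of_fst_le {c₁' x y : ℝ} (h : memOmega α₁ α₂ c₁ c₂ c₃ c₄ x y) (hx : x ≤ c₁') :
    memOmega α₁ α₂ c₁' c₂ c₃ c₄ x y :=
  ⟨h.1, hx, h.2.2⟩

theorem memOmega.anti_fst {x x' y : ℝ} (h : memOmega α₁ α₂ c₁ c₂ c₃ c₄ x y)
    (hα₁ : α₁ ∈ Icc (0 : ℝ) 1) (hx' : 0 ≤ x') (hx'x : x' ≤ x) :
    memOmega α₁ α₂ c₁ c₂ c₃ c₄ x' y := by
  obtain ⟨-, h₁, h₂, h₃, h₄, h₅⟩ := h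
  obtain ⟨hα₁0, hα₁1⟩ := hα₁
  exact ⟨hx', hx'x.trans h₁, h₂, h₃, by nlinarith, by nlinarith⟩

theorem memOmega.convex_comb {p₁ p₂ q₁ q₂ a b : ℝ} (hp : memOmega α₁ α₂ c₁ c₂ c₃ c₄ p₁ p₂)
    (hq : memOmega α₁ α₂ c₁ c₂ c₃ c₄ q₁ q₂) (ha : 0 ≤ a) (hb : 0 ≤ b) (hab : a + b = 1) :
    memOmega α₁ α₂ c₁ c₂ c₃ c₄ (a * p₁ + b * q₁) (a * p₂ + b * q₂) := by
  obtain ⟨hp₀, hp₁, hp₂, hp₃, hp₄, hp₅⟩ := hp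
  obtain ⟨hq₀, hq₁, hq₂, hq₃, hq₄, hq₅⟩ := hq
  have hcomb {x y c : ℝ} (hx : x ≤ c) (hy : y ≤ c) : a * x + b * y ≤ c := by
    simpa using convex_Iic c hx hy ha hb hab
  exact ⟨by positivity, hcomb hp₁ hq₁, by positivity, hcomb hp₃ hq₃,
    by linarith [hcomb hp₄ hq₄], by linarith [hcomb hp₅ hq₅]⟩

theorem memOmega_swap {γ₁ γ₂ : ℝ} :
    memOmega α₁ α₂ c₁ c₂ c₃ c₄ γ₁ γ₂ ↔ memOmega (1 - α₁) (1 - α₂) c₁ c₂ c₄ c₃ γ₁ γ₂ := by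
  simp only [memOmega, sub_sub_cancel]
  tauto

theorem IsFluxMaximizer.swap {γ₁ γ₂ : ℝ} (h : IsFluxMaximizer α₁ α₂ c₁ c₂ c₃ c₄ γ₁ γ₂) :
    IsFluxMaximizer (1 - α₁) (1 - α₂) c₁ c₂ c₄ c₃ γ₁ γ₂ :=
  ⟨memOmega_swap.1 h.1, fun δ₁ δ₂ hδ => h.2 δ₁ δ₂ (memOmega_swap.2 hδ)⟩

theorem IsFluxMaximizer.add_nonpos_of_admissible {γ₁ γ₂ u₁ u₂ : ℝ}
    (h : IsFluxMaximizer α₁ α₂ c₁ c₂ c₃ c₄ γ₁ γ₂)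
    (h₀ : 0 < γ₁ ∨ 0 ≤ u₁) (h₁ : γ₁ < c₁ ∨ u₁ ≤ 0)
    (h₂ : 0 < γ₂ ∨ 0 ≤ u₂) (h₃ : γ₂ < c₂ ∨ u₂ ≤ 0)
    (h₄ : α₁ * γ₁ + α₂ * γ₂ < c₃ ∨ α₁ * u₁ + α₂ * u₂ ≤ 0)
    (h₅ : (1 - α₁) * γ₁ + (1 - α₂) * γ₂ < c₄ ∨ (1 - α₁) * u₁ + (1 - α₂) * u₂ ≤ 0) :
    u₁ + u₂ ≤ 0 := by
  obtain ⟨⟨g₀, g₁, g₂, g₃, g₄, g₅⟩, hmax⟩ := h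
  have hfeas : ∀ᶠ t in 𝓝[>] 0,
      memOmega α₁ α₂ c₁ c₂ c₃ c₄ (γ₁ + t * u₁) (γ₂ + t * u₂) := by
    filter_upwards [eventually_le_add_mul g₀ h₀, eventually_add_mul_le g₁ h₁,
      eventually_le_add_mul g₂ h₂, eventually_add_mul_le g₃ h₃,
      eventually_add_mul_le g₄ h₄, eventually_add_mul_le g₅ h₅] with t t₀ t₁ t₂ t₃ t₄ t₅
    exact ⟨t₀, t₁, t₂, t₃, by linarith, by linarith⟩
  obtain ⟨t, ht, htpos⟩ := (hfeas.and self_mem_nhdsWithin).exists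
  have hE := hmax _ _ ht
  exact nonpos_of_mul_nonpos_right (by linarith) htpos

theorem flux_ne_of_fst_ne {a b p₁ p₂ q₁ q₂ : ℝ} (hab : a ≠ b) (hsum : p₁ + p₂ = q₁ + q₂)
    (hne : p₁ ≠ q₁) : a * p₁ + b * p₂ ≠ a * q₁ + b * q₂ := by
  intro h
  have : (a - b) * (p₁ - q₁) = 0 := by linear_combination h - b * hsum
  exact mul_ne_zero (sub_ne_zero.2 hab) (sub_ne_zero.2 hne) this

theorem IsFluxMaximizer.unique {p₁ p₂ q₁ q₂ : ℝ} (hne : α₁ ≠ α₂)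
    (hp : IsFluxMaximizer α₁ α₂ c₁ c₂ c₃ c₄ p₁ p₂) (hq : IsFluxMaximizer α₁ α₂ c₁ c₂ c₃ c₄ q₁ q₂) :
    p₁ = q₁ ∧ p₂ = q₂ := by
  have hsum : p₁ + p₂ = q₁ + q₂ := le_antisymm (hq.2 _ _ hp.1) (hp.2 _ _ hq.1)
  suffices h₁ : p₁ = q₁ from ⟨h₁, by linarith⟩
  by_contra h₁
  have hmid : IsFluxMaximizer α₁ α₂ c₁ c₂ c₃ c₄ (1 / 2 * p₁ + 1 / 2 * q₁) (1 / 2 * p₂ + 1 / 2 * q₂) :=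
    ⟨hp.1.convex_comb hq.1 (by norm_num) (by norm_num) (by norm_num),
      fun δ₁ δ₂ hδ => by linarith [hp.2 δ₁ δ₂ hδ]⟩
  have hmid_lt {x y c : ℝ} (hx : x ≤ c) (hy : y ≤ c) (hxy : x ≠ y) : 1 / 2 * x + 1 / 2 * y < c := by
    rcases hxy.lt_or_gt with h | h <;> linarith
  obtain ⟨⟨-, hp₁, -, -, hp₄, hp₅⟩, -⟩ := hp
  obtain ⟨⟨-, hq₁, -, -, hq₄, hq₅⟩, -⟩ := hq
  have h₄ := hmid_lt hp₄ hq₄ (flux_ne_of_fst_ne hne hsum h₁)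
  have h₅ := hmid_lt hp₅ hq₅ (flux_ne_of_fst_ne (fun h => hne (by linarith)) hsum h₁)
  have := hmid.add_nonpos_of_admissible (u₁ := 1) (u₂ := 0) (Or.inr zero_le_one)
    (Or.inl (hmid_lt hp₁ hq₁ h₁)) (Or.inr le_rfl) (Or.inr le_rfl)
    (Or.inl (by linarith)) (Or.inl (by linarith))
  linarith

theorem IsFluxMaximizer.add_le_of_fst_lt {c₁' p₁ p₂ q₁ q₂ : ℝ}
    (hp : IsFluxMaximizer α₁ α₂ c₁ c₂ c₃ c₄ p₁ p₂) (hslack : p₁ < c₁)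
    (hq : memOmega α₁ α₂ c₁' c₂ c₃ c₄ q₁ q₂) : q₁ + q₂ ≤ p₁ + p₂ := by
  obtain ⟨g₀, -, g₂, g₃, g₄, g₅⟩ := hp.1
  obtain ⟨h₀, -, h₂, h₃, h₄, h₅⟩ := hq
  have := hp.add_nonpos_of_admissible (u₁ := q₁ - p₁) (u₂ := q₂ - p₂)
    (g₀.lt_or_eq.imp_right fun _ => by linarith) (Or.inl hslack)
    (g₂.lt_or_eq.imp_right fun _ => by linarith) (g₃.lt_or_eq.imp_right fun _ => by linarith)
    (g₄.lt_or_eq.imp_right fun _ => by linarith) (g₅.lt_or_eq.imp_right fun _ => by linarith)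
  linarith

theorem IsFluxMaximizer.fst_eq_of_lt {r γ₁ γ₂ γh₁ γh₂ : ℝ} (hne : α₁ ≠ α₂)
    (hγ : IsFluxMaximizer α₁ α₂ c₁ c₂ c₃ c₄ γ₁ γ₂) (hγh : IsFluxMaximizer α₁ α₂ r c₂ c₃ c₄ γh₁ γh₂)
    (hr : r < γ₁) : γh₁ = r := by
  by_contra h
  have hlt : γh₁ < r := hγh.1.2.1.lt_of_ne h
  have hγh' : IsFluxMaximizer α₁ α₂ c₁ c₂ c₃ c₄ γh₁ γh₂ :=
    ⟨hγh.1.of_fst_le (by linarith [hγ.1.2.1]),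
      fun δ₁ δ₂ hδ => (hγ.2 δ₁ δ₂ hδ).trans (hγh.add_le_of_fst_lt hlt hγ.1)⟩
  linarith [(hγ.unique hne hγh').1]

theorem IsFluxMaximizer.flux₃_le {c₁' γ₁ γ₂ q₁ q₂ : ℝ} (hα₁ : α₁ ∈ Icc (0 : ℝ) 1)
    (hα₂ : α₂ ∈ Icc (0 : ℝ) 1) (hγ : IsFluxMaximizer α₁ α₂ c₁ c₂ c₃ c₄ γ₁ γ₂)
    (hq : memOmega α₁ α₂ c₁' c₂ c₃ c₄ q₁ q₂) (hlt : q₁ < γ₁) (hsum : q₁ + q₂ ≤ γ₁ + γ₂) :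
    α₁ * q₁ + α₂ * q₂ ≤ α₁ * γ₁ + α₂ * γ₂ := by
  obtain ⟨hα₁0, hα₁1⟩ := hα₁
  obtain ⟨hα₂0, hα₂1⟩ := hα₂
  obtain ⟨hq₀, -, -, hq₃, hq₄, -⟩ := hq
  by_contra! hgt
  have hγ₂ : γ₂ < q₂ := by nlinarith [mul_nonneg hα₁0 (sub_nonneg.2 hlt.le)]
  -- along `(-(1 - α₂), 1 - α₁)` the flux `(1 - α₁) γ₁ + (1 - α₂) γ₂` is constant and `E` grows by `α₂ - α₁`
  have hα : α₂ - α₁ ≤ 0 := by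
    have := hγ.add_nonpos_of_admissible (u₁ := -(1 - α₂)) (u₂ := 1 - α₁) (Or.inl (by linarith))
      (Or.inr (by linarith)) (Or.inr (by linarith)) (Or.inl (by linarith)) (Or.inl (by linarith))
      (Or.inr (le_of_eq (by ring)))
    linarith
  nlinarith [mul_le_mul_of_nonneg_left (show q₂ - γ₂ ≤ γ₁ - q₁ by linarith) hα₁0,
    mul_nonneg (neg_nonneg.2 hα) (sub_nonneg.2 hγ₂.le)]

theorem IsFluxMaximizer.flux₄_le {c₁' γ₁ γ₂ q₁ q₂ : ℝ} (hα₁ : α₁ ∈ Icc (0 : ℝ) 1)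
    (hα₂ : α₂ ∈ Icc (0 : ℝ) 1) (hγ : IsFluxMaximizer α₁ α₂ c₁ c₂ c₃ c₄ γ₁ γ₂)
    (hq : memOmega α₁ α₂ c₁' c₂ c₃ c₄ q₁ q₂) (hlt : q₁ < γ₁) (hsum : q₁ + q₂ ≤ γ₁ + γ₂) :
    (1 - α₁) * q₁ + (1 - α₂) * q₂ ≤ (1 - α₁) * γ₁ + (1 - α₂) * γ₂ :=
  hγ.swap.flux₃_le ⟨sub_nonneg.2 hα₁.2, sub_le_self _ hα₁.1⟩ ⟨sub_nonneg.2 hα₂.2, sub_le_self _ hα₂.1⟩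
    (memOmega_swap.1 hq) hlt hsum

theorem stmt10_general (α₁ α₂ : ℝ) (hα₁ : α₁ ∈ Ioo (0 : ℝ) 1) (hα₂ : α₂ ∈ Ioo (0 : ℝ) 1)
    (hne : α₁ ≠ α₂) (c₁ c₂ c₃ c₄ : ℝ)
    (γ₁ γ₂ : ℝ)
    (hmem : memOmega α₁ α₂ c₁ c₂ c₃ c₄ γ₁ γ₂)
    (hmax : ∀ δ₁ δ₂, memOmega α₁ α₂ c₁ c₂ c₃ c₄ δ₁ δ₂ → δ₁ + δ₂ ≤ γ₁ + γ₂)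
    (r : ℝ) (hr0 : 0 ≤ r) (hr : r < γ₁)
    (γh₁ γh₂ : ℝ)
    (hmem' : memOmega α₁ α₂ r c₂ c₃ c₄ γh₁ γh₂)
    (hmax' : ∀ δ₁ δ₂, memOmega α₁ α₂ r c₂ c₃ c₄ δ₁ δ₂ → δ₁ + δ₂ ≤ γh₁ + γh₂) :
    γh₁ = r ∧ γ₂ ≤ γh₂ ∧
    α₁ * γh₁ + α₂ * γh₂ ≤ α₁ * γ₁ + α₂ * γ₂ ∧
    (1 - α₁) * γh₁ + (1 - α₂) * γh₂ ≤ (1 - α₁) * γ₁ + (1 - α₂) * γ₂ ∧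
    |γh₁ - r| + |γh₂ - γ₂| +
      |(α₁ * γh₁ + α₂ * γh₂) - (α₁ * γ₁ + α₂ * γ₂)| +
      |((1 - α₁) * γh₁ + (1 - α₂) * γh₂) - ((1 - α₁) * γ₁ + (1 - α₂) * γ₂)| =
      γ₁ - r := by
  have hγ : IsFluxMaximizer α₁ α₂ c₁ c₂ c₃ c₄ γ₁ γ₂ := ⟨hmem, hmax⟩
  obtain rfl : γh₁ = r := IsFluxMaximizer.fst_eq_of_lt hne hγ ⟨hmem', hmax'⟩ hr
  have hα₁' := Ioo_subset_Icc_self hα₁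
  have hα₂' := Ioo_subset_Icc_self hα₂
  have h₂ : γ₂ ≤ γh₂ := by
    linarith [hmax' _ _ ((hmem.anti_fst hα₁' hr0 hr.le).of_fst_le le_rfl)]
  have hsum : γh₁ + γh₂ ≤ γ₁ + γ₂ := hmax _ _ (hmem'.of_fst_le (hr.le.trans hmem.2.1))
  have h₃ := hγ.flux₃_le hα₁' hα₂' hmem' hr hsum
  have h₄ := hγ.flux₄_le hα₁' hα₂' hmem' hr hsum
  refine ⟨rfl, h₂, h₃, h₄, ?_⟩
  rw [sub_self, abs_zero, abs_of_nonneg (sub_nonneg.2 h₂), abs_of_nonpos (sub_nonpos.2 h₃),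
    abs_of_nonpos (sub_nonpos.2 h₄)]
  ring

/-- Key estimate in Lemma 6.1 (first case): when a wave lowers the maximal
incoming flux of the first road from `γ₁` to `r`, the total variation of the
fluxes is conserved across the interaction. -/
theorem stmt10 (α₁ α₂ : ℝ) (hα₁ : α₁ ∈ Ioo (0 : ℝ) 1) (hα₂ : α₂ ∈ Ioo (0 : ℝ) 1)
    (hne : α₁ ≠ α₂) (c₁ c₂ c₃ c₄ : ℝ)
    (hc₁ : 0 ≤ c₁) (hc₂ : 0 ≤ c₂) (hc₃ : 0 ≤ c₃) (hc₄ : 0 ≤ c₄)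
    (γ₁ γ₂ : ℝ)
    (hmem : memOmega α₁ α₂ c₁ c₂ c₃ c₄ γ₁ γ₂)
    (hmax : ∀ δ₁ δ₂, memOmega α₁ α₂ c₁ c₂ c₃ c₄ δ₁ δ₂ → δ₁ + δ₂ ≤ γ₁ + γ₂)
    (r : ℝ) (hr0 : 0 ≤ r) (hr : r < γ₁)
    (γh₁ γh₂ : ℝ)
    (hmem' : memOmega α₁ α₂ r c₂ c₃ c₄ γh₁ γh₂)
    (hmax' : ∀ δ₁ δ₂, memOmega α₁ α₂ r c₂ c₃ c₄ δ₁ δ₂ → δ₁ + δ₂ ≤ γh₁ + γh₂) :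
    γh₁ = r ∧ γ₂ ≤ γh₂ ∧
    α₁ * γh₁ + α₂ * γh₂ ≤ α₁ * γ₁ + α₂ * γ₂ ∧
    (1 - α₁) * γh₁ + (1 - α₂) * γh₂ ≤ (1 - α₁) * γ₁ + (1 - α₂) * γ₂ ∧
    |γh₁ - r| + |γh₂ - γ₂| +
      |(α₁ * γh₁ + α₂ * γh₂) - (α₁ * γ₁ + α₂ * γ₂)| +
      |((1 - α₁) * γh₁ + (1 - α₂) * γh₂) - ((1 - α₁) * γ₁ + (1 - α₂) * γ₂)| =
      γ₁ - r :=
  stmt10_general α₁ α₂ hα₁ hα₂ hne c₁ c₂ c₃ c₄ γ₁ γ₂ hmem hmax r hr0 hr γh₁ γh₂ hmem' hmax'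
end

section
/- Let α_1, α_2 ∈ (0,1) with α_1 ≠ α_2 and c_1, c_2, c_3, c_4 ≥ 0. Let (γ_1,γ_2) be the maximizer of E over Ω(c_1,c_2,c_3,c_4) and assume γ_1 = c_1. Let r > c_1 and let (γ̂_1,γ̂_2) be the maximizer of E over Ω(r,c_2,c_3,c_4). Then: γ_1 ≤ γ̂_1 ≤ r; γ̂_2 ≤ γ_2; α_1 γ̂_1 + α_2 γ̂_2 ≥ α_1 γ_1 + α_2 γ_2; (1−α_1) γ̂_1 + (1−α_2) γ̂_2 ≥ (1−α_1) γ_1 + (1−α_2) γ_2; and |γ̂_1 − r| + |γ̂_2 − γ_2| + |(α_1γ̂_1 + α_2γ̂_2) − (α_1γ_1 + α_2γ_2)| + |((1−α_1)γ̂_1 + (1−α_2)γ̂_2) − ((1−α_1)γ_1 + (1−α_2)γ_2)| = r − γ_1. -/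
open Set

lemma key_slack (p c g : ℝ) (hpc : p ≤ c) (h : 0 < g → p < c) :
    ∃ t, 0 < t ∧ ∀ ε : ℝ, 0 ≤ ε → ε ≤ t → p + ε * g ≤ c := by
  rcases le_or_gt g 0 with hg | hg
  · exact ⟨1, one_pos, fun ε hε0 _ => by nlinarith⟩
  · refine ⟨(c - p) / g, div_pos (by linarith [h hg]) hg, fun ε hε0 hεt => ?_⟩
    have := (le_div_iff₀ hg).mp hεt
    linarith

lemma exists_better (α₁ α₂ c₁ c₂ c₃ c₄ a b d₁ d₂ : ℝ)
    (hmem : memOmega α₁ α₂ c₁ c₂ c₃ c₄ a b)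
    (h1 : 0 < -d₁ → -a < 0) (h2 : 0 < d₁ → a < c₁)
    (h3 : 0 < -d₂ → -b < 0) (h4 : 0 < d₂ → b < c₂)
    (h5 : 0 < α₁ * d₁ + α₂ * d₂ → α₁ * a + α₂ * b < c₃)
    (h6 : 0 < (1 - α₁) * d₁ + (1 - α₂) * d₂ → (1 - α₁) * a + (1 - α₂) * b < c₄) :
    ∃ ε, 0 < ε ∧ memOmega α₁ α₂ c₁ c₂ c₃ c₄ (a + ε * d₁) (b + ε * d₂) := by
  obtain ⟨m1, m2, m3, m4, m5, m6⟩ := hmem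
  obtain ⟨t1, ht1, H1⟩ := key_slack (-a) 0 (-d₁) (by linarith) h1
  obtain ⟨t2, ht2, H2⟩ := key_slack a c₁ d₁ m2 h2
  obtain ⟨t3, ht3, H3⟩ := key_slack (-b) 0 (-d₂) (by linarith) h3
  obtain ⟨t4, ht4, H4⟩ := key_slack b c₂ d₂ m4 h4
  obtain ⟨t5, ht5, H5⟩ := key_slack (α₁ * a + α₂ * b) c₃ (α₁ * d₁ + α₂ * d₂) m5 h5
  obtain ⟨t6, ht6, H6⟩ := key_slack ((1 - α₁) * a + (1 - α₂) * b) c₄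
    ((1 - α₁) * d₁ + (1 - α₂) * d₂) m6 h6
  set ε := min t1 (min t2 (min t3 (min t4 (min t5 t6)))) with hε
  have hε0 : 0 < ε := by positivity
  have e1 : ε ≤ t1 := min_le_left _ _
  have e2 : ε ≤ t2 := le_trans (min_le_right _ _) (min_le_left _ _)
  have e3 : ε ≤ t3 := le_trans (min_le_right _ _) (le_trans (min_le_right _ _) (min_le_left _ _))
  have e4 : ε ≤ t4 := le_trans (min_le_right _ _) (le_trans (min_le_right _ _)
    (le_trans (min_le_right _ _) (min_le_left _ _)))
  have e5 : ε ≤ t5 := le_trans (min_le_right _ _) (le_trans (min_le_right _ _)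
    (le_trans (min_le_right _ _) (le_trans (min_le_right _ _) (min_le_left _ _))))
  have e6 : ε ≤ t6 := le_trans (min_le_right _ _) (le_trans (min_le_right _ _)
    (le_trans (min_le_right _ _) (le_trans (min_le_right _ _) (min_le_right _ _))))
  have hε0' : (0:ℝ) ≤ ε := le_of_lt hε0
  refine ⟨ε, hε0, ?_, ?_, ?_, ?_, ?_, ?_⟩
  · have := H1 ε hε0' e1; nlinarith
  · have := H2 ε hε0' e2; linarith
  · have := H3 ε hε0' e3; nlinarith
  · have := H4 ε hε0' e4; linarith
  · have := H5 ε hε0' e5; nlinarith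
  · have := H6 ε hε0' e6; nlinarith

set_option maxHeartbeats 1000000 in
/-- Key estimate in Lemma 6.1 (second case): when a wave raises the maximal
incoming flux of the first road from `c₁` (saturated at the old maximizer) to
`r`, the total variation of the fluxes is conserved across the interaction. -/
theorem stmt11 (α₁ α₂ : ℝ) (hα₁ : α₁ ∈ Ioo (0 : ℝ) 1) (hα₂ : α₂ ∈ Ioo (0 : ℝ) 1)
    (hne : α₁ ≠ α₂) (c₁ c₂ c₃ c₄ : ℝ)
    (hc₁ : 0 ≤ c₁) (hc₂ : 0 ≤ c₂) (hc₃ : 0 ≤ c₃) (hc₄ : 0 ≤ c₄)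
    (γ₁ γ₂ : ℝ)
    (hmem : memOmega α₁ α₂ c₁ c₂ c₃ c₄ γ₁ γ₂)
    (hmax : ∀ δ₁ δ₂, memOmega α₁ α₂ c₁ c₂ c₃ c₄ δ₁ δ₂ → δ₁ + δ₂ ≤ γ₁ + γ₂)
    (hsat : γ₁ = c₁)
    (r : ℝ) (hr : c₁ < r)
    (γh₁ γh₂ : ℝ)
    (hmem' : memOmega α₁ α₂ r c₂ c₃ c₄ γh₁ γh₂)
    (hmax' : ∀ δ₁ δ₂, memOmega α₁ α₂ r c₂ c₃ c₄ δ₁ δ₂ → δ₁ + δ₂ ≤ γh₁ + γh₂) :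
    γ₁ ≤ γh₁ ∧ γh₁ ≤ r ∧ γh₂ ≤ γ₂ ∧
    α₁ * γ₁ + α₂ * γ₂ ≤ α₁ * γh₁ + α₂ * γh₂ ∧
    (1 - α₁) * γ₁ + (1 - α₂) * γ₂ ≤ (1 - α₁) * γh₁ + (1 - α₂) * γh₂ ∧
    |γh₁ - r| + |γh₂ - γ₂| +
      |(α₁ * γh₁ + α₂ * γh₂) - (α₁ * γ₁ + α₂ * γ₂)| +
      |((1 - α₁) * γh₁ + (1 - α₂) * γh₂) - ((1 - α₁) * γ₁ + (1 - α₂) * γ₂)| =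
      r - γ₁ := by
  obtain ⟨ha1, ha2⟩ := hα₁
  obtain ⟨hb1, hb2⟩ := hα₂
  obtain ⟨g1, g2, g3, g4, g5, g6⟩ := hmem
  obtain ⟨k1, k2, k3, k4, k5, k6⟩ := hmem'
  have hS : γ₁ + γ₂ ≤ γh₁ + γh₂ :=
    hmax' γ₁ γ₂ ⟨g1, by linarith, g3, g4, g5, g6⟩
  -- Step A : γ₁ ≤ γh₁
  have stepA : γ₁ ≤ γh₁ := by
    by_contra hA
    push_neg at hA
    have hlt : γh₁ < c₁ := by rw [← hsat]; exact hA
    have hS2 : γh₁ + γh₂ ≤ γ₁ + γ₂ :=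
      hmax γh₁ γh₂ ⟨k1, le_of_lt hlt, k3, k4, k5, k6⟩
    have hEq : γh₁ + γh₂ = γ₁ + γ₂ := le_antisymm hS2 hS
    have hγh2 : γ₂ < γh₂ := by linarith
    have hw0 : 0 < γ₁ - γh₁ := by rw [hsat]; linarith
    set a := (γ₁ + γh₁) / 2 with hadef
    set b := (γ₂ + γh₂) / 2 with hbdef
    have hid3 : α₁ * a + α₂ * b
        = ((α₁ * γ₁ + α₂ * γ₂) + (α₁ * γh₁ + α₂ * γh₂)) / 2 := by
      simp only [hadef, hbdef]; ring
    have hid4 : (1 - α₁) * a + (1 - α₂) * b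
        = (((1-α₁) * γ₁ + (1-α₂) * γ₂) + ((1-α₁) * γh₁ + (1-α₂) * γh₂)) / 2 := by
      simp only [hadef, hbdef]; ring
    have hmemm : memOmega α₁ α₂ c₁ c₂ c₃ c₄ a b := by
      refine ⟨by simp only [hadef]; linarith, by simp only [hadef]; linarith,
        by simp only [hbdef]; linarith, by simp only [hbdef]; linarith, ?_, ?_⟩
      · rw [hid3]; linarith
      · rw [hid4]; linarith
    have hne3 : ¬ (α₁ * γ₁ + α₂ * γ₂ = c₃ ∧ α₁ * γh₁ + α₂ * γh₂ = c₃) := by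
      rintro ⟨p, q⟩
      have heq : α₁ * (γ₁ - γh₁) = α₂ * (γ₁ - γh₁) := by
        linear_combination p - q + α₂ * hEq
      exact hne (mul_right_cancel₀ (ne_of_gt hw0) heq)
    have hne4 : ¬ ((1-α₁) * γ₁ + (1-α₂) * γ₂ = c₄ ∧ (1-α₁) * γh₁ + (1-α₂) * γh₂ = c₄) := by
      rintro ⟨p, q⟩
      have heq : (1-α₁) * (γ₁ - γh₁) = (1-α₂) * (γ₁ - γh₁) := by
        linear_combination p - q + (1-α₂) * hEq
      have := mul_right_cancel₀ (ne_of_gt hw0) heq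
      exact hne (by linarith)
    obtain ⟨ε, hε, hεmem⟩ := exists_better α₁ α₂ c₁ c₂ c₃ c₄ a b 1 1 hmemm
      (by intro h; norm_num at h) (by intro _; simp only [hadef]; linarith)
      (by intro h; norm_num at h) (by intro _; simp only [hbdef]; linarith)
      (by intro _
          rw [hid3]
          rcases lt_or_eq_of_le g5 with h | h
          · linarith
          · rcases lt_or_eq_of_le k5 with h' | h'
            · linarith
            · exact absurd ⟨h, h'⟩ hne3)
      (by intro _
          rw [hid4]
          rcases lt_or_eq_of_le g6 with h | h
          · linarith
          · rcases lt_or_eq_of_le k6 with h' | h'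
            · linarith
            · exact absurd ⟨h, h'⟩ hne4)
    have := hmax _ _ hεmem
    simp only [hadef, hbdef] at this
    linarith
  have hc₁le : c₁ ≤ γh₁ := hsat ▸ stepA
  -- Step B : γh₂ ≤ γ₂
  have stepB : γh₂ ≤ γ₂ := by
    have hmemold : memOmega α₁ α₂ c₁ c₂ c₃ c₄ c₁ γh₂ := by
      refine ⟨hc₁, le_refl _, k3, k4, ?_, ?_⟩
      · have := mul_le_mul_of_nonneg_left hc₁le ha1.le
        linarith
      · have := mul_le_mul_of_nonneg_left hc₁le (by linarith : (0:ℝ) ≤ 1 - α₁)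
        linarith
    have := hmax c₁ γh₂ hmemold
    linarith [hsat]
  have hu : 0 ≤ γh₁ - γ₁ := by linarith
  have hv : 0 ≤ γ₂ - γh₂ := by linarith
  have huv : γ₂ - γh₂ ≤ γh₁ - γ₁ := by linarith
  -- Step C : the first outgoing flux does not decrease
  have stepC : α₁ * γ₁ + α₂ * γ₂ ≤ α₁ * γh₁ + α₂ * γh₂ := by
    by_contra hC
    push_neg at hC
    have hslack3 : α₁ * γh₁ + α₂ * γh₂ < c₃ := lt_of_lt_of_le hC g5
    have hvpos : 0 < γ₂ - γh₂ := by
      rcases lt_or_eq_of_le hv with h | h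
      · exact h
      · exfalso
        have hveq : γ₂ = γh₂ := by linarith
        rw [hveq] at hC
        have := mul_le_mul_of_nonneg_left stepA ha1.le
        linarith
    have hupos : 0 < γh₁ - γ₁ := lt_of_lt_of_le hvpos huv
    have hαlt : α₁ < α₂ := by
      by_contra h
      push_neg at h
      have h1 := mul_le_mul_of_nonneg_right h hu
      have h2 := mul_le_mul_of_nonneg_left huv hb1.le
      linarith
    have hγh₂lt : γh₂ < c₂ := by linarith
    have hγh₁pos : 0 < γh₁ := by linarith
    rcases lt_or_eq_of_le k6 with hslack4 | hbind4
    · obtain ⟨ε, hε, hεmem⟩ := exists_better α₁ α₂ r c₂ c₃ c₄ γh₁ γh₂ 0 1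
        ⟨k1, k2, k3, k4, k5, k6⟩
        (by intro h; norm_num at h) (by intro h; norm_num at h)
        (by intro h; norm_num at h) (by intro _; exact hγh₂lt)
        (by intro _; exact hslack3) (by intro _; exact hslack4)
      have := hmax' _ _ hεmem
      linarith
    · obtain ⟨ε, hε, hεmem⟩ := exists_better α₁ α₂ r c₂ c₃ c₄ γh₁ γh₂ (-(1-α₂)) (1-α₁)
        ⟨k1, k2, k3, k4, k5, k6⟩
        (by intro _; linarith) (by intro h; linarith)
        (by intro h; linarith) (by intro _; exact hγh₂lt)
        (by intro _; exact hslack3)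
        (by intro h; exfalso; linarith)
      have := hmax' _ _ hεmem
      nlinarith [mul_pos hε (sub_pos.mpr hαlt)]
  -- Step D : the second outgoing flux does not decrease
  have stepD : (1-α₁) * γ₁ + (1-α₂) * γ₂ ≤ (1-α₁) * γh₁ + (1-α₂) * γh₂ := by
    by_contra hD
    push_neg at hD
    have hslack4 : (1-α₁) * γh₁ + (1-α₂) * γh₂ < c₄ := lt_of_lt_of_le hD g6
    have hvpos : 0 < γ₂ - γh₂ := by
      rcases lt_or_eq_of_le hv with h | h
      · exact h
      · exfalso
        have hveq : γ₂ = γh₂ := by linarith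
        rw [hveq] at hD
        have := mul_le_mul_of_nonneg_left stepA (by linarith : (0:ℝ) ≤ 1 - α₁)
        linarith
    have hupos : 0 < γh₁ - γ₁ := lt_of_lt_of_le hvpos huv
    have hαlt : α₂ < α₁ := by
      by_contra h
      push_neg at h
      have h1 := mul_le_mul_of_nonneg_right (by linarith : 1 - α₂ ≤ 1 - α₁) hu
      have h2 := mul_le_mul_of_nonneg_left huv (by linarith : (0:ℝ) ≤ 1 - α₂)
      linarith
    have hγh₂lt : γh₂ < c₂ := by linarith
    have hγh₁pos : 0 < γh₁ := by linarith
    rcases lt_or_eq_of_le k5 with hslack3 | hbind3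
    · obtain ⟨ε, hε, hεmem⟩ := exists_better α₁ α₂ r c₂ c₃ c₄ γh₁ γh₂ 0 1
        ⟨k1, k2, k3, k4, k5, k6⟩
        (by intro h; norm_num at h) (by intro h; norm_num at h)
        (by intro h; norm_num at h) (by intro _; exact hγh₂lt)
        (by intro _; exact hslack3) (by intro _; exact hslack4)
      have := hmax' _ _ hεmem
      linarith
    · obtain ⟨ε, hε, hεmem⟩ := exists_better α₁ α₂ r c₂ c₃ c₄ γh₁ γh₂ (-α₂) α₁
        ⟨k1, k2, k3, k4, k5, k6⟩
        (by intro _; linarith) (by intro h; linarith)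
        (by intro h; linarith) (by intro _; exact hγh₂lt)
        (by intro h; exfalso; linarith)
        (by intro _; exact hslack4)
      have := hmax' _ _ hεmem
      nlinarith [mul_pos hε (sub_pos.mpr hαlt)]
  refine ⟨stepA, k2, stepB, stepC, stepD, ?_⟩
  rw [abs_of_nonpos (by linarith), abs_of_nonpos (by linarith),
    abs_of_nonneg (by linarith), abs_of_nonneg (by linarith)]
  ring
end

section
/- Let A be the 3 × 3 matrix with rows (1/2, 1/2, 1/3), (1/3, 1/2, 1/2) and (1/6, 0, 1/6). Then the point (1, 1/3, 1) is the unique maximizer of E(γ) = γ_1 + γ_2 + γ_3 over Ω = { γ ∈ [0,1]³ : (Aγ)_j ≤ 1 for j = 1,2,3 }, and the maximal value is 7/3; moreover A·(1,1/3,1)ᵀ = (1, 1, 1/3). -/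
open Set

/-- The equilibrium configuration at the 3-in/3-out junction of Appendix A:
`(1, 1/3, 1)` is the unique maximizer of `E(γ) = γ₁ + γ₂ + γ₃` over
`Ω = {γ ∈ [0,1]³ : (Aγ)_j ≤ 1}`, with maximal value `7/3` and
`A·(1,1/3,1)ᵀ = (1, 1, 1/3)`. -/
theorem stmt12 (Ω : Set (ℝ × ℝ × ℝ))
    (hΩ : Ω = {p | p.1 ∈ Icc (0 : ℝ) 1 ∧ p.2.1 ∈ Icc (0 : ℝ) 1 ∧
      p.2.2 ∈ Icc (0 : ℝ) 1 ∧
      (1/2) * p.1 + (1/2) * p.2.1 + (1/3) * p.2.2 ≤ 1 ∧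
      (1/3) * p.1 + (1/2) * p.2.1 + (1/2) * p.2.2 ≤ 1 ∧
      (1/6) * p.1 + 0 * p.2.1 + (1/6) * p.2.2 ≤ 1}) :
    ((1, 1/3, 1) : ℝ × ℝ × ℝ) ∈ Ω ∧
    (∀ q ∈ Ω, q.1 + q.2.1 + q.2.2 ≤ (1 : ℝ) + 1/3 + 1) ∧
    (∀ q ∈ Ω, (∀ q' ∈ Ω, q'.1 + q'.2.1 + q'.2.2 ≤ q.1 + q.2.1 + q.2.2) →
      q = ((1, 1/3, 1) : ℝ × ℝ × ℝ)) ∧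
    ((1 : ℝ) + 1/3 + 1 = 7/3) ∧
    ((1/2) * (1 : ℝ) + (1/2) * (1/3) + (1/3) * 1 = 1) ∧
    ((1/3) * (1 : ℝ) + (1/2) * (1/3) + (1/2) * 1 = 1) ∧
    ((1/6) * (1 : ℝ) + 0 * (1/3) + (1/6) * 1 = 1/3) := by
  subst hΩ
  have hmem : ((1, 1/3, 1) : ℝ × ℝ × ℝ) ∈ {p : ℝ × ℝ × ℝ | p.1 ∈ Icc (0 : ℝ) 1 ∧ p.2.1 ∈ Icc (0 : ℝ) 1 ∧
      p.2.2 ∈ Icc (0 : ℝ) 1 ∧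
      (1/2) * p.1 + (1/2) * p.2.1 + (1/3) * p.2.2 ≤ 1 ∧
      (1/3) * p.1 + (1/2) * p.2.1 + (1/2) * p.2.2 ≤ 1 ∧
      (1/6) * p.1 + 0 * p.2.1 + (1/6) * p.2.2 ≤ 1} := by
    refine ⟨⟨by norm_num, by norm_num⟩, ⟨by norm_num, by norm_num⟩, ⟨by norm_num, by norm_num⟩, by norm_num, by norm_num, by norm_num⟩
  refine ⟨hmem, ?_, ?_, by norm_num, by norm_num, by norm_num, by norm_num⟩
  · rintro ⟨x, y, z⟩ ⟨⟨hx0, hx1⟩, ⟨hy0, hy1⟩, ⟨hz0, hz1⟩, h1, h2, h3⟩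
    dsimp only at *
    linarith
  · rintro ⟨x, y, z⟩ hq hmax
    obtain ⟨⟨hx0, hx1⟩, ⟨hy0, hy1⟩, ⟨hz0, hz1⟩, h1, h2, h3⟩ := hq
    have h := hmax _ hmem
    dsimp only at *
    have hx : x = 1 := by linarith
    have hz : z = 1 := by linarith
    have hy : y = 1/3 := by linarith
    simp [hx, hy, hz]
end

section
/- Let 0 < α_2 < α_1 < 1/2, M > 0 and α_2 M/(1−α_1) ≤ r ≤ M. Then the unique maximizer of E(γ_1,γ_2) = γ_1 + γ_2 over Ω_r = { (γ_1,γ_2) ∈ ℝ² : 0 ≤ γ_1 ≤ r, 0 ≤ γ_2 ≤ M, α_1γ_1 + α_2γ_2 ≤ α_1 M/(1−α_2), (1−α_1)γ_1 + (1−α_2)γ_2 ≤ M } is (γ̂_1, γ̂_2) = ( r, (M − (1−α_1) r)/(1−α_2) ); consequently α_1 γ̂_1 + α_2 γ̂_2 = ((α_1 − α_2) r + α_2 M)/(1−α_2) and (1−α_1) γ̂_1 + (1−α_2) γ̂_2 = M. In particular, for r = M the maximizer is (M, α_1 M/(1−α_2)), recovering the equilibrium configuration. -/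
/-!
Multiplying the objective by `1 - α₂`, the flux constraint on the fourth road gives
`(1 - α₂)(γ₁ + γ₂) ≤ M + (α₁ - α₂) γ₁ ≤ M + (α₁ - α₂) r`, since `α₂ < α₁` rewards a large `γ₁`.
Both inequalities are equalities exactly when `γ₁ = r` and the fourth road is saturated, which
pins down the maximizer; the lower bound on `r` is what keeps its second component at most `M`.
-/

section WeightedBudget

variable {c₁ c₂ M r x y : ℝ}

theorem add_le_of_mul_add_mul_le (hc : c₁ ≤ c₂) (hc₂ : 0 < c₂) (hx : x ≤ r)
    (h : c₁ * x + c₂ * y ≤ M) : x + y ≤ r + (M - c₁ * r) / c₂ := by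
  rw [← sub_le_iff_le_add', le_div_iff₀ hc₂]
  linarith [mul_le_mul_of_nonneg_left hx (sub_nonneg.mpr hc)]

theorem eq_of_add_eq_of_mul_add_mul_le (hc : c₁ < c₂) (hc₂ : 0 < c₂) (hx : x ≤ r)
    (h : c₁ * x + c₂ * y ≤ M) (heq : x + y = r + (M - c₁ * r) / c₂) :
    x = r ∧ y = (M - c₁ * r) / c₂ := by
  have hy : c₂ * y = M - c₁ * r - c₂ * (x - r) := by
    rw [eq_sub_of_add_eq' heq, mul_sub, mul_add, mul_div_cancel₀ _ hc₂.ne']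
    ring
  have hslack : (c₂ - c₁) * (r - x) ≤ 0 := by linarith
  have hxr : x = r :=
    le_antisymm hx (sub_nonpos.mp (nonpos_of_mul_nonpos_right hslack (sub_pos.mpr hc)))
  subst hxr
  exact ⟨rfl, by linarith⟩

end WeightedBudget

/-- The region `Ω_r` of admissible incoming fluxes `(γ₁, γ₂)`. -/
def admissibleFluxes (α₁ α₂ M r : ℝ) : Set (ℝ × ℝ) :=
  {p | 0 ≤ p.1 ∧ p.1 ≤ r ∧ 0 ≤ p.2 ∧ p.2 ≤ M ∧
    α₁ * p.1 + α₂ * p.2 ≤ α₁ * M / (1 - α₂) ∧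
    (1 - α₁) * p.1 + (1 - α₂) * p.2 ≤ M}

noncomputable def optimalFluxes (α₁ α₂ M r : ℝ) : ℝ × ℝ :=
  (r, (M - (1 - α₁) * r) / (1 - α₂))

section Junction

variable {α₁ α₂ M r : ℝ}

theorem optimalFluxes_third_road (hα₂ : α₂ ≠ 1) :
    α₁ * (optimalFluxes α₁ α₂ M r).1 + α₂ * (optimalFluxes α₁ α₂ M r).2 =
      ((α₁ - α₂) * r + α₂ * M) / (1 - α₂) := by
  have : 1 - α₂ ≠ 0 := sub_ne_zero.mpr hα₂.symm
  simp only [optimalFluxes]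
  field_simp
  ring

theorem optimalFluxes_fourth_road (hα₂ : α₂ ≠ 1) :
    (1 - α₁) * (optimalFluxes α₁ α₂ M r).1 + (1 - α₂) * (optimalFluxes α₁ α₂ M r).2 = M := by
  rw [optimalFluxes, mul_div_cancel₀ _ (sub_ne_zero.mpr hα₂.symm)]
  ring

theorem optimalFluxes_mem_admissibleFluxes (h₂ : 0 ≤ α₂) (h₂₁ : α₂ ≤ α₁) (h₁ : α₁ < 1)
    (hM : 0 ≤ M) (hr₁ : α₂ * M / (1 - α₁) ≤ r) (hr₂ : r ≤ M) :
    optimalFluxes α₁ α₂ M r ∈ admissibleFluxes α₁ α₂ M r := by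
  have hα₁ : 0 < 1 - α₁ := by linarith
  have hα₂ : 0 < 1 - α₂ := by linarith
  have hr : 0 ≤ r := (div_nonneg (mul_nonneg h₂ hM) hα₁.le).trans hr₁
  have hr₁' : α₂ * M ≤ (1 - α₁) * r := by rwa [div_le_iff₀' hα₁] at hr₁
  refine ⟨hr, le_rfl, div_nonneg (by linarith [mul_nonneg (h₂.trans h₂₁) hr]) hα₂.le, ?_, ?_, ?_⟩
  · rw [optimalFluxes, div_le_iff₀ hα₂]
    linarith
  · rw [optimalFluxes_third_road (by linarith)]
    gcongr
    linarith [mul_le_mul_of_nonneg_left hr₂ (sub_nonneg.mpr h₂₁)]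
  · exact (optimalFluxes_fourth_road (by linarith)).le

theorem add_le_of_mem_admissibleFluxes (h₂₁ : α₂ ≤ α₁) (h₁ : α₁ < 1) {p : ℝ × ℝ}
    (hp : p ∈ admissibleFluxes α₁ α₂ M r) :
    p.1 + p.2 ≤ (optimalFluxes α₁ α₂ M r).1 + (optimalFluxes α₁ α₂ M r).2 :=
  add_le_of_mul_add_mul_le (by linarith) (by linarith) hp.2.1 hp.2.2.2.2.2

theorem eq_optimalFluxes_of_mem_admissibleFluxes (h₂₁ : α₂ < α₁) (h₁ : α₁ < 1) {p : ℝ × ℝ}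
    (hp : p ∈ admissibleFluxes α₁ α₂ M r)
    (heq : p.1 + p.2 = (optimalFluxes α₁ α₂ M r).1 + (optimalFluxes α₁ α₂ M r).2) :
    p = optimalFluxes α₁ α₂ M r :=
  let ⟨hx, hy⟩ :=
    eq_of_add_eq_of_mul_add_mul_le (by linarith) (by linarith) hp.2.1 hp.2.2.2.2.2 heq
  Prod.ext hx hy

end Junction

/-- The flux maximization problem of Appendix B: for `0 < α₂ < α₁ < 1/2`,
`M > 0` and `α₂M/(1−α₁) ≤ r ≤ M`, the unique maximizer of `E(γ₁,γ₂)=γ₁+γ₂`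
over `Ω_r` is `(r, (M − (1−α₁)r)/(1−α₂))`; the outgoing fluxes are
`((α₁−α₂)r + α₂M)/(1−α₂)` and `M`, and for `r = M` one recovers the
equilibrium configuration `(M, α₁M/(1−α₂))`. -/
theorem stmt14 (α₁ α₂ M r : ℝ)
    (h₂ : 0 < α₂) (h₂₁ : α₂ < α₁) (h₁ : α₁ < 1/2) (hM : 0 < M)
    (hr₁ : α₂ * M / (1 - α₁) ≤ r) (hr₂ : r ≤ M)
    (Ω : Set (ℝ × ℝ))
    (hΩ : Ω = {p | 0 ≤ p.1 ∧ p.1 ≤ r ∧ 0 ≤ p.2 ∧ p.2 ≤ M ∧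
      α₁ * p.1 + α₂ * p.2 ≤ α₁ * M / (1 - α₂) ∧
      (1 - α₁) * p.1 + (1 - α₂) * p.2 ≤ M}) :
    ((r, (M - (1 - α₁) * r) / (1 - α₂)) : ℝ × ℝ) ∈ Ω ∧
    (∀ q ∈ Ω, q.1 + q.2 ≤ r + (M - (1 - α₁) * r) / (1 - α₂)) ∧
    (∀ q ∈ Ω, (∀ q' ∈ Ω, q'.1 + q'.2 ≤ q.1 + q.2) →
      q = ((r, (M - (1 - α₁) * r) / (1 - α₂)) : ℝ × ℝ)) ∧
    (α₁ * r + α₂ * ((M - (1 - α₁) * r) / (1 - α₂)) =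
      ((α₁ - α₂) * r + α₂ * M) / (1 - α₂)) ∧
    ((1 - α₁) * r + (1 - α₂) * ((M - (1 - α₁) * r) / (1 - α₂)) = M) ∧
    (r = M → (M - (1 - α₁) * r) / (1 - α₂) = α₁ * M / (1 - α₂)) := by
  change Ω = admissibleFluxes α₁ α₂ M r at hΩ
  subst hΩ
  have h₁' : α₁ < 1 := by linarith
  have hα₂ : α₂ ≠ 1 := by linarith
  have hmem := optimalFluxes_mem_admissibleFluxes h₂.le h₂₁.le h₁' hM.le hr₁ hr₂
  refine ⟨hmem, fun q hq => add_le_of_mem_admissibleFluxes h₂₁.le h₁' hq,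
    fun q hq hmax => eq_optimalFluxes_of_mem_admissibleFluxes h₂₁ h₁' hq
      (le_antisymm (add_le_of_mem_admissibleFluxes h₂₁.le h₁' hq) (hmax _ hmem)),
    optimalFluxes_third_road hα₂, optimalFluxes_fourth_road hα₂, ?_⟩
  rintro rfl
  ring
end

section
/- Let f, σ, τ be as in the context, let 0 < α_2 < α_1 < 1/2, set M = f(σ), and let ρ_{3,0} ∈ (σ, 1) satisfy f(ρ_{3,0}) = α_1 M/(1−α_2). For r with α_2 M/(1−α_1) ≤ r < M, set γ̂_3 = ((α_1 − α_2) r + α_2 M)/(1−α_2) and let ρ̂_3 be the unique point of [0, σ] with f(ρ̂_3) = γ̂_3. Then γ̂_3 < f(ρ_{3,0}), ρ̂_3 < τ(ρ_{3,0}) < ρ_{3,0}, and hence |ρ_{3,0} − ρ̂_3| > ρ_{3,0} − τ(ρ_{3,0}) > 0, a positive lower bound independent of r. In particular, as r → M the jump |ρ_{3,0} − ρ̂_3| stays bounded away from zero, while any ρ_1 ∈ [0,σ] with f(ρ_1) = r satisfies σ − ρ_1 → 0. -/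
/-!
A strictly concave `f` is strictly increasing up to its peak `σ` and strictly decreasing after it,
so `τ ρ₃₀` is the preimage of the level `f ρ₃₀` on the increasing branch, and `ρ̂₃`, whose level
`γ̂₃` is strictly lower (because `r < M`), lies strictly to its left. The lower bound
`ρ₃₀ - τ ρ₃₀` does not involve `r`. Conversely, strict monotonicity on `[0, σ]` forces the
preimage of levels close to `f σ` close to `σ`.
-/

open Set

namespace StrictConcaveOn

variable {f : ℝ → ℝ} {s : Set ℝ} {σ x y : ℝ}

theorem lt_of_isMaxOn_s15 (hf : StrictConcaveOn ℝ s f) (hmax : IsMaxOn f s σ) (hσ : σ ∈ s)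
    (hx : x ∈ s) (hxσ : x ≠ σ) : f x < f σ := by
  refine (isMaxOn_iff.mp hmax x hx).lt_of_ne fun hfx => hxσ ?_
  exact hf.eq_of_isMaxOn (isMaxOn_iff.mpr fun y hy => hfx ▸ isMaxOn_iff.mp hmax y hy) hmax hx hσ

theorem strictMonoOn_of_isMaxOn_s15 (hf : StrictConcaveOn ℝ s f) (hmax : IsMaxOn f s σ)
    (hσ : σ ∈ s) : StrictMonoOn f (s ∩ Iic σ) := by
  intro x ⟨hx, _⟩ y ⟨hy, (hyσ : y ≤ σ)⟩ hxy
  rcases hyσ.lt_or_eq with hyσ | rfl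
  · have hmin := hf.lt_on_openSegment hx hσ (hxy.trans hyσ).ne
      (by rw [openSegment_eq_Ioo (hxy.trans hyσ)]; exact ⟨hxy, hyσ⟩)
    rwa [min_eq_left (isMaxOn_iff.mp hmax x hx)] at hmin
  · exact hf.lt_of_isMaxOn_s15 hmax hy hx hxy.ne

theorem strictAntiOn_of_isMaxOn_s15 (hf : StrictConcaveOn ℝ s f) (hmax : IsMaxOn f s σ)
    (hσ : σ ∈ s) : StrictAntiOn f (s ∩ Ici σ) := by
  intro x ⟨hx, (hσx : σ ≤ x)⟩ y ⟨hy, _⟩ hxy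
  rcases hσx.lt_or_eq with hσx | rfl
  · have hmin := hf.lt_on_openSegment hσ hy (hσx.trans hxy).ne
      (by rw [openSegment_eq_Ioo (hσx.trans hxy)]; exact ⟨hσx, hxy⟩)
    rwa [min_eq_right (isMaxOn_iff.mp hmax y hy)] at hmin
  · exact hf.lt_of_isMaxOn_s15 hmax hx hy hxy.ne'

theorem lt_of_map_eq_of_isMaxOn (hf : StrictConcaveOn ℝ s f) (hmax : IsMaxOn f s σ)
    (hσ : σ ∈ s) (hx : x ∈ s) (hσx : σ < x) (hy : y ∈ s) (hyx : y ≠ x) (hfyx : f y = f x) :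
    y < σ :=
  not_le.mp fun hσy =>
    hyx ((hf.strictAntiOn_of_isMaxOn_s15 hmax hσ).injOn ⟨hy, hσy⟩ ⟨hx, hσx.le⟩ hfyx)

end StrictConcaveOn

theorem StrictMonoOn.exists_sub_lt_of_lt_map {f : ℝ → ℝ} {a b ε : ℝ}
    (hf : StrictMonoOn f (Icc a b)) (hab : a ≤ b) (hε : 0 < ε) :
    ∃ δ > 0, ∀ x ∈ Icc a b, f b - δ < f x → b - x < ε := by
  by_cases hεab : b - a < ε
  · exact ⟨1, one_pos, fun x hx _ => by linarith [hx.1]⟩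
  have hc : b - ε ∈ Icc a b := ⟨by linarith, by linarith⟩
  refine ⟨f b - f (b - ε), sub_pos.mpr (hf hc ⟨hab, le_rfl⟩ (by linarith)), fun x hx hfx => ?_⟩
  by_contra! hbx
  have := (hf.le_iff_le hx hc).mpr (by linarith)
  linarith

theorem stmt15_general (f : ℝ → ℝ) (σ : ℝ) (τ : ℝ → ℝ)
    (hf_conc : StrictConcaveOn ℝ (Icc 0 1) f)
    (hσ : σ ∈ Ioo (0 : ℝ) 1)
    (hσmax : ∀ x ∈ Icc (0 : ℝ) 1, f x ≤ f σ)
    (hτ : ∀ ρ ∈ Icc (0 : ℝ) 1, ρ ≠ σ →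
      τ ρ ∈ Icc (0 : ℝ) 1 ∧ τ ρ ≠ ρ ∧ f (τ ρ) = f ρ)
    (α₁ α₂ M : ℝ) (h₂₁ : α₂ < α₁) (h₁ : α₁ < 1/2)
    (hM : M = f σ)
    (ρ₃₀ : ℝ) (hρ₃₀ : ρ₃₀ ∈ Ioo σ 1) (hf₃₀ : f ρ₃₀ = α₁ * M / (1 - α₂))
    (r : ℝ) (hr₂ : r < M)
    (γh₃ : ℝ) (hγh₃ : γh₃ = ((α₁ - α₂) * r + α₂ * M) / (1 - α₂))
    (ρh₃ : ℝ) (hρh₃mem : ρh₃ ∈ Icc (0 : ℝ) σ) (hρh₃f : f ρh₃ = γh₃) :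
    γh₃ < f ρ₃₀ ∧ ρh₃ < τ ρ₃₀ ∧ τ ρ₃₀ < ρ₃₀ ∧
    0 < ρ₃₀ - τ ρ₃₀ ∧ ρ₃₀ - τ ρ₃₀ < |ρ₃₀ - ρh₃| ∧
    (∀ ε > (0 : ℝ), ∃ δ > (0 : ℝ), ∀ r' ρ₁ : ℝ,
      M - δ < r' → r' < M → ρ₁ ∈ Icc (0 : ℝ) σ → f ρ₁ = r' → σ - ρ₁ < ε) := by
  have hσI : σ ∈ Icc (0 : ℝ) 1 := Ioo_subset_Icc_self hσ
  have hmax : IsMaxOn f (Icc 0 1) σ := isMaxOn_iff.mpr hσmax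
  have hmono : StrictMonoOn f (Icc 0 σ) := (hf_conc.strictMonoOn_of_isMaxOn_s15 hmax hσI).mono
    fun x hx => ⟨⟨hx.1, hx.2.trans hσ.2.le⟩, hx.2⟩
  have hρ₃₀I : ρ₃₀ ∈ Icc (0 : ℝ) 1 := ⟨hσ.1.le.trans hρ₃₀.1.le, hρ₃₀.2.le⟩
  obtain ⟨hτI, hτne, hτf⟩ := hτ ρ₃₀ hρ₃₀I hρ₃₀.1.ne'
  have hτσ : τ ρ₃₀ < σ :=
    hf_conc.lt_of_map_eq_of_isMaxOn hmax hσI hρ₃₀I hρ₃₀.1 hτI hτne hτf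
  have hγ : γh₃ < f ρ₃₀ := by
    rw [hγh₃, hf₃₀]
    exact div_lt_div_of_pos_right (by nlinarith) (by linarith)
  have hρh₃τ : ρh₃ < τ ρ₃₀ :=
    (hmono.lt_iff_lt hρh₃mem ⟨hτI.1, hτσ.le⟩).mp (by rwa [hρh₃f, hτf])
  refine ⟨hγ, hρh₃τ, by linarith [hρ₃₀.1], by linarith [hρ₃₀.1], ?_, fun ε hε => ?_⟩
  · rw [abs_of_pos (by linarith [hρ₃₀.1])]
    linarith
  · obtain ⟨δ, hδ, hclose⟩ := hmono.exists_sub_lt_of_lt_map hσ.1.le hε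
    exact ⟨δ, hδ, fun r' ρ₁ hr' _ hρ₁ hfρ₁ => hclose ρ₁ hρ₁ (by rw [hfρ₁, ← hM]; exact hr')⟩

/-- Appendix B: the interaction of an arbitrarily small wave with a junction
can produce a wave of uniformly large strength in the densities. The new flux
`γ̂₃` on the third (outgoing) road stays below `f ρ₃₀`, so the corresponding
density jump `|ρ₃₀ − ρ̂₃|` is bounded below by `ρ₃₀ − τ(ρ₃₀) > 0`,
independently of `r`; while, as `r → M`, the incoming densities `ρ₁` with
`f ρ₁ = r` satisfy `σ − ρ₁ → 0`. -/
theorem stmt15 (f : ℝ → ℝ) (σ : ℝ) (τ : ℝ → ℝ)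
    (hf_cont : ContinuousOn f (Icc 0 1))
    (hf_conc : StrictConcaveOn ℝ (Icc 0 1) f)
    (hf0 : f 0 = 0) (hf1 : f 1 = 0)
    (hσ : σ ∈ Ioo (0 : ℝ) 1)
    (hσmax : ∀ x ∈ Icc (0 : ℝ) 1, f x ≤ f σ)
    (hτσ : τ σ = σ)
    (hτ : ∀ ρ ∈ Icc (0 : ℝ) 1, ρ ≠ σ →
      τ ρ ∈ Icc (0 : ℝ) 1 ∧ τ ρ ≠ ρ ∧ f (τ ρ) = f ρ)
    (α₁ α₂ M : ℝ) (h₂ : 0 < α₂) (h₂₁ : α₂ < α₁) (h₁ : α₁ < 1/2)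
    (hM : M = f σ)
    (ρ₃₀ : ℝ) (hρ₃₀ : ρ₃₀ ∈ Ioo σ 1) (hf₃₀ : f ρ₃₀ = α₁ * M / (1 - α₂))
    (r : ℝ) (hr₁ : α₂ * M / (1 - α₁) ≤ r) (hr₂ : r < M)
    (γh₃ : ℝ) (hγh₃ : γh₃ = ((α₁ - α₂) * r + α₂ * M) / (1 - α₂))
    (ρh₃ : ℝ) (hρh₃mem : ρh₃ ∈ Icc (0 : ℝ) σ) (hρh₃f : f ρh₃ = γh₃) :
    γh₃ < f ρ₃₀ ∧ ρh₃ < τ ρ₃₀ ∧ τ ρ₃₀ < ρ₃₀ ∧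
    0 < ρ₃₀ - τ ρ₃₀ ∧ ρ₃₀ - τ ρ₃₀ < |ρ₃₀ - ρh₃| ∧
    (∀ ε > (0 : ℝ), ∃ δ > (0 : ℝ), ∀ r' ρ₁ : ℝ,
      M - δ < r' → r' < M → ρ₁ ∈ Icc (0 : ℝ) σ → f ρ₁ = r' → σ - ρ₁ < ε) :=
  stmt15_general f σ τ hf_conc hσ hσmax hτ α₁ α₂ M h₂₁ h₁ hM ρ₃₀ hρ₃₀ hf₃₀ r hr₂ γh₃ hγh₃ ρh₃
    hρh₃mem hρh₃f
end

section
/- Let 0 < β_2 < β_1 < 1/2 and M > 0. (a) The unique maximizer of E(γ_1,γ_2) = γ_1 + γ_2 over Ω = { (γ_1,γ_2) ∈ [0,M]² : β_1γ_1 + β_2γ_2 ≤ M, (1−β_1)γ_1 + (1−β_2)γ_2 ≤ M } is (M, β_1 M/(1−β_2)). (b) The unique maximizer of E over the set with the coefficients swapped, Ω' = { (γ_1,γ_2) ∈ [0,M]² : β_2γ_1 + β_1γ_2 ≤ M, (1−β_2)γ_1 + (1−β_1)γ_2 ≤ M }, is (β_1 M/(1−β_2), M). Consequently the distance between the two maximizers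 in the ℓ¹ norm equals 2(M − β_1 M/(1−β_2)) ≥ 2M(1 − 2β_1)/(1−β_2) > 0, a quantity bounded away from 0 as β_1 → β_2. -/
open Set

/-!
With `c = β₁ M / (1 - β₂)` one has `(1 - β₂)(M + c) = M + (β₁ - β₂) M`. On the feasible set the
second constraint gives `(1 - β₂)(γ₁ + γ₂) ≤ M + (β₁ - β₂) γ₁ ≤ M + (β₁ - β₂) M`, so `M + c` bounds
the objective, and since `β₂ < β₁` equality forces `γ₁ = M`, after which the same constraint pins
`γ₂ = c`. Swapping the coefficients is the coordinate swap `(γ₁, γ₂) ↦ (γ₂, γ₁)` of the feasible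
set, which carries the maximizer `(M, c)` to `(c, M)`.
-/

/-- The admissible incoming fluxes `(γ₁, γ₂)` at a junction with distribution coefficients
`β₁, β₂` whose two outgoing roads have maximal flux `M`. -/
def junctionDomain (β₁ β₂ M : ℝ) : Set (ℝ × ℝ) :=
  {p | p.1 ∈ Icc 0 M ∧ p.2 ∈ Icc 0 M ∧
    β₁ * p.1 + β₂ * p.2 ≤ M ∧ (1 - β₁) * p.1 + (1 - β₂) * p.2 ≤ M}

section

variable {β₁ β₂ M : ℝ}

theorem mul_div_one_sub_le_of_add_lt_one (hβ₁ : 0 ≤ β₁) (hβ : β₁ + β₂ < 1) (hM : 0 ≤ M) :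
    β₁ * M / (1 - β₂) ≤ M := by
  rw [div_le_iff₀ (by linarith)]
  nlinarith

namespace junctionDomain

theorem swap_mem_iff {p : ℝ × ℝ} :
    p.swap ∈ junctionDomain β₁ β₂ M ↔ p ∈ junctionDomain β₂ β₁ M := by
  simp only [junctionDomain, mem_ofPred_eq, Prod.fst_swap, Prod.snd_swap, add_comm]
  tauto

theorem vertex_mem (hβ₁ : 0 ≤ β₁) (hβ : β₁ + β₂ < 1) (hM : 0 ≤ M) :
    (M, β₁ * M / (1 - β₂)) ∈ junctionDomain β₁ β₂ M := by
  have hcM := mul_div_one_sub_le_of_add_lt_one hβ₁ hβ hM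
  have hc : (1 - β₂) * (β₁ * M / (1 - β₂)) = β₁ * M := mul_div_cancel₀ _ (by linarith)
  -- for `c = β₁ M / (1 - β₂)`: `β₁ M + β₂ c = c ≤ M` and `(1 - β₁) M + (1 - β₂) c = M`
  exact ⟨⟨hM, le_rfl⟩, ⟨div_nonneg (mul_nonneg hβ₁ hM) (by linarith), hcM⟩, by linarith, by linarith⟩

theorem one_sub_mul_fst_add_snd_le (hβ : β₂ ≤ β₁) {q : ℝ × ℝ}
    (hq : q ∈ junctionDomain β₁ β₂ M) : (1 - β₂) * (q.1 + q.2) ≤ M + (β₁ - β₂) * M := by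
  obtain ⟨⟨-, hq₁⟩, -, -, h⟩ := hq
  nlinarith [mul_le_mul_of_nonneg_left hq₁ (sub_nonneg.2 hβ)]

theorem fst_add_snd_le (hβ : β₂ ≤ β₁) (hβ₂ : β₂ < 1) {q : ℝ × ℝ}
    (hq : q ∈ junctionDomain β₁ β₂ M) : q.1 + q.2 ≤ M + β₁ * M / (1 - β₂) := by
  have hb : 0 < 1 - β₂ := by linarith
  have hc : (1 - β₂) * (β₁ * M / (1 - β₂)) = β₁ * M := mul_div_cancel₀ _ hb.ne'
  have h := one_sub_mul_fst_add_snd_le hβ hq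
  exact le_of_mul_le_mul_left (by linarith) hb

theorem eq_vertex_of_le (hβ : β₂ < β₁) (hβ₂ : β₂ < 1) {q : ℝ × ℝ}
    (hq : q ∈ junctionDomain β₁ β₂ M) (hopt : M + β₁ * M / (1 - β₂) ≤ q.1 + q.2) :
    q = (M, β₁ * M / (1 - β₂)) := by
  have hb : 0 < 1 - β₂ := by linarith
  have hc : (1 - β₂) * (β₁ * M / (1 - β₂)) = β₁ * M := mul_div_cancel₀ _ hb.ne'
  have hscaled : M + (β₁ - β₂) * M ≤ (1 - β₂) * (q.1 + q.2) := by
    nlinarith [mul_le_mul_of_nonneg_left hopt hb.le]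
  obtain ⟨⟨-, hq₁⟩, -, -, h⟩ := hq
  have hq₁M : q.1 = M := by nlinarith
  have hq₂ : q.2 ≤ β₁ * M / (1 - β₂) := by
    rw [le_div_iff₀ hb]
    nlinarith
  exact Prod.ext hq₁M (by linarith)

end junctionDomain

end

/-- Section 8 (time dependent coefficients): swapping the distribution
coefficients `(β₁, β₂)` of the two incoming roads swaps the unique maximizer
from `(M, β₁M/(1−β₂))` to `(β₁M/(1−β₂), M)`; the ℓ¹ distance between the two
equilibria equals `2(M − β₁M/(1−β₂)) ≥ 2M(1−2β₁)/(1−β₂) > 0`, a quantity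
bounded away from `0` as `β₁ → β₂`. -/
theorem stmt16 (β₁ β₂ M : ℝ)
    (h₂ : 0 < β₂) (h₂₁ : β₂ < β₁) (h₁ : β₁ < 1/2) (hM : 0 < M)
    (Ω Ω' : Set (ℝ × ℝ))
    (hΩ : Ω = {p | p.1 ∈ Icc (0 : ℝ) M ∧ p.2 ∈ Icc (0 : ℝ) M ∧
      β₁ * p.1 + β₂ * p.2 ≤ M ∧ (1 - β₁) * p.1 + (1 - β₂) * p.2 ≤ M})
    (hΩ' : Ω' = {p | p.1 ∈ Icc (0 : ℝ) M ∧ p.2 ∈ Icc (0 : ℝ) M ∧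
      β₂ * p.1 + β₁ * p.2 ≤ M ∧ (1 - β₂) * p.1 + (1 - β₁) * p.2 ≤ M}) :
    ((M, β₁ * M / (1 - β₂)) : ℝ × ℝ) ∈ Ω ∧
    (∀ q ∈ Ω, q.1 + q.2 ≤ M + β₁ * M / (1 - β₂)) ∧
    (∀ q ∈ Ω, (∀ q' ∈ Ω, q'.1 + q'.2 ≤ q.1 + q.2) →
      q = ((M, β₁ * M / (1 - β₂)) : ℝ × ℝ)) ∧
    ((β₁ * M / (1 - β₂), M) : ℝ × ℝ) ∈ Ω' ∧
    (∀ q ∈ Ω', q.1 + q.2 ≤ β₁ * M / (1 - β₂) + M) ∧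
    (∀ q ∈ Ω', (∀ q' ∈ Ω', q'.1 + q'.2 ≤ q.1 + q.2) →
      q = ((β₁ * M / (1 - β₂), M) : ℝ × ℝ)) ∧
    (|M - β₁ * M / (1 - β₂)| + |β₁ * M / (1 - β₂) - M| =
      2 * (M - β₁ * M / (1 - β₂))) ∧
    2 * M * (1 - 2 * β₁) / (1 - β₂) ≤ 2 * (M - β₁ * M / (1 - β₂)) ∧
    0 < 2 * M * (1 - 2 * β₁) / (1 - β₂) := by
  obtain rfl : Ω = junctionDomain β₁ β₂ M := hΩ
  obtain rfl : Ω' = junctionDomain β₂ β₁ M := hΩ'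
  have hβ₂ : β₂ < 1 := by linarith
  have hcM : β₁ * M / (1 - β₂) ≤ M :=
    mul_div_one_sub_le_of_add_lt_one (by linarith) (by linarith) hM.le
  have hmem : (M, β₁ * M / (1 - β₂)) ∈ junctionDomain β₁ β₂ M :=
    junctionDomain.vertex_mem (by linarith) (by linarith) hM.le
  have hmem' : (β₁ * M / (1 - β₂), M) ∈ junctionDomain β₂ β₁ M :=
    junctionDomain.swap_mem_iff.1 hmem
  refine ⟨hmem, fun q hq => junctionDomain.fst_add_snd_le h₂₁.le hβ₂ hq,
    fun q hq hopt => junctionDomain.eq_vertex_of_le h₂₁ hβ₂ hq (hopt _ hmem), hmem',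
    fun q hq => ?_, fun q hq hopt => ?_, ?_, ?_, ?_⟩
  · have := junctionDomain.fst_add_snd_le h₂₁.le hβ₂ (junctionDomain.swap_mem_iff.2 hq)
    simp only [Prod.fst_swap, Prod.snd_swap] at this
    linarith
  · have hq' := junctionDomain.swap_mem_iff.2 hq
    have := junctionDomain.eq_vertex_of_le h₂₁ hβ₂ hq' (by simpa [add_comm] using hopt _ hmem')
    exact Prod.swap_eq_iff_eq_swap.1 this
  · rw [abs_sub_comm, abs_of_nonpos (by linarith)]
    ring
  · have hc : (1 - β₂) * (β₁ * M / (1 - β₂)) = β₁ * M := mul_div_cancel₀ _ (by linarith)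
    rw [div_le_iff₀ (by linarith)]
    nlinarith
  · exact div_pos (by nlinarith) (by linarith)
end

section
/- Let f : [0,1] → ℝ be continuous, strictly concave, with f(0) = f(1) = 0, let σ ∈ (0,1) be its maximum point, and assume f is continuously differentiable on [0,σ) and on (σ,1] with c ≤ |f'(x)| for all x ∈ [0,σ) ∪ (σ,1], for some constant c > 0. Let g : ℝ → [0,1] be a piecewise constant function with finitely many jump points, and let n be the number of jump points x of g at which sgn(g(x−) − σ) · sgn(g(x+) − σ) ≤ 0 (with sgn(0) = 0). Then Tot.Var.(g) ≤ (1/c) · Tot.Var.(f ∘ g) + n, where the total variation of a piecewise constant function is the sum of the absolute values of its jumps. -/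
open Set

lemma sign_dichotomy (f' : ℝ → ℝ) (c : ℝ) (hc : 0 < c) (s : Set ℝ)
    (hs : s.OrdConnected) (hcont : ContinuousOn f' s)
    (hbound : ∀ x ∈ s, c ≤ |f' x|) :
    (∀ x ∈ s, c ≤ f' x) ∨ (∀ x ∈ s, f' x ≤ -c) := by
  by_contra h
  push_neg at h
  obtain ⟨⟨x₂, hx₂, h2⟩, ⟨x₁, hx₁, h1⟩⟩ := h
  have b1 := hbound x₁ hx₁; have b2 := hbound x₂ hx₂
  have h1' : c ≤ f' x₁ := by rcases abs_cases (f' x₁) with ⟨e,_⟩|⟨e,_⟩ <;> linarith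
  have h2' : f' x₂ ≤ -c := by rcases abs_cases (f' x₂) with ⟨e,_⟩|⟨e,_⟩ <;> linarith
  have hsub : uIcc x₁ x₂ ⊆ s := hs.uIcc_subset hx₁ hx₂
  have h0 : (0:ℝ) ∈ uIcc (f' x₁) (f' x₂) := by
    rw [Set.mem_uIcc]; right; constructor <;> linarith
  obtain ⟨y, hym, hy0⟩ := intermediate_value_uIcc (hcont.mono hsub) h0
  have := hbound y (hsub hym)
  rw [hy0] at this; simp at this; linarith

lemma key_lemma (f f' : ℝ → ℝ) (c : ℝ) (hc : 0 < c) (s : Set ℝ) (hconv : Convex ℝ s)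
    (hf : ContinuousOn f s)
    (hder : ∀ x ∈ s, HasDerivWithinAt f (f' x) s x)
    (hcont : ContinuousOn f' s)
    (hbound : ∀ x ∈ s, c ≤ |f' x|)
    (a b : ℝ) (ha : a ∈ s) (hb : b ∈ s) : c * |b - a| ≤ |f b - f a| := by
  have hderiv : ∀ x ∈ interior s, HasDerivAt f (f' x) x := fun x hx =>
    (hder x (interior_subset hx)).hasDerivAt (mem_interior_iff_mem_nhds.1 hx)
  have hdiff : DifferentiableOn ℝ f (interior s) := fun x hx =>
    ((hderiv x hx).differentiableAt).differentiableWithinAt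
  have hdval : ∀ x ∈ interior s, f' x = deriv f x := fun x hx => ((hderiv x hx).deriv).symm
  have main : ∀ p ∈ s, ∀ q ∈ s, p ≤ q → c * |q - p| ≤ |f q - f p| := by
    intro p hp q hq hpq
    rcases sign_dichotomy f' c hc s hconv.ordConnected hcont hbound with pos | neg
    · have h := hconv.mul_sub_le_image_sub_of_le_deriv hf hdiff
        (fun y hy => (hdval y hy) ▸ pos y (interior_subset hy)) p hp q hq hpq
      have h1 : 0 ≤ c * (q - p) := mul_nonneg hc.le (by linarith)
      rw [abs_of_nonneg (by linarith : (0:ℝ) ≤ q - p)]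
      calc c * (q - p) ≤ f q - f p := h
        _ ≤ |f q - f p| := le_abs_self _
    · have h := hconv.image_sub_le_mul_sub_of_deriv_le hf hdiff
        (fun y hy => (hdval y hy) ▸ neg y (interior_subset hy)) p hp q hq hpq
      rw [abs_of_nonneg (by linarith : (0:ℝ) ≤ q - p)]
      calc c * (q - p) ≤ -(f q - f p) := by linarith
        _ ≤ |f q - f p| := neg_le_abs _
  rcases le_total a b with hab | hab
  · exact main a ha b hb hab
  · rw [abs_sub_comm (b) a, abs_sub_comm (f b) (f a)]
    exact main b hb a ha hab


/-- Estimate (7.1): for a flux satisfying hypothesis (F1) (continuous, strictly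
concave, `f 0 = f 1 = 0`, continuously differentiable away from the maximum
point `σ` with `c ≤ |f'|`), the total variation of a piecewise constant
function `g` with values in `[0,1]` is bounded by `(1/c)` times the total
variation of `f ∘ g` plus the number `n` of big jumps, i.e. the jumps crossing
(or touching) the value `σ`.  Here `g` is encoded by its strictly increasing
jump points `x : Fin N → ℝ` and values `v : Fin (N+1) → ℝ`, and the total
variation of a piecewise constant function is the sum of the absolute values
of its jumps. -/
theorem stmt17 (f f' : ℝ → ℝ) (σ c : ℝ) (hc : 0 < c)
    (hf_cont : ContinuousOn f (Icc 0 1))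
    (hf_conc : StrictConcaveOn ℝ (Icc 0 1) f)
    (hf0 : f 0 = 0) (hf1 : f 1 = 0)
    (hσ : σ ∈ Ioo (0 : ℝ) 1)
    (hσmax : ∀ x ∈ Icc (0 : ℝ) 1, f x ≤ f σ)
    (hder1 : ∀ x ∈ Ico (0 : ℝ) σ, HasDerivWithinAt f (f' x) (Ico 0 σ) x)
    (hder2 : ∀ x ∈ Ioc σ (1 : ℝ), HasDerivWithinAt f (f' x) (Ioc σ 1) x)
    (hcont1 : ContinuousOn f' (Ico 0 σ))
    (hcont2 : ContinuousOn f' (Ioc σ 1))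
    (hbound : ∀ x ∈ Ico (0 : ℝ) σ ∪ Ioc σ 1, c ≤ |f' x|)
    (N : ℕ) (x : Fin N → ℝ) (hx : StrictMono x)
    (v : Fin (N + 1) → ℝ) (hv : ∀ k, v k ∈ Icc (0 : ℝ) 1)
    (hjump : ∀ k : Fin N, v k.castSucc ≠ v k.succ)
    (g : ℝ → ℝ)
    (hg : ∀ (k : Fin (N + 1)) (y : ℝ),
      (∀ i : Fin N, x i ≤ y ↔ (i : ℕ) < (k : ℕ)) → g y = v k) :
    ∑ k : Fin N, |v k.succ - v k.castSucc| ≤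
      (1 / c) * ∑ k : Fin N, |f (v k.succ) - f (v k.castSucc)| +
        ({k : Fin N |
          Real.sign (v k.castSucc - σ) * Real.sign (v k.succ - σ) ≤ 0}.ncard : ℝ) := by
  classical
  obtain ⟨hσ0, hσ1⟩ := hσ
  set P : Fin N → Prop :=
    fun k => Real.sign (v k.castSucc - σ) * Real.sign (v k.succ - σ) ≤ 0 with hP
  -- quantitative bounds on the two branches
  have key1 : ∀ a b : ℝ, a ∈ Ico (0:ℝ) σ → b ∈ Ico (0:ℝ) σ →
      c * |b - a| ≤ |f b - f a| :=
    key_lemma f f' c hc _ (convex_Ico 0 σ)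
      (hf_cont.mono (Ico_subset_Icc_self.trans (Icc_subset_Icc le_rfl hσ1.le)))
      hder1 hcont1 (fun y hy => hbound y (Or.inl hy))
  have key2 : ∀ a b : ℝ, a ∈ Ioc σ (1:ℝ) → b ∈ Ioc σ (1:ℝ) →
      c * |b - a| ≤ |f b - f a| :=
    key_lemma f f' c hc _ (convex_Ioc σ 1)
      (hf_cont.mono (Ioc_subset_Icc_self.trans (Icc_subset_Icc hσ0.le le_rfl)))
      hder2 hcont2 (fun y hy => hbound y (Or.inr hy))
  -- pointwise estimate
  have pointwise : ∀ k : Fin N,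
      |v k.succ - v k.castSucc| ≤
        (1 / c) * |f (v k.succ) - f (v k.castSucc)| + (if P k then 1 else 0) := by
    intro k
    set a := v k.castSucc
    set b := v k.succ
    obtain ⟨ha0, ha1⟩ := hv k.castSucc
    obtain ⟨hb0, hb1⟩ := hv k.succ
    by_cases hPk : P k
    · rw [if_pos hPk]
      have h1 : |b - a| ≤ 1 := by rw [abs_le]; constructor <;> linarith
      have h2 : 0 ≤ (1 / c) * |f b - f a| :=
        mul_nonneg (by positivity) (abs_nonneg _)
      linarith
    · rw [if_neg hPk]
      have hPk : 0 < Real.sign (a - σ) * Real.sign (b - σ) := lt_of_not_ge hPk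
      have habs : c * |b - a| ≤ |f b - f a| := by
        have hside : (a < σ ∧ b < σ) ∨ (σ < a ∧ σ < b) := by
          rcases lt_trichotomy a σ with h | h | h
          · rcases lt_trichotomy b σ with h' | h' | h'
            · exact Or.inl ⟨h, h'⟩
            · exfalso
              rw [h', sub_self, Real.sign_zero, mul_zero] at hPk
              exact lt_irrefl 0 hPk
            · exfalso
              rw [Real.sign_of_neg (by linarith : a - σ < 0),
                Real.sign_of_pos (by linarith : 0 < b - σ)] at hPk
              linarith
          · exfalso
            rw [h, sub_self, Real.sign_zero, zero_mul] at hPk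
            exact lt_irrefl 0 hPk
          · rcases lt_trichotomy b σ with h' | h' | h'
            · exfalso
              rw [Real.sign_of_pos (by linarith : 0 < a - σ),
                Real.sign_of_neg (by linarith : b - σ < 0)] at hPk
              linarith
            · exfalso
              rw [h', sub_self, Real.sign_zero, mul_zero] at hPk
              exact lt_irrefl 0 hPk
            · exact Or.inr ⟨h, h'⟩
        rcases hside with ⟨h1, h2⟩ | ⟨h1, h2⟩
        · exact key1 a b ⟨ha0, h1⟩ ⟨hb0, h2⟩
        · exact key2 a b ⟨h1, ha1⟩ ⟨h2, hb1⟩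
      rw [add_zero, one_div, mul_comm, ← div_eq_mul_inv, le_div_iff₀ hc, mul_comm]
      exact habs
  calc ∑ k : Fin N, |v k.succ - v k.castSucc|
      ≤ ∑ k : Fin N, ((1 / c) * |f (v k.succ) - f (v k.castSucc)| +
          (if P k then 1 else 0)) := Finset.sum_le_sum fun k _ => pointwise k
    _ = (1 / c) * ∑ k : Fin N, |f (v k.succ) - f (v k.castSucc)| +
          ∑ k : Fin N, (if P k then (1:ℝ) else 0) := by
        rw [Finset.sum_add_distrib, Finset.mul_sum]
    _ = (1 / c) * ∑ k : Fin N, |f (v k.succ) - f (v k.castSucc)| +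
          ({k : Fin N | P k}.ncard : ℝ) := by
        congr 1
        rw [Finset.sum_boole]
        congr 1
        rw [← Set.ncard_coe_finset]
        congr 1
        ext k
        simp
end
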